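/- arXiv:2301.01159 — 6 statements merged into one kernel-verified Lean document; each statement's English description precedes it below -/
import Mathlib

section
/- Let θ = (θ₁, ..., θₙ) ∈ ℝⁿ be a vector such that for all k ∈ ℤⁿ, k·θ = 0 implies k = 0 (an irrational vector). Then the set θℝ + ℕⁿ = {xθ + m : x ∈ ℝ, m ∈ ℕⁿ} is dense in ℝⁿ. -/
open Submodule Module

/-- Recurrence near `0` of the line `x • θ` modulo `ℤⁿ`, with `x` arbitrarily large. -/
lemma kron_recur (n : ℕ) (θ : Fin n → ℝ) (ε M : ℝ) (hε : 0 < ε) :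
    ∃ x : ℝ, M ≤ x ∧ ∃ r : Fin n → ℤ, ∀ i, |x * θ i - r i| < ε := by
  classical
  set T : ℝ := max M 1 with hT
  have hT1 : (1:ℝ) ≤ T := le_max_right _ _
  have hTM : M ≤ T := le_max_left _ _
  obtain ⟨K, hK⟩ := exists_nat_gt (1/ε)
  have hK0 : 0 < (K:ℝ) := lt_of_le_of_lt (by positivity) hK
  -- pigeonhole map
  set F : ℕ → (Fin n → Fin K) := fun j i =>
    ⟨(⌊Int.fract ((j:ℝ) * T * θ i) * K⌋).toNat, by
      have hKr : (0:ℝ) < (K:ℝ) := lt_of_le_of_lt (by positivity) hK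
      have hKp : 0 < K := by exact_mod_cast hKr
      have h1 : Int.fract ((j:ℝ) * T * θ i) * K < K := by
        have := Int.fract_lt_one ((j:ℝ) * T * θ i)
        nlinarith [Int.fract_nonneg ((j:ℝ) * T * θ i)]
      have h2 : ⌊Int.fract ((j:ℝ) * T * θ i) * K⌋ < (K:ℤ) := by
        exact_mod_cast Int.floor_lt.2 (by exact_mod_cast h1)
      omega⟩ with hF
  have hcard : (Finset.univ : Finset (Fin n → Fin K)).card
      < (Finset.range (K^n + 1)).card := by
    simp [Fintype.card_fun]
  obtain ⟨j, -, j', -, hne, heq⟩ :=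
    Finset.exists_ne_map_eq_of_card_lt_of_maps_to hcard
      (fun j _ => Finset.mem_univ (F j))
  -- wlog j < j'
  wlog hlt : j < j' generalizing j j'
  · exact this j' j hne.symm heq.symm (by omega)
  refine ⟨((j':ℝ) - j) * T, ?_, fun i => ⌊(j':ℝ) * T * θ i⌋ - ⌊(j:ℝ) * T * θ i⌋, fun i => ?_⟩
  · have : (1:ℝ) ≤ (j':ℝ) - j := by
      have : (j:ℝ) + 1 ≤ j' := by exact_mod_cast hlt
      linarith
    nlinarith
  · have hfl : ⌊Int.fract ((j:ℝ) * T * θ i) * K⌋ = ⌊Int.fract ((j':ℝ) * T * θ i) * K⌋ := by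
      have := congrFun heq i
      have h0 : (0:ℤ) ≤ ⌊Int.fract ((j:ℝ) * T * θ i) * K⌋ :=
        Int.floor_nonneg.2 (mul_nonneg (Int.fract_nonneg _) (by positivity))
      have h0' : (0:ℤ) ≤ ⌊Int.fract ((j':ℝ) * T * θ i) * K⌋ :=
        Int.floor_nonneg.2 (mul_nonneg (Int.fract_nonneg _) (by positivity))
      have := congrArg Fin.val this
      simp only [hF] at this
      omega
    have habs : |Int.fract ((j:ℝ) * T * θ i) * K - Int.fract ((j':ℝ) * T * θ i) * K| < 1 :=
      Int.abs_sub_lt_one_of_floor_eq_floor hfl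
    have habs2 : |Int.fract ((j':ℝ) * T * θ i) - Int.fract ((j:ℝ) * T * θ i)| < 1/K := by
      rw [abs_sub_comm, ← sub_mul, abs_mul, abs_of_pos hK0] at habs
      rw [lt_div_iff₀ hK0]
      linarith
    have h1K : 1/(K:ℝ) < ε := by
      rw [div_lt_iff₀ hK0]
      rw [div_lt_iff₀ hε] at hK
      linarith
    have hexp : ((j':ℝ) - j) * T * θ i - ((⌊(j':ℝ) * T * θ i⌋ : ℤ) - (⌊(j:ℝ) * T * θ i⌋ : ℤ))
        = Int.fract ((j':ℝ) * T * θ i) - Int.fract ((j:ℝ) * T * θ i) := by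
      simp only [Int.fract]
      push_cast
      ring
    calc |((j':ℝ) - j) * T * θ i - ((⌊(j':ℝ) * T * θ i⌋ - ⌊(j:ℝ) * T * θ i⌋ : ℤ) : ℝ)|
        = |Int.fract ((j':ℝ) * T * θ i) - Int.fract ((j:ℝ) * T * θ i)| := by
          rw [← hexp]; push_cast; ring_nf
      _ < 1/K := habs2
      _ < ε := h1K

set_option maxHeartbeats 2000000 in
/-- **Kronecker's approximation theorem.** If `θ ∈ ℝⁿ` has positive entries and is an
irrational vector (`k·θ = 0` with `k ∈ ℤⁿ` implies `k = 0`), then the set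
`θℝ + ℕⁿ = {xθ + m : x ∈ ℝ, m ∈ ℕⁿ}` is dense in `ℝⁿ`. -/
theorem stmt0 (n : ℕ) (θ : Fin n → ℝ) (hpos : ∀ i, 0 < θ i)
    (hirr : ∀ k : Fin n → ℤ, (∑ i, (k i : ℝ) * θ i) = 0 → k = 0) :
    Dense {y : Fin n → ℝ | ∃ (x : ℝ) (m : Fin n → ℕ), y = fun i => x * θ i + (m i : ℝ)} := by
  classical
  set S : Set (Fin n → ℝ) :=
    {y : Fin n → ℝ | ∃ (x : ℝ) (m : Fin n → ℕ), y = fun i => x * θ i + (m i : ℝ)} with hSdef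
  -- basic membership facts
  have hS0 : (0 : Fin n → ℝ) ∈ S := ⟨0, 0, by funext i; simp⟩
  have hSadd : ∀ a ∈ S, ∀ b ∈ S, a + b ∈ S := by
    rintro a ⟨x, m, rfl⟩ b ⟨x', m', rfl⟩
    exact ⟨x + x', m + m', by funext i; push_cast; simp; ring⟩
  have hSnat : ∀ m : Fin n → ℕ, (fun i => (m i : ℝ)) ∈ S :=
    fun m => ⟨0, m, by funext i; simp⟩
  have hSline : ∀ x : ℝ, (fun i => x * θ i) ∈ S :=
    fun x => ⟨x, 0, by funext i; simp⟩
  set C : Set (Fin n → ℝ) := closure S with hCdef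
  have hCclosed : IsClosed C := isClosed_closure
  have hSC : S ⊆ C := subset_closure
  have hCadd : ∀ a ∈ C, ∀ b ∈ C, a + b ∈ C := by
    intro a ha b hb
    let M : AddSubmonoid (Fin n → ℝ) :=
      { carrier := S
        add_mem' := fun {x} {y} hx hy => hSadd _ hx _ hy
        zero_mem' := hS0 }
    exact M.topologicalClosure.add_mem ha hb
  have hCneg : ∀ a ∈ C, -a ∈ C := by
    intro a ha
    rw [hCdef, Metric.mem_closure_iff]
    intro ε hε
    obtain ⟨s, hsS, hs⟩ := Metric.mem_closure_iff.1 ha (ε/2) (half_pos hε)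
    obtain ⟨x₀, m, rfl⟩ := hsS
    set ε' : ℝ := min (ε/2) (1/2) with hε'
    have hε'pos : 0 < ε' := lt_min (half_pos hε) (by norm_num)
    set M₀ : ℝ := ∑ i, ((m i : ℝ) + 1) / θ i with hM₀
    obtain ⟨x, hxM, r, hr⟩ := kron_recur n θ ε' M₀ hε'pos
    have hxθ : ∀ i, (m i : ℝ) + 1 ≤ x * θ i := by
      intro i
      have h1 : ((m i : ℝ) + 1) / θ i ≤ M₀ := by
        refine Finset.single_le_sum (f := fun i => ((m i : ℝ) + 1) / θ i) ?_ (Finset.mem_univ i)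
        intro j _
        exact div_nonneg (by positivity) (hpos j).le
      have h2 : ((m i : ℝ) + 1) / θ i ≤ x := le_trans h1 hxM
      rw [div_le_iff₀ (hpos i)] at h2
      linarith
    have hrm : ∀ i, (m i : ℤ) ≤ r i := by
      intro i
      have h1 := (abs_lt.1 (hr i)).2
      have h2 : ε' ≤ 1/2 := min_le_right _ _
      have h3 : ((m i : ℤ) : ℝ) < ((r i : ℤ) : ℝ) := by
        push_cast
        linarith [hxθ i]
      exact_mod_cast h3.le
    set m' : Fin n → ℕ := fun i => (r i - m i).toNat with hm'
    have hm'eq : ∀ i, (m' i : ℝ) = (r i : ℝ) - (m i : ℝ) := by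
      intro i
      have h0 : (0:ℤ) ≤ r i - m i := by have := hrm i; omega
      have h1 := congrArg (Int.cast : ℤ → ℝ) (Int.toNat_of_nonneg h0)
      push_cast at h1
      simpa [hm'] using h1
    refine ⟨fun i => (-x₀ - x) * θ i + (m' i : ℝ), ⟨-x₀ - x, m', rfl⟩, ?_⟩
    have hd2 : dist (-(fun i => x₀ * θ i + (m i : ℝ)) : Fin n → ℝ)
        (fun i => (-x₀ - x) * θ i + (m' i : ℝ)) < ε/2 := by
      rw [dist_pi_lt_iff (half_pos hε)]
      intro i
      rw [Real.dist_eq]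
      have : (-(fun i => x₀ * θ i + (m i : ℝ)) : Fin n → ℝ) i = -(x₀ * θ i) - m i := by
        simp; ring
      rw [this, hm'eq i]
      have h1 := hr i
      have h2 : ε' ≤ ε/2 := min_le_left _ _
      have : -(x₀ * θ i) - (m i : ℝ) - ((-x₀ - x) * θ i + ((r i : ℝ) - m i))
          = x * θ i - r i := by ring
      rw [this]
      exact lt_of_lt_of_le h1 h2
    calc dist (-a) (fun i => (-x₀ - x) * θ i + (m' i : ℝ))
        ≤ dist (-a) (-(fun i => x₀ * θ i + (m i : ℝ)) : Fin n → ℝ)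
          + dist (-(fun i => x₀ * θ i + (m i : ℝ)) : Fin n → ℝ)
            (fun i => (-x₀ - x) * θ i + (m' i : ℝ)) := dist_triangle _ _ _
      _ < ε/2 + ε/2 := by
          refine add_lt_add ?_ hd2
          rw [dist_neg_neg]
          exact hs
      _ = ε := by ring
  set Cgrp : AddSubgroup (Fin n → ℝ) :=
    { carrier := C
      zero_mem' := hSC hS0
      add_mem' := fun ha hb => hCadd _ ha _ hb
      neg_mem' := fun ha => hCneg _ ha } with hCgrp
  -- the subspace of directions contained in C
  set W : Submodule ℝ (Fin n → ℝ) :=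
    { carrier := {v | ∀ t : ℝ, t • v ∈ C}
      zero_mem' := fun t => by simpa using hSC hS0
      add_mem' := fun {v} {w} hv hw t => by
        simpa [smul_add] using hCadd _ (hv t) _ (hw t)
      smul_mem' := fun c v hv t => by
        simpa [smul_smul] using hv (t * c) } with hW
  have hθW : θ ∈ W := by
    intro t
    have h : t • θ = fun i => t * θ i := by funext i; simp
    exact hSC (h ▸ hSline t)
  have hWC : ∀ v ∈ W, v ∈ C := fun v hv => by simpa using hv 1
  -- suffices to show W = ⊤
  rcases eq_or_ne W ⊤ with hWtop | hWne
  · rw [dense_iff_closure_eq]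
    rw [← hCdef]
    ext v
    simp only [Set.mem_univ, iff_true]
    exact hWC v (hWtop ▸ mem_top)
  -- otherwise, derive a contradiction
  exfalso
  obtain ⟨V, hcompl⟩ := Submodule.exists_isCompl W
  have hVne : V ≠ ⊥ := by
    intro h
    have := hcompl.sup_eq_top
    rw [h, sup_bot_eq] at this
    exact hWne this
  set pW : (Fin n → ℝ) →ₗ[ℝ] W := W.projectionOnto V hcompl with hpW
  set pV : (Fin n → ℝ) →ₗ[ℝ] V := V.projectionOnto W hcompl.symm with hpV
  have hsplit : ∀ x : Fin n → ℝ, (pW x : Fin n → ℝ) + (pV x : Fin n → ℝ) = x :=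
    fun x => Submodule.projection_add_projection_eq_self hcompl x
  have hPVC : ∀ a ∈ C, ((pV a : Fin n → ℝ)) ∈ C := by
    intro a ha
    have h1 : (pV a : Fin n → ℝ) = a - (pW a : Fin n → ℝ) :=
      eq_sub_of_add_eq' (hsplit a)
    rw [h1, sub_eq_add_neg]
    refine hCadd _ ha _ ?_
    have : -(pW a : Fin n → ℝ) = ((-(pW a) : W) : Fin n → ℝ) := by simp
    rw [this]
    exact hWC _ (Submodule.coe_mem _)
  -- the lattice Λ = C ∩ V inside V
  set Λ : Submodule ℤ V :=
    { carrier := {v : V | (v : Fin n → ℝ) ∈ C}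
      zero_mem' := by simpa using hSC hS0
      add_mem' := fun {v} {w} hv hw => by
        simpa using hCadd _ hv _ hw
      smul_mem' := fun z v hv => by
        have : ((z • v : V) : Fin n → ℝ) = z • (v : Fin n → ℝ) := by simp
        show ((z • v : V) : Fin n → ℝ) ∈ C
        rw [this]
        exact AddSubgroup.zsmul_mem Cgrp hv z } with hΛ
  -- basis vectors of ℝⁿ
  set e : Fin n → (Fin n → ℝ) := fun i j => if i = j then 1 else 0 with he
  have heS : ∀ i, e i ∈ S := by
    intro i
    refine ⟨0, fun j => if i = j then 1 else 0, ?_⟩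
    funext j
    by_cases h : i = j <;> simp [he, h]
  have hpVeΛ : ∀ i, pV (e i) ∈ Λ := fun i => hPVC _ (hSC (heS i))
  -- Λ is discrete
  have hdisc : ∃ ε > 0, ∀ v : V, (v : Fin n → ℝ) ∈ C → ‖v‖ < ε → v = 0 := by
    by_contra hcon
    push_neg at hcon
    have hseq : ∀ j : ℕ, ∃ v : V, (v : Fin n → ℝ) ∈ C ∧ ‖v‖ < 1/(j+1) ∧ v ≠ 0 := by
      intro j
      obtain ⟨v, h1, h2, h3⟩ := hcon (1/(j+1)) (by positivity)
      exact ⟨v, h1, h2, h3⟩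
    choose u huC hun hune using hseq
    have hupos : ∀ j, 0 < ‖u j‖ := fun j => norm_pos_iff.2 (hune j)
    set w : ℕ → V := fun j => ‖u j‖⁻¹ • u j with hw
    have hwsphere : ∀ j, w j ∈ Metric.sphere (0 : V) 1 := by
      intro j
      have h := norm_smul (‖u j‖⁻¹) (u j)
      rw [mem_sphere_zero_iff_norm]
      show ‖‖u j‖⁻¹ • u j‖ = 1
      rw [h, norm_inv, norm_norm, inv_mul_cancel₀ (hupos j).ne']
    obtain ⟨ul,hul, φ, hφ, hconv⟩ :=
      (isCompact_sphere (0 : V) 1).tendsto_subseq hwsphere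
    have hnorm0 : Filter.Tendsto (fun k => ‖u (φ k)‖) Filter.atTop (nhds 0) := by
      refine squeeze_zero (fun k => (hupos _).le) (fun k => ?_)
        tendsto_one_div_add_atTop_nhds_zero_nat
      refine le_trans (hun (φ k)).le ?_
      have h2 : k ≤ φ k := hφ.le_apply
      have h1 : (k : ℝ) + 1 ≤ (φ k : ℝ) + 1 := by
        have : (k:ℝ) ≤ (φ k : ℝ) := by exact_mod_cast h2
        linarith
      exact one_div_le_one_div_of_le (by positivity) h1
    have hulW : (ul : Fin n → ℝ) ∈ W := by
      intro t
      set ak : ℕ → ℤ := fun k => ⌊t / ‖u (φ k)‖⌋ with hak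
      have hsk : Filter.Tendsto (fun k => (ak k : ℝ) * ‖u (φ k)‖) Filter.atTop (nhds t) := by
        have hdiff : Filter.Tendsto (fun k => (ak k : ℝ) * ‖u (φ k)‖ - t) Filter.atTop
            (nhds 0) := by
          refine squeeze_zero_norm (fun k => ?_) hnorm0
          have hne := (hupos (φ k)).ne'
          have h1 : t = (t / ‖u (φ k)‖) * ‖u (φ k)‖ := (div_mul_cancel₀ t hne).symm
          rw [Real.norm_eq_abs]
          calc |(ak k : ℝ) * ‖u (φ k)‖ - t|
              = |(ak k : ℝ) - t / ‖u (φ k)‖| * ‖u (φ k)‖ := by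
                rw [← abs_of_pos (hupos (φ k)), ← abs_mul]
                congr 1
                rw [abs_of_pos (hupos (φ k))]
                rw [sub_mul, ← h1]
            _ ≤ 1 * ‖u (φ k)‖ := by
                refine mul_le_mul_of_nonneg_right ?_ (hupos (φ k)).le
                rw [abs_le]
                constructor
                · have := Int.lt_floor_add_one (t / ‖u (φ k)‖)
                  simp only [hak]
                  linarith
                · have := Int.floor_le (t / ‖u (φ k)‖)
                  simp only [hak]
                  linarith
            _ = ‖u (φ k)‖ := one_mul _
        have := hdiff.add_const t
        simpa using this
      have hsmul : Filter.Tendsto (fun k => ((ak k : ℝ) * ‖u (φ k)‖) • w (φ k))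
          Filter.atTop (nhds (t • ul)) := hsk.smul hconv
      have heqsmul : ∀ k, ((ak k : ℝ) * ‖u (φ k)‖) • w (φ k) = ak k • u (φ k) := by
        intro k
        rw [hw, smul_smul, mul_assoc, mul_inv_cancel₀ (hupos (φ k)).ne', mul_one,
          Int.cast_smul_eq_zsmul ℝ]
      rw [funext heqsmul] at hsmul
      have hcoe : Filter.Tendsto (fun k => ((ak k • u (φ k) : V) : Fin n → ℝ))
          Filter.atTop (nhds ((t • ul : V) : Fin n → ℝ)) :=
        (continuous_subtype_val.tendsto _).comp hsmul
      have hmem : ∀ k, ((ak k • u (φ k) : V) : Fin n → ℝ) ∈ C := by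
        intro k
        have : ((ak k • u (φ k) : V) : Fin n → ℝ) = ak k • ((u (φ k) : Fin n → ℝ)) := by simp
        rw [this]
        exact AddSubgroup.zsmul_mem Cgrp (huC (φ k)) (ak k)
      have := hCclosed.mem_of_tendsto hcoe (Filter.Eventually.of_forall hmem)
      simpa using this
    have hul0 : (ul : Fin n → ℝ) = 0 := by
      have hmemV : (ul : Fin n → ℝ) ∈ V := ul.2
      have := hcompl.inf_eq_bot
      have hbot : (ul : Fin n → ℝ) ∈ W ⊓ V := ⟨hulW, hmemV⟩
      rw [this] at hbot
      simpa using hbot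
    have : ‖ul‖ = 1 := mem_sphere_zero_iff_norm.1 hul
    rw [show ul = 0 from Subtype.ext hul0] at this
    simp at this
  haveI hΛdisc : DiscreteTopology Λ := by
    obtain ⟨ε, hεpos, hε⟩ := hdisc
    rw [discreteTopology_iff_isOpen_singleton_zero, isOpen_induced_iff]
    refine ⟨Metric.ball (0 : V) ε, Metric.isOpen_ball, ?_⟩
    ext v
    simp only [Set.mem_preimage, Metric.mem_ball, Set.mem_singleton_iff]
    constructor
    · intro hv
      have h1 : ‖(v : V)‖ < ε := by
        rw [← dist_zero_right]
        exact hv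
      exact Subtype.ext (hε (v : V) v.2 h1)
    · intro hv
      rw [hv]
      simpa using hεpos
  have hpVsum : ∀ x : Fin n → ℝ, pV x = ∑ i, x i • pV (e i) := by
    intro x
    conv_lhs => rw [pi_eq_sum_univ x]
    rw [map_sum]
    congr 1
    funext i
    rw [map_smul]
  haveI hΛlat : IsZLattice ℝ Λ := by
    constructor
    rw [eq_top_iff]
    rintro v -
    have h1 : pV (v : Fin n → ℝ) = v :=
      Submodule.projectionOnto_apply_left hcompl.symm v
    rw [← h1, hpVsum]
    exact Submodule.sum_mem _ fun i _ =>
      Submodule.smul_mem _ _ (Submodule.subset_span (hpVeΛ i))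
  -- build the integer vector k
  haveI : Module.Finite ℤ Λ := ZLattice.module_finite ℝ Λ
  haveI : Module.Free ℤ Λ := ZLattice.module_free ℝ Λ
  set b := Module.Free.chooseBasis ℤ Λ with hb
  have hcardpos : 0 < Fintype.card (Module.Free.ChooseBasisIndex ℤ Λ) := by
    rw [← Module.finrank_eq_card_chooseBasisIndex, ZLattice.rank ℝ Λ]
    have : Nontrivial V := Submodule.nontrivial_iff_ne_bot.2 hVne
    exact Module.finrank_pos
  have : Nonempty (Module.Free.ChooseBasisIndex ℤ Λ) := Fintype.card_pos_iff.mp hcardpos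
  obtain ⟨i₀⟩ := this
  set c := Basis.ofZLatticeBasis ℝ Λ b with hc
  set f : (Fin n → ℝ) →ₗ[ℝ] ℝ := (c.coord i₀).comp pV with hf
  have hfint : ∀ i, f (e i) = ((b.repr ⟨pV (e i), hpVeΛ i⟩ i₀ : ℤ) : ℝ) := by
    intro i
    have := Basis.ofZLatticeBasis_repr_apply ℝ Λ b ⟨pV (e i), hpVeΛ i⟩ i₀
    simpa [hf, Basis.coord_apply] using this
  set k : Fin n → ℤ := fun i => b.repr ⟨pV (e i), hpVeΛ i⟩ i₀ with hk
  have hfsum : ∀ x : Fin n → ℝ, f x = ∑ i, x i * f (e i) := by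
    intro x
    conv_lhs => rw [pi_eq_sum_univ x]
    rw [map_sum]
    congr 1
    funext i
    rw [map_smul, smul_eq_mul]
  have hfθ : f θ = 0 := by
    have : pV θ = 0 := Submodule.projectionOnto_apply_right hcompl.symm ⟨θ, hθW⟩
    simp [hf, this]
  have hk0 : k = 0 := by
    apply hirr
    have h1 : ∑ i, (k i : ℝ) * θ i = f θ := by
      rw [hfsum θ]
      refine Finset.sum_congr rfl fun i _ => ?_
      rw [hfint i]
      simp [hk, mul_comm]
    rw [h1, hfθ]
  -- contradiction: f is zero but f (c i₀) = 1
  have hfzero : ∀ x, f x = 0 := by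
    intro x
    rw [hfsum x]
    apply Finset.sum_eq_zero
    intro i _
    rw [hfint i]
    have : k i = 0 := by rw [hk0]; rfl
    simp only [hk] at this
    rw [this]
    simp
  have hfc : f ((c i₀ : V) : Fin n → ℝ) = 1 := by
    have hproj : pV ((c i₀ : V) : Fin n → ℝ) = c i₀ :=
      Submodule.projectionOnto_apply_left hcompl.symm (c i₀)
    simp [hf, hproj, Basis.coord_apply]
  rw [hfzero] at hfc
  exact zero_ne_one hfc
end

section
/- Let L > 0 and let γ_L : H¹(0, L) → ℂ be the trace map u ↦ u(0). Then γ_L is continuous, and its operator norm satisfies ‖γ_L‖² = (e^L + e^{-L})/(e^L − e^{-L}) = 1/tanh(L). -/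
open Real Set MeasureTheory

lemma my_hasDerivAt_tanh (y : ℝ) : HasDerivAt Real.tanh (1 - Real.tanh y ^ 2) y := by
  have h : HasDerivAt (fun y => Real.sinh y / Real.cosh y)
      ((Real.cosh y * Real.cosh y - Real.sinh y * Real.sinh y) / Real.cosh y ^ 2) y :=
    (Real.hasDerivAt_sinh y).div (Real.hasDerivAt_cosh y) (Real.cosh_pos y).ne'
  have hfun : Real.tanh = fun y => Real.sinh y / Real.cosh y :=
    funext fun y => Real.tanh_eq_sinh_div_cosh y
  rw [hfun]
  convert h using 1
  have hc := (Real.cosh_pos y).ne'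
  have ht := Real.tanh_eq_sinh_div_cosh y
  simp only []
  field_simp

lemma my_tanh_sq_le_one (y : ℝ) : Real.tanh y ^ 2 ≤ 1 := by
  rw [Real.tanh_eq_sinh_div_cosh, div_pow]
  rw [div_le_one (by positivity)]
  nlinarith [Real.cosh_sq_sub_sinh_sq y]

lemma my_re_deriv {u u' : ℝ → ℂ} {x : ℝ} (h : HasDerivAt u (u' x) x) :
    HasDerivAt (fun t => (u t).re) ((u' x).re) x :=
  (Complex.reCLM.hasFDerivAt.comp_hasDerivAt x h)

lemma my_im_deriv {u u' : ℝ → ℂ} {x : ℝ} (h : HasDerivAt u (u' x) x) :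
    HasDerivAt (fun t => (u t).im) ((u' x).im) x :=
  (Complex.imCLM.hasFDerivAt.comp_hasDerivAt x h)

lemma my_normsq_deriv {u u' : ℝ → ℂ} {x : ℝ} (h : HasDerivAt u (u' x) x) :
    HasDerivAt (fun t => ‖u t‖ ^ 2)
      (2 * ((u x).re * (u' x).re + (u x).im * (u' x).im)) x := by
  have hfun : (fun t => ‖u t‖ ^ 2) = fun t => (u t).re ^ 2 + (u t).im ^ 2 := by
    funext t
    rw [Complex.sq_norm, Complex.normSq_apply]; ring
  rw [hfun]
  have h2 : HasDerivAt (fun t => (u t).re ^ 2 + (u t).im ^ 2)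
      ((u' x).re * (u x).re + (u x).re * (u' x).re +
        ((u' x).im * (u x).im + (u x).im * (u' x).im)) x := by
    have ha := ((my_re_deriv h).mul (my_re_deriv h)).add ((my_im_deriv h).mul (my_im_deriv h))
    simp only [pow_two]; exact ha
  convert h2 using 1
  ring

lemma my_upper (L : ℝ) (hL : 0 < L) (u u' : ℝ → ℂ)
    (hd : ∀ x ∈ Set.Icc (0:ℝ) L, HasDerivAt u (u' x) x)
    (h1 : (∫ x in (0:ℝ)..L, (‖u' x‖ ^ 2 + ‖u x‖ ^ 2)) = 1) :
    ‖u 0‖ ^ 2 ≤ Real.cosh L / Real.sinh L := by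
  have hle : (0:ℝ) ≤ L := hL.le
  set G : ℝ → ℝ := fun x => ‖u' x‖ ^ 2 + ‖u x‖ ^ 2 with hG
  have hGint : IntervalIntegrable G volume 0 L := by
    by_contra h
    rw [intervalIntegral.integral_undef h] at h1
    norm_num at h1
  set p : ℝ → ℝ := fun x => Real.tanh (L - x) with hp
  set F' : ℝ → ℝ := fun x => (p x ^ 2 - 1) * ‖u x‖ ^ 2
      + p x * (2 * ((u x).re * (u' x).re + (u x).im * (u' x).im)) with hF'
  -- derivative of F on Icc
  have hFderiv : ∀ x ∈ Set.uIcc (0:ℝ) L,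
      HasDerivAt (fun t => p t * ‖u t‖ ^ 2) (F' x) x := by
    intro x hx
    rw [Set.uIcc_of_le hle] at hx
    have hpd : HasDerivAt p (-(1 - Real.tanh (L - x) ^ 2)) x := by
      have hlin : HasDerivAt (fun t : ℝ => L - t) (-1) x := by
        simpa using (hasDerivAt_id x).const_sub L
      have := (my_hasDerivAt_tanh (L - x)).comp x hlin
      exact this.congr_deriv (by ring)
    have := hpd.mul (my_normsq_deriv (hd x hx))
    refine this.congr_deriv ?_
    simp only [hF', hp]
    ring
  -- pointwise bounds for F'
  have hbound : ∀ x : ℝ, |F' x| ≤ G x := by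
    intro x
    have ht : p x ^ 2 ≤ 1 := my_tanh_sq_le_one (L - x)
    have hnu : ‖u x‖ ^ 2 = (u x).re ^ 2 + (u x).im ^ 2 := by
      rw [Complex.sq_norm, Complex.normSq_apply]; ring
    have hnu' : ‖u' x‖ ^ 2 = (u' x).re ^ 2 + (u' x).im ^ 2 := by
      rw [Complex.sq_norm, Complex.normSq_apply]; ring
    rw [abs_le]
    constructor
    · simp only [hF', hG, hnu, hnu']
      nlinarith [sq_nonneg (p x * (u x).re + (u' x).re),
        sq_nonneg (p x * (u x).im + (u' x).im), sq_nonneg (u x).re, sq_nonneg (u x).im]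
    · simp only [hF', hG, hnu, hnu']
      nlinarith [sq_nonneg (p x * (u x).re - (u' x).re),
        sq_nonneg (p x * (u x).im - (u' x).im), sq_nonneg (u x).re, sq_nonneg (u x).im,
        sq_nonneg (u' x).re, sq_nonneg (u' x).im]
  -- integrability of F'
  have hF'int : IntervalIntegrable F' volume 0 L := by
    rw [intervalIntegrable_iff_integrableOn_Ioc_of_le hle]
    have hGint' : IntegrableOn G (Set.Ioc 0 L) volume := by
      rwa [intervalIntegrable_iff_integrableOn_Ioc_of_le hle] at hGint
    refine hGint'.mono' ?_ ?_
    · -- AEStronglyMeasurable F' on restrict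
      have hu_cont : ContinuousOn u (Set.Icc 0 L) := fun x hx =>
        (hd x hx).continuousAt.continuousWithinAt
      have hu_m : AEStronglyMeasurable u (volume.restrict (Set.Ioc 0 L)) :=
        (hu_cont.mono Set.Ioc_subset_Icc_self).aestronglyMeasurable measurableSet_Ioc
      have hu'_m : AEStronglyMeasurable u' (volume.restrict (Set.Ioc 0 L)) := by
        have hmeas : Measurable (deriv u) := measurable_deriv u
        refine hmeas.aestronglyMeasurable.congr ?_
        have hne : ∀ᵐ x ∂volume.restrict (Set.Ioc 0 L), x ≠ L := by
          refine ae_iff.mpr ?_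
          have : {x : ℝ | ¬x ≠ L} = {L} := by ext y; simp
          rw [this]
          exact le_antisymm ((Measure.restrict_le_self (s := Set.Ioc 0 L)) _ |>.trans
            (by simp)) zero_le
        have hmem := ae_restrict_mem (μ := volume) (measurableSet_Ioc (a := (0:ℝ)) (b := L))
        filter_upwards [hne, hmem] with x hxne hxmem
        have hxI : x ∈ Set.Ioo 0 L := ⟨hxmem.1, lt_of_le_of_ne hxmem.2 hxne⟩
        exact ((hd x (Set.Ioo_subset_Icc_self hxI)).deriv)
      have hre : AEStronglyMeasurable (fun x => (u x).re) _ :=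
        Complex.continuous_re.comp_aestronglyMeasurable hu_m
      have him : AEStronglyMeasurable (fun x => (u x).im) _ :=
        Complex.continuous_im.comp_aestronglyMeasurable hu_m
      have hre' : AEStronglyMeasurable (fun x => (u' x).re) _ :=
        Complex.continuous_re.comp_aestronglyMeasurable hu'_m
      have him' : AEStronglyMeasurable (fun x => (u' x).im) _ :=
        Complex.continuous_im.comp_aestronglyMeasurable hu'_m
      have hnorm : AEStronglyMeasurable (fun x => ‖u x‖ ^ 2) _ :=
        (hu_m.norm.pow 2)
      have htanh_cont : Continuous Real.tanh :=
        continuous_iff_continuousAt.mpr fun y => (my_hasDerivAt_tanh y).continuousAt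
      have hpc : Continuous p := htanh_cont.comp (continuous_const.sub continuous_id)
      exact (((hpc.pow 2).sub continuous_const).aestronglyMeasurable.mul hnorm).add
        (hpc.aestronglyMeasurable.mul
          (((hre.mul hre').add (him.mul him')).const_mul 2))
    · exact Filter.Eventually.of_forall fun x => hbound x
  -- FTC
  have hFTC := intervalIntegral.integral_eq_sub_of_hasDerivAt hFderiv hF'int
  -- lower bound pointwise on Icc: -G ≤ F'
  have hmono : ∀ x ∈ Set.Icc (0:ℝ) L, (-G) x ≤ F' x := fun x _ =>
    (abs_le.mp (hbound x)).1
  have hineq := intervalIntegral.integral_mono_on hle hGint.neg hF'int hmono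
  have hneg : (∫ x in (0:ℝ)..L, (-G) x) = -1 := by
    simp only [Pi.neg_apply]
    rw [intervalIntegral.integral_neg, h1]
  rw [hneg, hFTC] at hineq
  have hpL : p L = 0 := by simp [hp, Real.tanh_zero]
  have hp0 : p 0 = Real.tanh L := by simp [hp]
  rw [hpL, hp0] at hineq
  have htn : Real.tanh L * ‖u 0‖ ^ 2 ≤ 1 := by linarith
  have hs : 0 < Real.sinh L := by
    rwa [← Real.sinh_zero, Real.sinh_lt_sinh]
  rw [Real.tanh_eq_sinh_div_cosh, div_mul_eq_mul_div, div_le_one (Real.cosh_pos L)] at htn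
  rw [le_div_iff₀ hs]
  nlinarith


lemma my_witness (L : ℝ) (hL : 0 < L) :
    ∃ u u' : ℝ → ℂ,
        (∀ x ∈ Set.Icc (0 : ℝ) L, HasDerivAt u (u' x) x) ∧
        (∫ x in (0:ℝ)..L, (‖u' x‖ ^ 2 + ‖u x‖ ^ 2)) = 1 ∧
        Real.cosh L / Real.sinh L = ‖u 0‖ ^ 2 := by
  have hs2 : 0 < Real.sinh (2 * L) := by
    rw [← Real.sinh_zero, Real.sinh_lt_sinh]; positivity
  set c : ℝ := Real.sqrt (2 / Real.sinh (2 * L)) with hc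
  have hc2 : c ^ 2 = 2 / Real.sinh (2 * L) := Real.sq_sqrt (by positivity)
  refine ⟨fun x => ((c * Real.cosh (L - x) : ℝ) : ℂ),
    fun x => ((-(c * Real.sinh (L - x)) : ℝ) : ℂ), ?_, ?_, ?_⟩
  · intro x _
    have hlin : HasDerivAt (fun t : ℝ => L - t) (-1) x := by
      simpa using (hasDerivAt_id x).const_sub L
    have h1 : HasDerivAt (fun t : ℝ => c * Real.cosh (L - t))
        (-(c * Real.sinh (L - x))) x := by
      have := ((Real.hasDerivAt_cosh (L - x)).comp x hlin).const_mul c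
      exact this.congr_deriv (by ring)
    exact h1.ofReal_comp
  · have key : ∀ x : ℝ, ‖((-(c * Real.sinh (L - x)) : ℝ) : ℂ)‖ ^ 2
        + ‖((c * Real.cosh (L - x) : ℝ) : ℂ)‖ ^ 2 = c ^ 2 * Real.cosh (2 * (L - x)) := by
      intro x
      rw [Complex.norm_real, Complex.norm_real, Real.norm_eq_abs, Real.norm_eq_abs,
        sq_abs, sq_abs, Real.cosh_two_mul]
      ring
    rw [intervalIntegral.integral_congr (g := fun x => c ^ 2 * Real.cosh (2 * (L - x)))
      (fun x _ => key x)]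
    have hderiv : ∀ x ∈ Set.uIcc (0:ℝ) L,
        HasDerivAt (fun t => -(c ^ 2 * Real.sinh (2 * (L - t)) / 2))
          (c ^ 2 * Real.cosh (2 * (L - x))) x := by
      intro x _
      have hlin : HasDerivAt (fun t : ℝ => 2 * (L - t)) (-2) x := by
        have := ((hasDerivAt_id x).const_sub L).const_mul 2
        exact this.congr_deriv (by ring)
      have := (((Real.hasDerivAt_sinh (2 * (L - x))).comp x hlin).const_mul (c ^ 2 / 2)).neg
      have hf : (fun t => -(c ^ 2 * Real.sinh (2 * (L - t)) / 2))
          = -fun y => c ^ 2 / 2 * (Real.sinh ∘ fun t => 2 * (L - t)) y := by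
        funext t; simp only [Pi.neg_apply, Function.comp]; ring
      rw [hf]
      exact this.congr_deriv (by ring)
    have hcont : IntervalIntegrable (fun x => c ^ 2 * Real.cosh (2 * (L - x))) volume 0 L :=
      (continuous_const.mul (Real.continuous_cosh.comp
        (continuous_const.mul (continuous_const.sub continuous_id)))).intervalIntegrable 0 L
    rw [intervalIntegral.integral_eq_sub_of_hasDerivAt hderiv hcont]
    simp only [sub_self, mul_zero, Real.sinh_zero, sub_zero]
    rw [hc2]
    field_simp
    norm_num
  · rw [Complex.norm_real, Real.norm_eq_abs, sq_abs, sub_zero, mul_pow, hc2,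
      Real.sinh_two_mul]
    have hsL : 0 < Real.sinh L := by rwa [← Real.sinh_zero, Real.sinh_lt_sinh]
    have hcL : 0 < Real.cosh L := Real.cosh_pos L
    field_simp

/-- **1D trace theorem on `(0, L)`.** The trace map `γ_L : u ↦ u(0)` on `H¹(0, L)` is
continuous, and its operator norm satisfies
`‖γ_L‖² = (e^L + e^{-L})/(e^L − e^{-L}) = 1/tanh L`.
This is expressed by saying that `(e^L + e^{-L})/(e^L − e^{-L})` is the least upper bound
of the values `|u(0)|²` over functions `u` of `H¹(0, L)`-norm `1`. -/

theorem stmt3 (L : ℝ) (hL : 0 < L) :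
    IsLUB {r : ℝ | ∃ u u' : ℝ → ℂ,
        (∀ x ∈ Set.Icc (0 : ℝ) L, HasDerivAt u (u' x) x) ∧
        (∫ x in (0:ℝ)..L, (‖u' x‖ ^ 2 + ‖u x‖ ^ 2)) = 1 ∧
        r = ‖u 0‖ ^ 2}
      ((Real.exp L + Real.exp (-L)) / (Real.exp L - Real.exp (-L))) ∧
    (Real.exp L + Real.exp (-L)) / (Real.exp L - Real.exp (-L)) = 1 / Real.tanh L := by
  have hsL : 0 < Real.sinh L := by rwa [← Real.sinh_zero, Real.sinh_lt_sinh]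
  have hcL : 0 < Real.cosh L := Real.cosh_pos L
  have hexp : Real.exp (-L) < Real.exp L := Real.exp_lt_exp.mpr (by linarith)
  have hC : (Real.exp L + Real.exp (-L)) / (Real.exp L - Real.exp (-L))
      = Real.cosh L / Real.sinh L := by
    rw [Real.cosh_eq, Real.sinh_eq]
    have hb : Real.exp L - Real.exp (-L) ≠ 0 := by linarith
    field_simp
  constructor
  · refine IsGreatest.isLUB ⟨?_, ?_⟩
    · rw [Set.mem_setOf_eq, hC]
      exact my_witness L hL
    · rintro r ⟨u, u', hd, h1, hr⟩
      rw [hr, hC]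
      exact my_upper L hL u u' hd h1
  · rw [hC, Real.tanh_eq_sinh_div_cosh, one_div_div]
end

section
/- Let Ψ ∈ L²(Ω♯) with Ω♯ = (0,1)^{n-1} × (0,∞), θₙ > 0, and define Ψ_θ(y) = Ψ̃(s_θ(y), yₙ/θₙ) where Ψ̃ is the periodic extension of Ψ and s_θ(y) = ŷ − (yₙ/θₙ)θ̂. Then Ψ_θ ∈ L²(Ω♯) and ‖Ψ_θ‖_{L²(Ω♯)} = √θₙ · ‖Ψ‖_{L²(Ω♯)}. -/
open MeasureTheory

/-- The half-cylinder `Ω♯ = (0,1)^{n-1} × (0,∞)`, with `ℝⁿ = ℝ^{n-1} × ℝ`. -/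
def OmegaSharp (m : ℕ) : Set ((Fin m → ℝ) × ℝ) :=
  {y | (∀ i, y.1 i ∈ Set.Ioo (0:ℝ) 1) ∧ 0 < y.2}

section Aux

open Set
open scoped ENNReal Pointwise

variable {m : ℕ}

lemma OmegaSharp_eq (m : ℕ) :
    OmegaSharp m = (univ.pi fun _ : Fin m => Ioo (0:ℝ) 1) ×ˢ Ioi (0:ℝ) := by
  ext ⟨x, t⟩
  simp [OmegaSharp, Set.mem_pi]

lemma OmegaSharp_measurable (m : ℕ) : MeasurableSet (OmegaSharp m) := by
  rw [OmegaSharp_eq]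
  exact (MeasurableSet.univ_pi fun i => measurableSet_Ioo).prod measurableSet_Ioi

/-- restriction of volume to a box is the pi measure of restrictions -/
lemma my_restrict_pi (s : Fin m → Set ℝ) :
    (volume : Measure (Fin m → ℝ)).restrict (univ.pi s)
      = Measure.pi (fun i => volume.restrict (s i)) := by
  refine (Measure.pi_eq (μ := fun i => volume.restrict (s i)) fun t ht => ?_).symm
  rw [Measure.restrict_apply (MeasurableSet.univ_pi ht), ← Set.pi_inter_distrib,
    volume_pi_pi]
  exact Finset.prod_congr rfl fun i _ => (Measure.restrict_apply (ht i)).symm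

/-- translation invariance of the cube integral for ℤᵐ-periodic functions -/
lemma my_cube_shift (φ : (Fin m → ℝ) → ℝ≥0∞) (hφ : Measurable φ)
    (hper : ∀ (x : Fin m → ℝ) (k : Fin m → ℤ), φ (x + fun i => (k i : ℝ)) = φ x)
    (a : Fin m → ℝ) :
    ∫⁻ x in univ.pi (fun i => Ioo (a i) (a i + 1)), φ x
      = ∫⁻ x in univ.pi (fun _ => Ioo (0:ℝ) 1), φ x := by
  haveI : Fact ((0:ℝ) < 1) := ⟨one_pos⟩
  set ρ : AddCircle (1:ℝ) → ℝ :=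
    fun c => ((AddCircle.measurableEquivIoc 1 0 c : Ioc (0:ℝ) (0+1)) : ℝ) with hρ
  have hρm : Measurable ρ :=
    measurable_subtype_coe.comp (AddCircle.measurableEquivIoc 1 0).measurable
  set G : (Fin m → AddCircle (1:ℝ)) → ℝ≥0∞ := fun z => φ (fun i => ρ (z i)) with hG
  have hGm : Measurable G :=
    hφ.comp (measurable_pi_lambda _ fun i => hρm.comp (measurable_pi_apply i))
  have hGQ : ∀ x : Fin m → ℝ, G (fun i => ((x i : ℝ) : AddCircle (1:ℝ))) = φ x := by
    intro x
    have hrep : ∀ r : ℝ, ρ ((r : ℝ) : AddCircle (1:ℝ))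
        = r + ((-(toIocDiv (α := ℝ) one_pos 0 r) : ℤ) : ℝ) := by
      intro r
      show ((AddCircle.equivIoc 1 0 ((r : ℝ) : AddCircle (1:ℝ)) : Ioc (0:ℝ) (0+1)) : ℝ) = _
      rw [AddCircle.equivIoc, QuotientAddGroup.equivIocMod_coe]
      simp [toIocMod, sub_eq_add_neg]
    show φ (fun i => ρ ((x i : ℝ) : AddCircle (1:ℝ))) = φ x
    have : (fun i => ρ ((x i : ℝ) : AddCircle (1:ℝ)))
        = x + fun i => (((-(toIocDiv (α := ℝ) one_pos 0 (x i)) : ℤ) : ℝ)) := by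
      funext i; simpa using hrep (x i)
    rw [this, hper]
  have key : ∀ b : Fin m → ℝ,
      ∫⁻ x in univ.pi (fun i => Ioo (b i) (b i + 1)), φ x
        = ∫⁻ z, G z ∂(Measure.pi fun _ => (volume : Measure (AddCircle (1:ℝ)))) := by
    intro b
    rw [my_restrict_pi]
    have hres : (Measure.pi fun i => volume.restrict (Ioo (b i) (b i + 1)))
        = Measure.pi fun i => volume.restrict (Ioc (b i) (b i + 1)) := by
      congr 1; funext i; exact Measure.restrict_congr_set Ioo_ae_eq_Ioc
    rw [hres]
    have hmp : MeasurePreserving (fun (x : Fin m → ℝ) i => ((x i : ℝ) : AddCircle (1:ℝ)))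
        (Measure.pi fun i => volume.restrict (Ioc (b i) (b i + 1)))
        (Measure.pi fun _ => (volume : Measure (AddCircle (1:ℝ)))) :=
      measurePreserving_pi _ _ (fun i => AddCircle.measurePreserving_mk 1 (b i))
    rw [← hmp.lintegral_comp hGm]
    exact lintegral_congr fun x => (hGQ x).symm
  have h0 : (univ.pi fun _ : Fin m => Ioo (0:ℝ) 1)
      = univ.pi (fun i : Fin m => Ioo ((0:ℝ)) ((0:ℝ) + 1)) := by simp
  rw [key a, h0, key (fun _ => 0)]

lemma my_core (θhat : Fin m → ℝ) {θn : ℝ} (hn : 0 < θn)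
    (φ : (Fin m → ℝ) × ℝ → ℝ≥0∞) (hφ : Measurable φ)
    (hper : ∀ (x : Fin m → ℝ) (t : ℝ) (k : Fin m → ℤ), φ (x + fun i => (k i : ℝ), t) = φ (x, t)) :
    ∫⁻ z in OmegaSharp m, φ (z.1 - (z.2 / θn) • θhat, z.2 / θn)
      = ENNReal.ofReal θn * ∫⁻ z in OmegaSharp m, φ z := by
  have hTm : Measurable (fun z : (Fin m → ℝ) × ℝ => (z.1 - (z.2 / θn) • θhat, z.2 / θn)) := by
    fun_prop
  set A : Set (Fin m → ℝ) := univ.pi fun _ : Fin m => Ioo (0:ℝ) 1 with hA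
  have hres : (volume : Measure ((Fin m → ℝ) × ℝ)).restrict (OmegaSharp m)
      = ((volume : Measure (Fin m → ℝ)).restrict A).prod
        ((volume : Measure ℝ).restrict (Ioi 0)) := by
    rw [OmegaSharp_eq, Measure.volume_eq_prod, Measure.prod_restrict]
  have inner : ∀ t : ℝ,
      ∫⁻ x in A, φ (x - (t / θn) • θhat, t / θn) = ∫⁻ x in A, φ (x, t / θn) := by
    intro t
    set c : Fin m → ℝ := (t / θn) • θhat with hc
    set s : ℝ := t / θn with hs
    have hφ1 : Measurable fun x : Fin m → ℝ => φ (x, s) :=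
      hφ.comp (measurable_id.prodMk measurable_const)
    have hφ2 : Measurable fun x : Fin m → ℝ => φ (x - c, s) :=
      hφ1.comp (measurable_id.sub measurable_const)
    have hmap : Measure.map (· + c) (volume : Measure (Fin m → ℝ)) = volume :=
      map_add_right_eq_self volume c
    have h1 : ∫⁻ x in A, φ (x - c, s) = ∫⁻ x in (· + c) ⁻¹' A, φ (x + c - c, s) := by
      conv_lhs => rw [← hmap]
      rw [setLIntegral_map (by rw [hA]; exact MeasurableSet.univ_pi fun i => measurableSet_Ioo)
        hφ2 (measurable_add_const c)]
    have hpre : (· + c) ⁻¹' A = univ.pi fun i => Ioo (-c i) (-c i + 1) := by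
      ext x
      simp only [hA, mem_preimage, mem_pi, mem_univ, forall_true_left, Pi.add_apply, mem_Ioo,
        true_implies]
      constructor
      · intro h i; obtain ⟨h1, h2⟩ := h i; constructor <;> linarith
      · intro h i; obtain ⟨h1, h2⟩ := h i; constructor <;> linarith
    have hsimp : ∀ x : Fin m → ℝ, φ (x + c - c, s) = φ (x, s) := fun x => by
      rw [add_sub_cancel_right]
    rw [h1, hpre]
    calc ∫⁻ x in univ.pi fun i => Ioo (-c i) (-c i + 1), φ (x + c - c, s)
        = ∫⁻ x in univ.pi fun i => Ioo (-c i) (-c i + 1), φ (x, s) :=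
          lintegral_congr fun x => hsimp x
      _ = ∫⁻ x in A, φ (x, s) :=
          my_cube_shift _ hφ1 (fun x k => hper x s k) _
  rw [hres]
  have hTm' : Measurable fun z : (Fin m → ℝ) × ℝ => φ (z.1 - (z.2 / θn) • θhat, z.2 / θn) :=
    hφ.comp hTm
  rw [lintegral_prod_symm _ hTm'.aemeasurable, lintegral_prod_symm _ hφ.aemeasurable]
  simp only
  have g_meas : Measurable fun t : ℝ => ∫⁻ x in A, φ (x, t) := by
    have : Measurable (Function.uncurry fun (t : ℝ) (x : Fin m → ℝ) => φ (x, t)) :=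
      hφ.comp (measurable_snd.prodMk measurable_fst)
    exact this.lintegral_prod_right'
  calc ∫⁻ t in Ioi (0:ℝ), ∫⁻ x in A, φ (x - (t / θn) • θhat, t / θn)
      = ∫⁻ t in Ioi (0:ℝ), ∫⁻ x in A, φ (x, t / θn) := by
        exact lintegral_congr fun t => inner t
    _ = ENNReal.ofReal θn * ∫⁻ t in Ioi (0:ℝ), ∫⁻ x in A, φ (x, t) := by
        set g : ℝ → ℝ≥0∞ := fun t => ∫⁻ x in A, φ (x, t) with hg
        have hgm : Measurable fun t => g (t / θn) := g_meas.comp (measurable_div_const θn)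
        have hmap2 : Measure.map (θn * ·) (volume : Measure ℝ)
            = ENNReal.ofReal |θn⁻¹| • volume := Real.map_volume_mul_left hn.ne'
        have hpre2 : (θn * ·) ⁻¹' Ioi (0:ℝ) = Ioi 0 := by
          ext x; simp only [mem_preimage, mem_Ioi]
          constructor
          · intro h; nlinarith
          · intro h; positivity
        have step : ∫⁻ t in Ioi (0:ℝ), g (t / θn) ∂(Measure.map (θn * ·) volume)
            = ∫⁻ x in Ioi (0:ℝ), g (θn * x / θn) := by
          rw [setLIntegral_map measurableSet_Ioi hgm (measurable_const_mul θn), hpre2]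
        have step2 : ∫⁻ x in Ioi (0:ℝ), g (θn * x / θn) = ∫⁻ x in Ioi (0:ℝ), g x := by
          refine lintegral_congr fun x => ?_
          rw [mul_div_cancel_left₀ _ hn.ne']
        rw [step2] at step
        rw [hmap2] at step
        rw [Measure.restrict_smul, lintegral_smul_measure] at step
        have habs : ENNReal.ofReal θn * ENNReal.ofReal |θn⁻¹| = 1 := by
          rw [abs_of_pos (inv_pos.mpr hn), ← ENNReal.ofReal_mul hn.le,
            mul_inv_cancel₀ hn.ne', ENNReal.ofReal_one]
        calc ∫⁻ t in Ioi (0:ℝ), g (t / θn)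
            = (ENNReal.ofReal θn * ENNReal.ofReal |θn⁻¹|) * ∫⁻ t in Ioi (0:ℝ), g (t / θn) := by
              rw [habs, one_mul]
          _ = ENNReal.ofReal θn * (ENNReal.ofReal |θn⁻¹| * ∫⁻ t in Ioi (0:ℝ), g (t / θn)) := by
              rw [mul_assoc]
          _ = ENNReal.ofReal θn * ∫⁻ t in Ioi (0:ℝ), g t := by rw [← step, smul_eq_mul]

lemma my_shift_single {α : Type*} (h : (Fin m → ℝ) × ℝ → α)
    (hp : ∀ (y : (Fin m → ℝ) × ℝ) (i : Fin m), h (y.1 + Pi.single i 1, y.2) = h y)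
    (t : ℝ) (i : Fin m) (n : ℤ) (x : Fin m → ℝ) :
    h (x + Pi.single i (n : ℝ), t) = h (x, t) := by
  induction n using Int.induction_on generalizing x with
  | zero => simp
  | succ n ih =>
      have e : x + Pi.single i (((n : ℤ) + 1 : ℤ) : ℝ)
          = (x + Pi.single i ((n : ℤ) : ℝ)) + Pi.single i 1 := by
        push_cast
        rw [add_assoc, ← Pi.single_add]
      rw [e]
      exact (hp (x + Pi.single i ((n : ℤ) : ℝ), t) i).trans (ih x)
  | pred n ih =>
      have e : (x + Pi.single i ((-(n : ℤ) - 1 : ℤ) : ℝ)) + Pi.single i 1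
          = x + Pi.single i ((-(n : ℤ) : ℤ) : ℝ) := by
        push_cast
        rw [add_assoc, ← Pi.single_add]
        ring_nf
      have this1 : h (x + Pi.single i ((-(n : ℤ) : ℤ) : ℝ), t)
          = h (x + Pi.single i ((-(n : ℤ) - 1 : ℤ) : ℝ), t) := by
        rw [← e]
        exact hp (x + Pi.single i ((-(n : ℤ) - 1 : ℤ) : ℝ), t) i
      rw [← this1]
      exact ih x

lemma my_shift_intvec {α : Type*} (h : (Fin m → ℝ) × ℝ → α)
    (hp : ∀ (y : (Fin m → ℝ) × ℝ) (i : Fin m), h (y.1 + Pi.single i 1, y.2) = h y)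
    (x : Fin m → ℝ) (t : ℝ) (k : Fin m → ℤ) :
    h (x + fun i => (k i : ℝ), t) = h (x, t) := by
  have hsum : (fun i => (k i : ℝ)) = ∑ i : Fin m, Pi.single i ((k i : ℝ)) := by
    rw [Finset.univ_sum_single]
  rw [hsum]
  have main : ∀ s : Finset (Fin m), h (x + ∑ i ∈ s, Pi.single i ((k i : ℝ)), t) = h (x, t) := by
    intro s
    induction s using Finset.induction_on with
    | empty => simp
    | @insert j s' hj ih =>
        have e : x + ∑ i ∈ insert j s', Pi.single i ((k i : ℝ))
            = (x + ∑ i ∈ s', Pi.single i ((k i : ℝ))) + Pi.single j ((k j : ℝ)) := by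
          rw [Finset.sum_insert hj]
          abel
        rw [e, my_shift_single h hp t j (k j), ih]
  exact main Finset.univ

/-- the inverse map of the substitution, as a linear map -/
def Lmap (m : ℕ) (θhat : Fin m → ℝ) (θn : ℝ) :
    ((Fin m → ℝ) × ℝ) →ₗ[ℝ] ((Fin m → ℝ) × ℝ) where
  toFun w := (w.1 + w.2 • θhat, θn * w.2)
  map_add' a b := by
    ext <;> simp [add_smul] <;> ring
  map_smul' r a := by
    ext <;> simp [smul_smul] <;> ring

lemma Lmap_T (θhat : Fin m → ℝ) {θn : ℝ} (hn : θn ≠ 0) (z : (Fin m → ℝ) × ℝ) :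
    Lmap m θhat θn (z.1 - (z.2 / θn) • θhat, z.2 / θn) = z := by
  simp only [Lmap, LinearMap.coe_mk, AddHom.coe_mk]
  ext
  · simp
  · simp [mul_div_cancel₀ _ hn]

lemma T_preimage_null (θhat : Fin m → ℝ) {θn : ℝ} (hn : θn ≠ 0)
    {E : Set ((Fin m → ℝ) × ℝ)} (hE : volume E = 0) :
    volume ((fun z : (Fin m → ℝ) × ℝ => (z.1 - (z.2 / θn) • θhat, z.2 / θn)) ⁻¹' E) = 0 := by
  haveI : ((volume : Measure ((Fin m → ℝ) × ℝ))).IsAddHaarMeasure := by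
    rw [Measure.volume_eq_prod]
    exact Measure.prod.instIsAddHaarMeasure _ _
  refine measure_mono_null (t := (Lmap m θhat θn) '' E) (fun z hz => ?_) ?_
  · exact (Set.mem_image _ _ _).mpr ⟨_, hz, Lmap_T θhat hn z⟩
  · rw [Measure.addHaar_image_linearMap, hE, mul_zero]

lemma hyper_null (i : Fin m) :
    (volume : Measure ((Fin m → ℝ) × ℝ)) {w | ∃ k : ℤ, w.1 i = (k : ℝ)} = 0 := by
  have h1 : {w : (Fin m → ℝ) × ℝ | ∃ k : ℤ, w.1 i = (k : ℝ)}
      = ((Function.eval i) ⁻¹' (Set.range ((↑) : ℤ → ℝ))) ×ˢ (univ : Set ℝ) := by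
    ext w
    simp [Function.eval, eq_comm, Set.mem_range]
  rw [h1, Measure.volume_eq_prod, Measure.prod_prod]
  have h2 : (volume : Measure (Fin m → ℝ))
      ((Function.eval i) ⁻¹' (Set.range ((↑) : ℤ → ℝ))) = 0 := by
    rw [volume_pi]
    exact Measure.pi_eval_preimage_null _ ((Set.countable_range _).measure_zero _)
  rw [h2, zero_mul]

lemma vadd_null {E : Set ((Fin m → ℝ) × ℝ)} (hE : volume E = 0)
    (v : (Fin m → ℝ) × ℝ) : volume (v +ᵥ E) = 0 := by
  haveI : ((volume : Measure ((Fin m → ℝ) × ℝ))).IsAddLeftInvariant := by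
    rw [Measure.volume_eq_prod]; infer_instance
  rw [measure_vadd]
  exact hE

end Aux

/-- **Norm of the oblique substitution.** Let `Ψ̃` be the periodic extension (1-periodic in
the first `n−1` variables) of `Ψ ∈ L²(Ω♯)` and let `θ = (θ̂, θₙ)` with `θₙ > 0`. Then
`Ψ_θ(y) := Ψ̃(s_θ(y), yₙ/θₙ)`, with `s_θ(y) = ŷ − (yₙ/θₙ)θ̂`, belongs to `L²(Ω♯)` and
`‖Ψ_θ‖_{L²(Ω♯)} = √θₙ · ‖Ψ‖_{L²(Ω♯)}`. -/
theorem stmt11 (m : ℕ) (θhat : Fin m → ℝ) (θn : ℝ) (hn : 0 < θn)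
    (Ψ : (Fin m → ℝ) × ℝ → ℂ)
    (hper : ∀ (y : (Fin m → ℝ) × ℝ) (i : Fin m), Ψ (y.1 + Pi.single i 1, y.2) = Ψ y)
    (hL2 : IntegrableOn (fun y => ‖Ψ y‖ ^ 2) (OmegaSharp m)) :
    IntegrableOn
        (fun y : (Fin m → ℝ) × ℝ => ‖Ψ (y.1 - (y.2 / θn) • θhat, y.2 / θn)‖ ^ 2)
        (OmegaSharp m) ∧
    Real.sqrt (∫ y in OmegaSharp m, ‖Ψ (y.1 - (y.2 / θn) • θhat, y.2 / θn)‖ ^ 2)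
      = Real.sqrt θn * Real.sqrt (∫ y in OmegaSharp m, ‖Ψ y‖ ^ 2) := by
  classical
  open Set in
  open scoped Pointwise ENNReal in
  set f : (Fin m → ℝ) × ℝ → ℝ := fun y => ‖Ψ y‖ ^ 2 with hf
  have hfnn : ∀ y, 0 ≤ f y := fun y => pow_nonneg (norm_nonneg _) 2
  have hfper : ∀ (y : (Fin m → ℝ) × ℝ) (i : Fin m), f (y.1 + Pi.single i 1, y.2) = f y := by
    intro y i
    simp only [hf]
    rw [hper]
  set T : (Fin m → ℝ) × ℝ → (Fin m → ℝ) × ℝ :=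
    fun z => (z.1 - (z.2 / θn) • θhat, z.2 / θn) with hT
  have hTm : Measurable T := by
    apply Measurable.prodMk
    · exact measurable_fst.sub ((measurable_snd.div_const θn).smul_const θhat)
    · exact measurable_snd.div_const θn
  set μ := (volume : Measure ((Fin m → ℝ) × ℝ)).restrict (OmegaSharp m) with hμ
  have hgoal_eq : (fun y : (Fin m → ℝ) × ℝ => ‖Ψ (y.1 - (y.2 / θn) • θhat, y.2 / θn)‖ ^ 2)
      = fun y => f (T y) := rfl
  -- measurable representative
  have hfaesm : AEStronglyMeasurable f μ := hL2.1
  set u : (Fin m → ℝ) × ℝ → ℝ := hfaesm.mk f with hu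
  have humm : Measurable u := hfaesm.stronglyMeasurable_mk.measurable
  have hfu : f =ᵐ[μ] u := hfaesm.ae_eq_mk
  set N : Set ((Fin m → ℝ) × ℝ) := {z | f z ≠ u z} ∩ OmegaSharp m with hNdef
  have hN : volume N = 0 := by
    have h1 : ∀ᵐ z ∂μ, f z = u z := hfu
    rw [hμ, ae_restrict_iff' (OmegaSharp_measurable m), ae_iff] at h1
    refine measure_mono_null (fun z hz => ?_) h1
    rw [hNdef] at hz
    intro hcon
    exact hz.1 (hcon hz.2)
  -- the periodized measurable function
  set R : (Fin m → ℝ) → (Fin m → ℝ) := fun x i => Int.fract (x i) with hR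
  have hRm : Measurable R :=
    measurable_pi_lambda _ fun i => measurable_fract.comp (measurable_pi_apply i)
  set φ : (Fin m → ℝ) × ℝ → ℝ≥0∞ := fun z => ENNReal.ofReal (u (R z.1, z.2)) with hφdef
  have hφm : Measurable φ :=
    ENNReal.measurable_ofReal.comp
      (humm.comp ((hRm.comp measurable_fst).prodMk measurable_snd))
  have hφper : ∀ (x : Fin m → ℝ) (t : ℝ) (k : Fin m → ℤ),
      φ (x + fun i => (k i : ℝ), t) = φ (x, t) := by
    intro x t k
    show ENNReal.ofReal (u (R (x + fun i => (k i : ℝ)), t)) = ENNReal.ofReal (u (R x, t))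
    have hRk : R (x + fun i => (k i : ℝ)) = R x := by
      funext i
      simp only [hR, Pi.add_apply]
      exact Int.fract_add_intCast (x i) (k i)
    rw [hRk]
  have hfshift : ∀ (x : Fin m → ℝ) (t : ℝ) (k : Fin m → ℤ),
      f (x + fun i => (k i : ℝ), t) = f (x, t) := my_shift_intvec f hfper
  -- Claim A : φ = ofReal ∘ f  a.e. on Ω♯
  have hA : ∀ᵐ z ∂μ, φ z = ENNReal.ofReal (f z) := by
    have h2 : ∀ᵐ z ∂μ, z ∈ OmegaSharp m := ae_restrict_mem (OmegaSharp_measurable m)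
    filter_upwards [hfu, h2] with z h1 hz
    have hRz : R z.1 = z.1 := funext fun i => Int.fract_eq_self.mpr ⟨(hz.1 i).1.le, (hz.1 i).2⟩
    simp only [hφdef, hRz]
    rw [← h1]
  -- Claim B : φ ∘ T = ofReal ∘ f ∘ T  a.e. on Ω♯
  have hB : ∀ᵐ z ∂μ, φ (T z) = ENNReal.ofReal (f (T z)) := by
    set bad1 : Set ((Fin m → ℝ) × ℝ) :=
      T ⁻¹' (⋃ i, {w : (Fin m → ℝ) × ℝ | ∃ k : ℤ, w.1 i = (k : ℝ)}) with hbad1def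
    set bad2 : Set ((Fin m → ℝ) × ℝ) :=
      ⋃ k : Fin m → ℤ, T ⁻¹' (((fun i => (k i : ℝ)), (0:ℝ)) +ᵥ N) with hbad2def
    have hbad1 : volume bad1 = 0 :=
      T_preimage_null θhat hn.ne' (measure_iUnion_null fun i => hyper_null i)
    have hbad2 : volume bad2 = 0 :=
      measure_iUnion_null fun k => T_preimage_null θhat hn.ne' (vadd_null hN _)
    have hg1 : ∀ᵐ z ∂μ, z ∉ bad1 :=
      ae_restrict_of_ae (measure_eq_zero_iff_ae_notMem.mp hbad1)
    have hg2 : ∀ᵐ z ∂μ, z ∉ bad2 :=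
      ae_restrict_of_ae (measure_eq_zero_iff_ae_notMem.mp hbad2)
    filter_upwards [ae_restrict_mem (OmegaSharp_measurable m), hg1, hg2] with z hz hz1 hz2
    set w : (Fin m → ℝ) × ℝ := T z with hw
    have hw2 : 0 < w.2 := div_pos hz.2 hn
    have hnint : ∀ i, ¬∃ k : ℤ, w.1 i = (k : ℝ) := by
      intro i hcon
      exact hz1 (Set.mem_iUnion.mpr ⟨i, hcon⟩)
    set kk : Fin m → ℤ := fun i => ⌊w.1 i⌋ with hkk
    have hWΩ : ((R w.1, w.2) : (Fin m → ℝ) × ℝ) ∈ OmegaSharp m := by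
      constructor
      · intro i
        refine ⟨lt_of_le_of_ne (Int.fract_nonneg _) ?_, Int.fract_lt_one _⟩
        intro hcon
        apply hnint i
        refine ⟨⌊w.1 i⌋, ?_⟩
        have := Int.floor_add_fract (w.1 i)
        rw [show Int.fract (w.1 i) = 0 from hcon.symm] at this
        simpa using this.symm
      · exact hw2
    have hsum : (R w.1 + fun i => ((kk i : ℤ) : ℝ)) = w.1 := by
      funext i
      simp only [hR, Pi.add_apply, hkk]
      rw [add_comm]
      exact Int.floor_add_fract (w.1 i)
    have hne : ((R w.1, w.2) : (Fin m → ℝ) × ℝ) ∉ N := by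
      intro hmem
      apply hz2
      rw [hbad2def, Set.mem_iUnion]
      refine ⟨kk, ?_⟩
      show T z ∈ ((fun i => ((kk i : ℤ) : ℝ)), (0:ℝ)) +ᵥ N
      rw [Set.mem_vadd_set]
      refine ⟨(R w.1, w.2), hmem, ?_⟩
      show ((fun i => ((kk i : ℤ) : ℝ)), (0:ℝ)) + (R w.1, w.2) = T z
      rw [← hw, Prod.mk_add_mk, Prod.ext_iff]
      refine ⟨?_, zero_add _⟩
      show (fun i => ((kk i : ℤ) : ℝ)) + R w.1 = w.1
      rw [add_comm]
      exact hsum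
    have huf : u (R w.1, w.2) = f (R w.1, w.2) := by
      by_contra hcon
      exact hne ⟨fun h => hcon h.symm, hWΩ⟩
    have hfw : f (R w.1, w.2) = f w := by
      have h3 := hfshift (R w.1) w.2 kk
      rw [hsum] at h3
      exact h3.symm
    show φ (T z) = ENNReal.ofReal (f (T z))
    rw [← hw]
    simp only [hφdef]
    rw [huf, hfw]
  -- finiteness
  have hI : ∫⁻ z, ENNReal.ofReal (f z) ∂μ < ⊤ := by
    have h1 := hL2.2
    rw [hasFiniteIntegral_iff_norm] at h1
    have h2 : ∀ z, ENNReal.ofReal ‖f z‖ = ENNReal.ofReal (f z) := fun z => by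
      rw [Real.norm_of_nonneg (hfnn z)]
    calc ∫⁻ z, ENNReal.ofReal (f z) ∂μ = ∫⁻ z, ENNReal.ofReal ‖f z‖ ∂μ :=
          lintegral_congr fun z => (h2 z).symm
      _ < ⊤ := h1
  have hφI : ∫⁻ z, φ z ∂μ = ∫⁻ z, ENNReal.ofReal (f z) ∂μ := lintegral_congr_ae hA
  have hcore := my_core θhat hn φ hφm hφper
  have hBI : ∫⁻ z, ENNReal.ofReal (f (T z)) ∂μ
      = ENNReal.ofReal θn * ∫⁻ z, ENNReal.ofReal (f z) ∂μ := by
    rw [← lintegral_congr_ae hB, ← hφI]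
    exact hcore
  have hBfin : ∫⁻ z, ENNReal.ofReal (f (T z)) ∂μ < ⊤ := by
    rw [hBI]
    exact ENNReal.mul_lt_top ENNReal.ofReal_lt_top hI
  -- a.e. strong measurability of f ∘ T
  have haesmT : AEStronglyMeasurable (fun z => f (T z)) μ := by
    refine AEStronglyMeasurable.congr (f := fun z => (φ (T z)).toReal)
      (Measurable.aestronglyMeasurable
        (ENNReal.measurable_toReal.comp (hφm.comp hTm))) ?_
    filter_upwards [hB] with z h1
    show (φ (T z)).toReal = f (T z)
    rw [h1, ENNReal.toReal_ofReal (hfnn _)]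
  have hint : IntegrableOn (fun y : (Fin m → ℝ) × ℝ =>
      ‖Ψ (y.1 - (y.2 / θn) • θhat, y.2 / θn)‖ ^ 2) (OmegaSharp m) := by
    rw [hgoal_eq]
    refine ⟨haesmT, ?_⟩
    rw [hasFiniteIntegral_iff_norm]
    calc ∫⁻ z, ENNReal.ofReal ‖f (T z)‖ ∂μ
        = ∫⁻ z, ENNReal.ofReal (f (T z)) ∂μ :=
          lintegral_congr fun z => by rw [Real.norm_of_nonneg (hfnn _)]
      _ < ⊤ := hBfin
  refine ⟨hint, ?_⟩
  have e1 : ∫ y in OmegaSharp m, ‖Ψ (y.1 - (y.2 / θn) • θhat, y.2 / θn)‖ ^ 2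
      = (∫⁻ z, ENNReal.ofReal (f (T z)) ∂μ).toReal := by
    rw [show (fun y : (Fin m → ℝ) × ℝ => ‖Ψ (y.1 - (y.2 / θn) • θhat, y.2 / θn)‖ ^ 2)
      = fun y => f (T y) from rfl]
    exact integral_eq_lintegral_of_nonneg_ae (ae_of_all _ fun z => hfnn (T z)) haesmT
  have e2 : ∫ y in OmegaSharp m, ‖Ψ y‖ ^ 2 = (∫⁻ z, ENNReal.ofReal (f z) ∂μ).toReal :=
    integral_eq_lintegral_of_nonneg_ae (ae_of_all _ fun z => hfnn z) hfaesm
  rw [e1, e2, hBI, ENNReal.toReal_mul, ENNReal.toReal_ofReal hn.le]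
  exact Real.sqrt_mul hn.le _
end

section
/- Let μ, ρ : ℝⁿ → ℝ be continuous, 1-periodic in each variable, with positive lower and upper bounds, let θ ∈ ℝⁿ have positive entries, and Im ω > 0. For s ∈ ℝ^{n-1}, let u⁺_s ∈ H¹(0, ∞) be the unique solution of −(μ_s u')' − ρ_s ω² u = 0 on (0,∞) with u(0) = 1, where μ_s(x) = μ((s,0) + xθ) and ρ_s(x) = ρ((s,0) + xθ). Then there exists c > 0 such that for all s₁, s₂ ∈ ℝ^{n-1}, ‖u⁺_{s₁} − u⁺_{s₂}‖_{H¹(0,∞)} ≤ c (‖μ_{s₂} − μ_{s₁}‖_∞ + ‖ρ_{s₂} − ρ_{s₁}‖_∞); consequently s ↦ u⁺_s is uniformly continuous from ℝ^{n-1} to H¹(0, ∞), and it is 1-periodic in each component of s. -/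
open MeasureTheory Complex Set Filter


/-- Cauchy–Schwarz on a set, elementary version. -/
lemma aux_cs {f g : ℝ → ℝ} {S : Set ℝ} (hS : MeasurableSet S)
    (hmf : AEStronglyMeasurable f (volume.restrict S))
    (hmg : AEStronglyMeasurable g (volume.restrict S))
    (hf0 : ∀ x, 0 ≤ f x) (hg0 : ∀ x, 0 ≤ g x)
    (hf : IntegrableOn (fun x => f x ^ 2) S) (hg : IntegrableOn (fun x => g x ^ 2) S) :
    IntegrableOn (fun x => f x * g x) S ∧
      ∫ x in S, f x * g x ≤ Real.sqrt (∫ x in S, f x ^ 2) * Real.sqrt (∫ x in S, g x ^ 2) := by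
  have hint : IntegrableOn (fun x => f x * g x) S := by
    refine Integrable.mono' (((hf.add hg)).div_const 2) (hmf.mul hmg) ?_
    refine Filter.Eventually.of_forall fun x => ?_
    have h1 := hf0 x; have h2 := hg0 x
    rw [Real.norm_of_nonneg (mul_nonneg h1 h2)]
    simp only [Pi.add_apply]
    nlinarith [sq_nonneg (f x - g x)]
  refine ⟨hint, ?_⟩
  set A := ∫ x in S, f x ^ 2 with hA
  set B := ∫ x in S, g x ^ 2 with hB
  have hA0 : 0 ≤ A := integral_nonneg fun x => sq_nonneg _
  have hB0 : 0 ≤ B := integral_nonneg fun x => sq_nonneg _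
  rcases eq_or_lt_of_le hA0 with hAz | hApos
  · have : (fun x => f x ^ 2) =ᵐ[volume.restrict S] 0 := by
      rw [← integral_eq_zero_iff_of_nonneg (fun x => sq_nonneg (f x)) hf]
      exact hAz.symm
    have hfz : f =ᵐ[volume.restrict S] 0 := this.mono fun x hx => by
      simpa [pow_eq_zero_iff] using hx
    have : ∫ x in S, f x * g x = 0 := by
      rw [integral_eq_zero_iff_of_nonneg (fun x => mul_nonneg (hf0 x) (hg0 x)) hint]
      exact (hfz.mono fun x hx => by simp [Pi.zero_apply] at hx ⊢; simp [hx])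
    rw [this, ← hAz]
    positivity
  rcases eq_or_lt_of_le hB0 with hBz | hBpos
  · have : (fun x => g x ^ 2) =ᵐ[volume.restrict S] 0 := by
      rw [← integral_eq_zero_iff_of_nonneg (fun x => sq_nonneg (g x)) hg]
      exact hBz.symm
    have hgz : g =ᵐ[volume.restrict S] 0 := this.mono fun x hx => by
      simpa [pow_eq_zero_iff] using hx
    have : ∫ x in S, f x * g x = 0 := by
      rw [integral_eq_zero_iff_of_nonneg (fun x => mul_nonneg (hf0 x) (hg0 x)) hint]
      exact (hgz.mono fun x hx => by simp [Pi.zero_apply] at hx ⊢; simp [hx])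
    rw [this, ← hBz]
    positivity
  · set t := Real.sqrt B / Real.sqrt A with ht
    have hsA : 0 < Real.sqrt A := Real.sqrt_pos.2 hApos
    have hsB : 0 < Real.sqrt B := Real.sqrt_pos.2 hBpos
    have htpos : 0 < t := div_pos hsB hsA
    have key : ∫ x in S, f x * g x ≤ ∫ x in S, (t * f x ^ 2 + g x ^ 2 / t) / 2 := by
      refine integral_mono hint ?_ fun x => ?_
      · exact ((hf.const_mul t).add (hg.div_const t)).div_const 2
      · have h1 := hf0 x; have h2 := hg0 x
        rw [show (t * f x ^ 2 + g x ^ 2 / t)/2 = (t^2*f x^2 + g x^2)/(2*t) by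
          field_simp, le_div_iff₀ (by positivity)]
        nlinarith [sq_nonneg (t * f x - g x)]
    have hval : ∫ x in S, (t * f x ^ 2 + g x ^ 2 / t) / 2
        = Real.sqrt A * Real.sqrt B := by
      rw [integral_div, integral_add (hf.const_mul t) (hg.div_const t),
        integral_const_mul, integral_div]
      rw [← hA, ← hB]
      have e1 : t * A = Real.sqrt A * Real.sqrt B := by
        rw [ht]; field_simp
        nlinarith [Real.sq_sqrt hA0, Real.sq_sqrt hB0, hsA, hsB]
      have e2 : B / t = Real.sqrt A * Real.sqrt B := by
        rw [ht]; field_simp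
        nlinarith [Real.sq_sqrt hA0, Real.sq_sqrt hB0, hsA, hsB]
      rw [e1, e2]; ring
    linarith [key, hval.le, hval.ge]


/-- A nonnegative integrable function on `(0,∞)` takes arbitrarily small values
arbitrarily far out. -/
lemma aux_escape {h : ℝ → ℝ} (h0 : ∀ x, 0 ≤ h x)
    (hint : IntegrableOn h (Ioi (0:ℝ))) (ε R₀ : ℝ) (hε : 0 < ε) :
    ∃ R, R₀ < R ∧ 0 < R ∧ h R < ε := by
  by_contra hcon
  push_neg at hcon
  set M := max R₀ 0 with hM
  have hbig : ∀ x, M < x → ε ≤ h x := fun x hx =>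
    hcon x (lt_of_le_of_lt (le_max_left _ _) hx) (lt_of_le_of_lt (le_max_right _ _) hx)
  have hsub : Ioi M ⊆ Ioi (0:ℝ) := fun x hx => show (0:ℝ) < x from lt_of_le_of_lt (le_max_right _ _) hx
  have hint' : IntegrableOn h (Ioi M) := hint.mono_set hsub
  have hconst : IntegrableOn (fun _ => ε) (Ioi M) := by
    refine Integrable.mono' hint' aestronglyMeasurable_const ?_
    filter_upwards [ae_restrict_mem measurableSet_Ioi] with x hx
    rw [Real.norm_of_nonneg hε.le]
    exact hbig x hx
  rw [integrableOn_const_iff] at hconst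
  rcases hconst with h1 | h2
  · exact hε.ne' (by simpa using h1)
  · simp [Real.volume_Ioi] at h2

/-- limit lemma: interval integrals bounded implies improper integral bounded. -/
lemma aux_limit {f : ℝ → ℝ} {C : ℝ} (hint : IntegrableOn f (Ioi (0:ℝ)))
    (hb : ∀ n : ℕ, ∫ x in (0:ℝ)..(n:ℝ), f x ≤ C) :
    ∫ x in Ioi (0:ℝ), f x ≤ C := by
  have := intervalIntegral_tendsto_integral_Ioi (0:ℝ) hint tendsto_natCast_atTop_atTop (b := fun n : ℕ => (n:ℝ))
  exact le_of_tendsto this (Eventually.of_forall hb)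

/-- integration by parts / FTC identity used for the energy identity. -/
lemma aux_ibp {W g vc vd : ℝ → ℂ} {R : ℝ} (hR : 0 ≤ R)
    (hW : ∀ x, 0 ≤ x → HasDerivAt W (g x) x) (hv : ∀ x, HasDerivAt vc (vd x) x)
    (hgc : ContinuousOn g (Set.Icc 0 R)) (hvdc : Continuous vd) :
    ∫ x in (0:ℝ)..R, (g x * (starRingEnd ℂ) (vc x) + W x * (starRingEnd ℂ) (vd x))
      = W R * (starRingEnd ℂ) (vc R) - W 0 * (starRingEnd ℂ) (vc 0) := by
  have hWc : ContinuousOn W (Set.Icc 0 R) := fun x hx =>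
    ((hW x hx.1).continuousAt).continuousWithinAt
  have hvcc : Continuous vc :=
    continuous_iff_continuousAt.2 fun x => (hv x).continuousAt
  have hF : ∀ x ∈ Set.uIcc (0:ℝ) R,
      HasDerivAt (fun t => W t * (starRingEnd ℂ) (vc t))
        (g x * (starRingEnd ℂ) (vc x) + W x * (starRingEnd ℂ) (vd x)) x := by
    intro x hx
    rw [Set.uIcc_of_le hR] at hx
    exact (hW x hx.1).mul ((hv x).star)
  have hcont : ContinuousOn
      (fun x => g x * (starRingEnd ℂ) (vc x) + W x * (starRingEnd ℂ) (vd x))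
      (Set.uIcc 0 R) := by
    rw [Set.uIcc_of_le hR]
    exact (hgc.mul ((continuous_star.comp hvcc).continuousOn)).add
      (hWc.mul ((continuous_star.comp hvdc).continuousOn))
  have := intervalIntegral.integral_eq_sub_of_hasDerivAt hF hcont.intervalIntegrable
  simpa using this


lemma aux_zero_of_ae {v : ℝ → ℂ} (hc : Continuous v)
    (h : ∀ᵐ x ∂(volume.restrict (Ioi (0:ℝ))), v x = 0) :
    ∀ x : ℝ, 0 < x → v x = 0 := by
  intro x₀ hx₀
  by_contra hne
  have hopen : IsOpen {x : ℝ | v x ≠ 0} := isOpen_compl_iff.2 (isClosed_singleton.preimage hc)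
  have hU : IsOpen ({x : ℝ | v x ≠ 0} ∩ Ioi 0) := hopen.inter isOpen_Ioi
  have hx₀U : x₀ ∈ {x : ℝ | v x ≠ 0} ∩ Ioi 0 := ⟨hne, hx₀⟩
  have hpos : 0 < volume ({x : ℝ | v x ≠ 0} ∩ Ioi 0) :=
    hU.measure_pos volume ⟨x₀, hx₀U⟩
  have hnull : volume ({x : ℝ | v x ≠ 0} ∩ Ioi 0) = 0 := by
    have := (ae_restrict_iff' measurableSet_Ioi).1 h
    rw [ae_iff] at this
    refine measure_mono_null ?_ this
    intro y hy
    simp only [mem_setOf_eq, Classical.not_imp]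
    exact ⟨hy.2, hy.1⟩
  rw [hnull] at hpos
  exact lt_irrefl _ hpos

/-- Invariance of a function under integer translations, from unit translations. -/
lemma aux_int_per {m : ℕ} {μ : (Fin m → ℝ) × ℝ → ℝ}
    (hμper : ∀ (y : (Fin m → ℝ) × ℝ) (i : Fin m), μ (y.1 + Pi.single i 1, y.2) = μ y)
    (hμpern : ∀ y : (Fin m → ℝ) × ℝ, μ (y.1, y.2 + 1) = μ y) :
    ∀ (k : Fin m → ℤ) (kn : ℤ) (y : (Fin m → ℝ) × ℝ),
      μ (y.1 + fun i => (k i : ℝ), y.2 + kn) = μ y := by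
  -- single coordinate, integer shift
  have h1 : ∀ (i : Fin m) (n : ℤ) (y : (Fin m → ℝ) × ℝ),
      μ (y.1 + Pi.single i (n : ℝ), y.2) = μ y := by
    intro i n y
    have hper : Function.Periodic (fun t : ℝ => μ (y.1 + Pi.single i t, y.2)) 1 := by
      intro t
      have : y.1 + Pi.single i (t + 1) = (y.1 + Pi.single i t) + Pi.single i 1 := by
        rw [Pi.single_add]; abel
      simp only [this]
      exact hμper (y.1 + Pi.single i t, y.2) i
    have := (hper.zsmul n) 0
    simpa using this
  have h2 : ∀ (n : ℤ) (y : (Fin m → ℝ) × ℝ), μ (y.1, y.2 + n) = μ y := by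
    intro n y
    have hper : Function.Periodic (fun t : ℝ => μ (y.1, t)) 1 := fun t => hμpern (y.1, t)
    have := (hper.zsmul n) y.2
    simpa using this
  intro k kn y
  have hsum : ∀ (F : Finset (Fin m)) (z : Fin m → ℝ) (t : ℝ),
      μ (z + ∑ i ∈ F, Pi.single i ((k i : ℝ)), t) = μ (z, t) := by
    intro F
    induction F using Finset.induction_on with
    | empty => intro z t; simp
    | insert a F' hnotmem ih =>
        intro z t
        rw [Finset.sum_insert hnotmem]
        have : z + (Pi.single a ((k a : ℝ)) + ∑ i ∈ F', Pi.single i ((k i : ℝ)))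
            = (z + ∑ i ∈ F', Pi.single i ((k i : ℝ))) + Pi.single a ((k a : ℝ)) := by abel
        rw [this]
        rw [h1 a (k a) ((z + ∑ i ∈ F', Pi.single i ((k i : ℝ))), t)]
        exact ih z t
  have hks : (fun i => (k i : ℝ)) = ∑ i ∈ Finset.univ, Pi.single i ((k i : ℝ)) := by
    ext j
    rw [Finset.sum_apply]
    simp [Pi.single_apply]
  calc μ (y.1 + fun i => (k i : ℝ), y.2 + kn)
      = μ (y.1 + fun i => (k i : ℝ), y.2) := h2 kn (y.1 + fun i => (k i : ℝ), y.2)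
    _ = μ y := by rw [hks]; exact hsum Finset.univ y.1 y.2


lemma aux_int_per' {m : ℕ} {μ : (Fin m → ℝ) × ℝ → ℝ}
    (h : ∀ (k : Fin m → ℤ) (kn : ℤ) (y : (Fin m → ℝ) × ℝ),
      μ (y.1 + fun i => (k i : ℝ), y.2 + kn) = μ y) (y : (Fin m → ℝ) × ℝ) : True := trivial

lemma aux_unif_cont {m : ℕ} {μ : (Fin m → ℝ) × ℝ → ℝ} (hμc : Continuous μ)
    (hint : ∀ (k : Fin m → ℤ) (kn : ℤ) (y : (Fin m → ℝ) × ℝ),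
      μ (y.1 + fun i => (k i : ℝ), y.2 + kn) = μ y) :
    ∀ ε > (0:ℝ), ∃ δ > (0:ℝ), ∀ y z : (Fin m → ℝ) × ℝ, dist y z < δ → |μ y - μ z| < ε := by
  intro ε hε
  have hK : IsCompact (Metric.closedBall (0 : (Fin m → ℝ) × ℝ) 3) := isCompact_closedBall _ _
  have hUC : UniformContinuousOn μ (Metric.closedBall 0 3) :=
    hK.uniformContinuousOn_of_continuous hμc.continuousOn
  rw [Metric.uniformContinuousOn_iff] at hUC
  obtain ⟨δ', hδ', hUC⟩ := hUC ε hε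
  refine ⟨min δ' 1, lt_min hδ' one_pos, fun y z hyz => ?_⟩
  have hyz1 : dist y z < 1 := lt_of_lt_of_le hyz (min_le_right _ _)
  have hyzδ : dist y z < δ' := lt_of_lt_of_le hyz (min_le_left _ _)
  set k : Fin m → ℤ := fun i => -⌊z.1 i⌋ with hk
  set kn : ℤ := -⌊z.2⌋ with hkn
  set t : (Fin m → ℝ) × ℝ := ((fun i => (k i : ℝ)), (kn : ℝ)) with ht
  have hμy : μ (y + t) = μ y := hint k kn y
  have hμz : μ (z + t) = μ z := hint k kn z
  have hdist : dist (y + t) (z + t) = dist y z := dist_add_right y z t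
  -- z + t has all coordinates in [0,1)
  have hznorm : ‖z + t‖ ≤ 1 := by
    rw [Prod.norm_def]
    refine max_le ?_ ?_
    · refine (pi_norm_le_iff_of_nonneg one_pos.le).2 fun i => ?_
      have : (z.1 + fun i => (k i : ℝ)) i = Int.fract (z.1 i) := by
        simp [hk, Int.fract, sub_eq_add_neg]
      rw [show (z + t).1 = z.1 + fun i => (k i : ℝ) from rfl, this,
        Real.norm_of_nonneg (Int.fract_nonneg _)]
      exact (Int.fract_lt_one _).le
    · rw [show (z + t).2 = z.2 + (kn : ℝ) from rfl, hkn]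
      push_cast
      rw [show z.2 + -(⌊z.2⌋ : ℝ) = Int.fract z.2 by rw [Int.fract]; ring,
        Real.norm_of_nonneg (Int.fract_nonneg _)]
      exact (Int.fract_lt_one _).le
  have hzball : z + t ∈ Metric.closedBall (0 : (Fin m → ℝ) × ℝ) 3 := by
    rw [Metric.mem_closedBall, dist_zero_right]
    linarith
  have hyball : y + t ∈ Metric.closedBall (0 : (Fin m → ℝ) × ℝ) 3 := by
    rw [Metric.mem_closedBall, dist_zero_right]
    calc ‖y + t‖ ≤ ‖z + t‖ + dist (y + t) (z + t) := by
          rw [dist_eq_norm]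
          have := norm_add_le (z + t) ((y + t) - (z + t))
          have he : z + t + (y + t - (z + t)) = y + t := by abel
          have he2 : y + t - (z + t) = y - z := by abel
          rw [he] at this
          rw [he2] at this ⊢
          exact this
      _ ≤ 1 + 1 := by rw [hdist]; exact add_le_add hznorm hyz1.le
      _ ≤ 3 := by norm_num
  have := hUC _ hyball _ hzball (by rw [hdist]; exact hyzδ)
  rw [Real.dist_eq] at this
  rw [← hμy, ← hμz]
  exact this


lemma aux_Ivc {f g : ℝ → ℂ} (hfc : Continuous f) (hgc : Continuous g)
    (hf : IntegrableOn (fun x => ‖f x‖ ^ 2) (Set.Ioi 0))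
    (hg : IntegrableOn (fun x => ‖g x‖ ^ 2) (Set.Ioi 0)) :
    IntegrableOn (fun x => ‖f x - g x‖ ^ 2) (Set.Ioi 0) := by
  refine Integrable.mono' ((hf.add hg).const_mul 2)
    (((hfc.sub hgc).norm.pow 2).aestronglyMeasurable) ?_
  filter_upwards with x
  rw [Real.norm_of_nonneg (sq_nonneg _)]
  have h1 : ‖f x - g x‖ ≤ ‖f x‖ + ‖g x‖ := norm_sub_le _ _
  simp only [Pi.add_apply]
  nlinarith [norm_nonneg (f x), norm_nonneg (g x), norm_nonneg (f x - g x),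
    sq_nonneg (‖f x‖ - ‖g x‖), mul_self_le_mul_self (norm_nonneg (f x - g x)) h1]

set_option maxHeartbeats 1000000 in
lemma aux_master {ω : ℂ} (hω : 0 < ω.im) {μm μp ρm : ℝ} (hμm : 0 < μm) (hρm : 0 < ρm)
    {a1 a2 b1 b2 : ℝ → ℝ} (ha1c : Continuous a1) (ha2c : Continuous a2)
    (hb1c : Continuous b1) (hb2c : Continuous b2)
    (ha1m : ∀ x, μm ≤ a1 x) (ha1p : ∀ x, a1 x ≤ μp) (hb1m : ∀ x, ρm ≤ b1 x)
    {u1 u2 d1 d2 W1 W2 : ℝ → ℂ}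
    (hu1d : ∀ x, HasDerivAt u1 (d1 x) x) (hu2d : ∀ x, HasDerivAt u2 (d2 x) x)
    (hd1c : Continuous d1) (hd2c : Continuous d2)
    (hW1 : ∀ x, W1 x = (a1 x : ℂ) * d1 x) (hW2 : ∀ x, W2 x = (a2 x : ℂ) * d2 x)
    (hW1d : ∀ x, 0 ≤ x → HasDerivAt W1 (-(b1 x : ℂ) * ω ^ 2 * u1 x) x)
    (hW2d : ∀ x, 0 ≤ x → HasDerivAt W2 (-(b2 x : ℂ) * ω ^ 2 * u2 x) x)
    (hIu2 : IntegrableOn (fun x => ‖u2 x‖ ^ 2) (Ioi 0))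
    (hId2 : IntegrableOn (fun x => ‖d2 x‖ ^ 2) (Ioi 0))
    (hIvc : IntegrableOn (fun x => ‖u1 x - u2 x‖ ^ 2) (Ioi 0))
    (hIvd : IntegrableOn (fun x => ‖d1 x - d2 x‖ ^ 2) (Ioi 0))
    {δa δb : ℝ}
    (hδa : ∀ x, 0 ≤ x → |a1 x - a2 x| ≤ δa) (hδb : ∀ x, 0 ≤ x → |b1 x - b2 x| ≤ δb) :
    ω.im * (μm * ∫ x in Ioi (0:ℝ), ‖d1 x - d2 x‖ ^ 2)
      + ω.im * ((ω.re ^ 2 + ω.im ^ 2) * (ρm * ∫ x in Ioi (0:ℝ), ‖u1 x - u2 x‖ ^ 2))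
      ≤ ‖ω‖ * (‖W1 0 - W2 0‖ * ‖u1 0 - u2 0‖
        + δa * Real.sqrt (∫ x in Ioi (0:ℝ), ‖d2 x‖ ^ 2)
            * Real.sqrt (∫ x in Ioi (0:ℝ), ‖d1 x - d2 x‖ ^ 2)
        + (ω.re ^ 2 + ω.im ^ 2) * δb * Real.sqrt (∫ x in Ioi (0:ℝ), ‖u2 x‖ ^ 2)
            * Real.sqrt (∫ x in Ioi (0:ℝ), ‖u1 x - u2 x‖ ^ 2)) := by
  set K : ℝ := ω.re ^ 2 + ω.im ^ 2 with hKdef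
  have hωne : ω ≠ 0 := fun h => by simp [h] at hω
  have habsω : 0 < ‖ω‖ := norm_pos_iff.mpr hωne
  have hKabs : K = ‖ω‖ ^ 2 := by
    rw [Complex.sq_norm, Complex.normSq_apply]; ring
  have hKpos : 0 < K := by rw [hKabs]; positivity
  have hδa0 : 0 ≤ δa := le_trans (abs_nonneg _) (hδa 0 le_rfl)
  have hδb0 : 0 ≤ δb := le_trans (abs_nonneg _) (hδb 0 le_rfl)
  have hμp0 : 0 ≤ μp := le_trans hμm.le (le_trans (ha1m 0) (ha1p 0))
  -- continuity facts
  have hu1c : Continuous u1 := continuous_iff_continuousAt.2 fun x => (hu1d x).continuousAt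
  have hu2c : Continuous u2 := continuous_iff_continuousAt.2 fun x => (hu2d x).continuousAt
  set vc : ℝ → ℂ := fun x => u1 x - u2 x with hvc
  set vd : ℝ → ℂ := fun x => d1 x - d2 x with hvd
  have hvcc : Continuous vc := hu1c.sub hu2c
  have hvdc : Continuous vd := hd1c.sub hd2c
  set Wd : ℝ → ℂ := fun x => W1 x - W2 x with hWd
  have hWdx : ∀ x, Wd x = (a1 x : ℂ) * vd x + ((a1 x - a2 x : ℝ) : ℂ) * d2 x := by
    intro x
    simp only [hWd, hW1 x, hW2 x, hvd]
    push_cast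
    ring
  have hWdc : ContinuousOn Wd (Ici 0) := by
    intro x hx
    exact (((hW1d x hx).sub (hW2d x hx)).continuousAt).continuousWithinAt
  -- L² quantities
  set Dd2 : ℝ := ∫ x in Ioi (0:ℝ), ‖d2 x‖ ^ 2 with hDd2
  set Du2 : ℝ := ∫ x in Ioi (0:ℝ), ‖u2 x‖ ^ 2 with hDu2
  set Dvd : ℝ := ∫ x in Ioi (0:ℝ), ‖vd x‖ ^ 2 with hDvd
  set Dvc : ℝ := ∫ x in Ioi (0:ℝ), ‖vc x‖ ^ 2 with hDvc
  -- Cauchy-Schwarz facts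
  have cs1 := aux_cs (f := fun x => ‖d2 x‖) (g := fun x => ‖vd x‖) measurableSet_Ioi
    (hd2c.norm.aestronglyMeasurable) (hvdc.norm.aestronglyMeasurable)
    (fun x => norm_nonneg _) (fun x => norm_nonneg _) hId2 hIvd
  have cs2 := aux_cs (f := fun x => ‖u2 x‖) (g := fun x => ‖vc x‖) measurableSet_Ioi
    (hu2c.norm.aestronglyMeasurable) (hvcc.norm.aestronglyMeasurable)
    (fun x => norm_nonneg _) (fun x => norm_nonneg _) hIu2 hIvc
  have cs3 := aux_cs (f := fun x => ‖vd x‖) (g := fun x => ‖vc x‖) measurableSet_Ioi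
    (hvdc.norm.aestronglyMeasurable) (hvcc.norm.aestronglyMeasurable)
    (fun x => norm_nonneg _) (fun x => norm_nonneg _) hIvd hIvc
  have cs4 := aux_cs (f := fun x => ‖d2 x‖) (g := fun x => ‖vc x‖) measurableSet_Ioi
    (hd2c.norm.aestronglyMeasurable) (hvcc.norm.aestronglyMeasurable)
    (fun x => norm_nonneg _) (fun x => norm_nonneg _) hId2 hIvc
  -- boundary escape function
  set h : ℝ → ℝ := fun x => ‖Wd x‖ * ‖vc x‖ with hh
  have hIh : IntegrableOn h (Ioi 0) := by
    refine Integrable.mono' ((cs3.1.const_mul μp).add (cs4.1.const_mul δa)) ?_ ?_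
    · exact ((hWdc.mono (Ioi_subset_Ici le_rfl)).norm.mul
        (hvcc.norm.continuousOn)).aestronglyMeasurable measurableSet_Ioi
    · filter_upwards [ae_restrict_mem measurableSet_Ioi] with x hx
      have hx0 : (0:ℝ) ≤ x := le_of_lt hx
      have hb : ‖Wd x‖ ≤ μp * ‖vd x‖ + δa * ‖d2 x‖ := by
        rw [hWdx x]
        refine le_trans (norm_add_le _ _) ?_
        rw [norm_mul, norm_mul]
        refine add_le_add (mul_le_mul ?_ le_rfl (norm_nonneg _) hμp0) ?_
        · rw [Complex.norm_real, Real.norm_eq_abs, abs_of_pos (lt_of_lt_of_le hμm (ha1m x))]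
          exact ha1p x
        · refine mul_le_mul ?_ le_rfl (norm_nonneg _) hδa0
          rw [Complex.norm_real, Real.norm_eq_abs]
          exact hδa x hx0
      have : h x ≤ (μp * ‖vd x‖ + δa * ‖d2 x‖) * ‖vc x‖ :=
        mul_le_mul_of_nonneg_right hb (norm_nonneg _)
      rw [Real.norm_of_nonneg (mul_nonneg (norm_nonneg _) (norm_nonneg _))]
      calc h x ≤ (μp * ‖vd x‖ + δa * ‖d2 x‖) * ‖vc x‖ := this
        _ = μp * (‖vd x‖ * ‖vc x‖) + δa * (‖d2 x‖ * ‖vc x‖) := by ring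
        _ ≤ _ := by simp only [Pi.add_apply]; exact le_rfl
  -- derivative of Wd
  set G : ℝ → ℂ := fun x => -(ω^2) * ((b1 x : ℂ) * u1 x - (b2 x : ℂ) * u2 x) with hG
  have hGc : Continuous G := by
    apply continuous_const.mul
    exact ((continuous_ofReal.comp hb1c).mul hu1c).sub ((continuous_ofReal.comp hb2c).mul hu2c)
  have hWdd : ∀ x, 0 ≤ x → HasDerivAt Wd (G x) x := by
    intro x hx
    have := (hW1d x hx).sub (hW2d x hx)
    convert this using 1
    · rfl
    show -(ω^2) * ((b1 x : ℂ) * u1 x - (b2 x : ℂ) * u2 x) = _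
    ring
    rfl
  have idR : ∀ R : ℝ, 0 ≤ R →
      ∫ x in (0:ℝ)..R, (G x * (starRingEnd ℂ) (vc x) + Wd x * (starRingEnd ℂ) (vd x))
        = Wd R * (starRingEnd ℂ) (vc R) - Wd 0 * (starRingEnd ℂ) (vc 0) := by
    intro R hR
    exact aux_ibp hR hWdd (fun x => (hu1d x).sub (hu2d x)) hGc.continuousOn hvdc
  -- pointwise rewriting of the integrand
  have hzz : ∀ z : ℂ, z * (starRingEnd ℂ) z = ((‖z‖^2 : ℝ) : ℂ) := by
    intro z
    rw [Complex.mul_conj]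
    congr 1
    rw [Complex.normSq_eq_norm_sq]
  have hE : ∀ x, G x * (starRingEnd ℂ) (vc x) + Wd x * (starRingEnd ℂ) (vd x)
      = ((a1 x * ‖vd x‖^2 : ℝ) : ℂ)
        + (-(ω^2)) * ((b1 x * ‖vc x‖^2 : ℝ) : ℂ)
        + ((a1 x - a2 x : ℝ) : ℂ) * (d2 x * (starRingEnd ℂ) (vd x))
        + (-(ω^2)) * (((b1 x - b2 x : ℝ) : ℂ) * (u2 x * (starRingEnd ℂ) (vc x))) := by
    intro x
    have h1 : (starRingEnd ℂ) (vc x) = (starRingEnd ℂ) (u1 x) - (starRingEnd ℂ) (u2 x) :=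
      map_sub _ _ _
    have hvcx : vc x * (starRingEnd ℂ) (vc x) = ((‖vc x‖^2 : ℝ) : ℂ) := hzz _
    have hvdx : vd x * (starRingEnd ℂ) (vd x) = ((‖vd x‖^2 : ℝ) : ℂ) := hzz _
    calc G x * (starRingEnd ℂ) (vc x) + Wd x * (starRingEnd ℂ) (vd x)
        = (a1 x : ℂ) * (vd x * (starRingEnd ℂ) (vd x))
            + ((a1 x - a2 x : ℝ) : ℂ) * (d2 x * (starRingEnd ℂ) (vd x))
            + (-(ω^2)) * ((b1 x : ℂ) * (vc x * (starRingEnd ℂ) (vc x)))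
            + (-(ω^2)) * (((b1 x - b2 x : ℝ) : ℂ) * (u2 x * (starRingEnd ℂ) (vc x))) := by
          rw [hWdx x]
          simp only [hG, hvc, hvd]
          push_cast
          ring
      _ = _ := by rw [hvcx, hvdx]; push_cast; ring
  -- interval quantities
  set IA : ℝ → ℝ := fun R => ∫ x in (0:ℝ)..R, a1 x * ‖vd x‖^2 with hIA
  set IB : ℝ → ℝ := fun R => ∫ x in (0:ℝ)..R, b1 x * ‖vc x‖^2 with hIB
  set JA : ℝ → ℂ := fun R => ∫ x in (0:ℝ)..R,
    ((a1 x - a2 x : ℝ) : ℂ) * (d2 x * (starRingEnd ℂ) (vd x)) with hJA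
  set JB : ℝ → ℂ := fun R => ∫ x in (0:ℝ)..R,
    ((b1 x - b2 x : ℝ) : ℂ) * (u2 x * (starRingEnd ℂ) (vc x)) with hJB
  have hiAc : Continuous (fun x => ((a1 x * ‖vd x‖^2 : ℝ) : ℂ)) :=
    continuous_ofReal.comp (ha1c.mul ((hvdc.norm).pow 2))
  have hiBc : Continuous (fun x => ((b1 x * ‖vc x‖^2 : ℝ) : ℂ)) :=
    continuous_ofReal.comp (hb1c.mul ((hvcc.norm).pow 2))
  have hjAc : Continuous (fun x => ((a1 x - a2 x : ℝ) : ℂ) * (d2 x * (starRingEnd ℂ) (vd x))) :=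
    (continuous_ofReal.comp (ha1c.sub ha2c)).mul (hd2c.mul (continuous_star.comp hvdc))
  have hjBc : Continuous (fun x => ((b1 x - b2 x : ℝ) : ℂ) * (u2 x * (starRingEnd ℂ) (vc x))) :=
    (continuous_ofReal.comp (hb1c.sub hb2c)).mul (hu2c.mul (continuous_star.comp hvcc))
  have splitR : ∀ R : ℝ, 0 ≤ R →
      ((IA R : ℝ) : ℂ) - ω^2 * ((IB R : ℝ) : ℂ) + JA R + (-(ω^2)) * JB R
        = Wd R * (starRingEnd ℂ) (vc R) - Wd 0 * (starRingEnd ℂ) (vc 0) := by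
    intro R hR
    rw [← idR R hR]
    have : (∫ x in (0:ℝ)..R, (G x * (starRingEnd ℂ) (vc x) + Wd x * (starRingEnd ℂ) (vd x)))
        = ∫ x in (0:ℝ)..R, (((a1 x * ‖vd x‖^2 : ℝ) : ℂ)
          + (-(ω^2)) * ((b1 x * ‖vc x‖^2 : ℝ) : ℂ)
          + ((a1 x - a2 x : ℝ) : ℂ) * (d2 x * (starRingEnd ℂ) (vd x))
          + (-(ω^2)) * (((b1 x - b2 x : ℝ) : ℂ) * (u2 x * (starRingEnd ℂ) (vc x)))) := by
      refine intervalIntegral.integral_congr fun x _ => hE x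
    rw [this]
    rw [intervalIntegral.integral_add (((hiAc.fun_add (continuous_const.fun_mul hiBc)).fun_add
        hjAc).intervalIntegrable _ _) ((continuous_const.fun_mul hjBc).intervalIntegrable _ _),
      intervalIntegral.integral_add ((hiAc.fun_add (continuous_const.fun_mul hiBc)).intervalIntegrable _ _)
        (hjAc.intervalIntegrable _ _),
      intervalIntegral.integral_add (hiAc.intervalIntegrable _ _)
        ((continuous_const.fun_mul hiBc).intervalIntegrable _ _)]
    rw [intervalIntegral.integral_const_mul, intervalIntegral.integral_const_mul,
      intervalIntegral.integral_ofReal, intervalIntegral.integral_ofReal]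
    simp only [hIA, hIB, hJA, hJB]
    ring
  -- imaginary part computation
  have key : ∀ p q : ℝ,
      ω.im * (p + K * q) = -((starRingEnd ℂ) ω * (((p:ℝ):ℂ) - ω^2 * ((q:ℝ):ℂ))).im := by
    intro p q
    simp only [hKdef, pow_two, Complex.mul_im, Complex.mul_re, Complex.sub_re, Complex.sub_im,
      Complex.ofReal_re, Complex.ofReal_im, Complex.conj_re, Complex.conj_im]
    ring
  -- norm bounds for JA, JB
  have hJAb : ∀ R : ℝ, 0 ≤ R → ‖JA R‖ ≤ δa * (Real.sqrt Dd2 * Real.sqrt Dvd) := by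
    intro R hR
    have step1 : ‖JA R‖ ≤ ∫ x in (0:ℝ)..R,
        ‖((a1 x - a2 x : ℝ) : ℂ) * (d2 x * (starRingEnd ℂ) (vd x))‖ :=
      intervalIntegral.norm_integral_le_integral_norm hR
    have step2 : ∫ x in (0:ℝ)..R, ‖((a1 x - a2 x : ℝ) : ℂ) * (d2 x * (starRingEnd ℂ) (vd x))‖
        ≤ ∫ x in (0:ℝ)..R, δa * (‖d2 x‖ * ‖vd x‖) := by
      refine intervalIntegral.integral_mono_on hR (hjAc.norm.intervalIntegrable _ _)
        ((continuous_const.mul (hd2c.norm.mul hvdc.norm)).intervalIntegrable _ _) fun x hx => ?_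
      rw [norm_mul, norm_mul, RCLike.norm_conj, Complex.norm_real, Real.norm_eq_abs]
      exact mul_le_mul_of_nonneg_right (hδa x hx.1) (by positivity)
    have step3 : ∫ x in (0:ℝ)..R, δa * (‖d2 x‖ * ‖vd x‖)
        = δa * ∫ x in (0:ℝ)..R, ‖d2 x‖ * ‖vd x‖ := intervalIntegral.integral_const_mul _ _
    have step4 : ∫ x in (0:ℝ)..R, ‖d2 x‖ * ‖vd x‖ ≤ ∫ x in Ioi (0:ℝ), ‖d2 x‖ * ‖vd x‖ := by
      rw [intervalIntegral.integral_of_le hR]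
      refine setIntegral_mono_set cs1.1 ?_ (HasSubset.Subset.eventuallyLE Ioc_subset_Ioi_self)
      filter_upwards with x using mul_nonneg (norm_nonneg _) (norm_nonneg _)
    calc ‖JA R‖ ≤ ∫ x in (0:ℝ)..R, δa * (‖d2 x‖ * ‖vd x‖) := le_trans step1 step2
      _ = δa * ∫ x in (0:ℝ)..R, ‖d2 x‖ * ‖vd x‖ := step3
      _ ≤ δa * ∫ x in Ioi (0:ℝ), ‖d2 x‖ * ‖vd x‖ := mul_le_mul_of_nonneg_left step4 hδa0
      _ ≤ δa * (Real.sqrt Dd2 * Real.sqrt Dvd) := mul_le_mul_of_nonneg_left cs1.2 hδa0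
  have hJBb : ∀ R : ℝ, 0 ≤ R → ‖JB R‖ ≤ δb * (Real.sqrt Du2 * Real.sqrt Dvc) := by
    intro R hR
    have step1 : ‖JB R‖ ≤ ∫ x in (0:ℝ)..R,
        ‖((b1 x - b2 x : ℝ) : ℂ) * (u2 x * (starRingEnd ℂ) (vc x))‖ :=
      intervalIntegral.norm_integral_le_integral_norm hR
    have step2 : ∫ x in (0:ℝ)..R, ‖((b1 x - b2 x : ℝ) : ℂ) * (u2 x * (starRingEnd ℂ) (vc x))‖
        ≤ ∫ x in (0:ℝ)..R, δb * (‖u2 x‖ * ‖vc x‖) := by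
      refine intervalIntegral.integral_mono_on hR (hjBc.norm.intervalIntegrable _ _)
        ((continuous_const.mul (hu2c.norm.mul hvcc.norm)).intervalIntegrable _ _) fun x hx => ?_
      rw [norm_mul, norm_mul, RCLike.norm_conj, Complex.norm_real, Real.norm_eq_abs]
      exact mul_le_mul_of_nonneg_right (hδb x hx.1) (by positivity)
    have step3 : ∫ x in (0:ℝ)..R, δb * (‖u2 x‖ * ‖vc x‖)
        = δb * ∫ x in (0:ℝ)..R, ‖u2 x‖ * ‖vc x‖ := intervalIntegral.integral_const_mul _ _
    have step4 : ∫ x in (0:ℝ)..R, ‖u2 x‖ * ‖vc x‖ ≤ ∫ x in Ioi (0:ℝ), ‖u2 x‖ * ‖vc x‖ := by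
      rw [intervalIntegral.integral_of_le hR]
      refine setIntegral_mono_set cs2.1 ?_ (HasSubset.Subset.eventuallyLE Ioc_subset_Ioi_self)
      filter_upwards with x using mul_nonneg (norm_nonneg _) (norm_nonneg _)
    calc ‖JB R‖ ≤ ∫ x in (0:ℝ)..R, δb * (‖u2 x‖ * ‖vc x‖) := le_trans step1 step2
      _ = δb * ∫ x in (0:ℝ)..R, ‖u2 x‖ * ‖vc x‖ := step3
      _ ≤ δb * ∫ x in Ioi (0:ℝ), ‖u2 x‖ * ‖vc x‖ := mul_le_mul_of_nonneg_left step4 hδb0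
      _ ≤ δb * (Real.sqrt Du2 * Real.sqrt Dvc) := mul_le_mul_of_nonneg_left cs2.2 hδb0
  -- constant C
  set C : ℝ := ‖W1 0 - W2 0‖ * ‖u1 0 - u2 0‖
      + δa * Real.sqrt Dd2 * Real.sqrt Dvd + K * δb * Real.sqrt Du2 * Real.sqrt Dvc with hC
  -- per-R inequality
  have perR : ∀ R : ℝ, 0 ≤ R →
      ω.im * (IA R + K * IB R) ≤ ‖ω‖ * (h R + C) := by
    intro R hR
    have hz := splitR R hR
    set Z : ℂ := Wd R * (starRingEnd ℂ) (vc R) - Wd 0 * (starRingEnd ℂ) (vc 0)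
      - JA R + ω^2 * JB R with hZ
    have hz2 : ((IA R : ℝ) : ℂ) - ω^2 * ((IB R : ℝ) : ℂ) = Z := by
      rw [hZ]; rw [← hz]; ring
    have h1 : ω.im * (IA R + K * IB R) = -((starRingEnd ℂ) ω * Z).im := by
      rw [← hz2]; exact key _ _
    have h2 : -((starRingEnd ℂ) ω * Z).im ≤ ‖(starRingEnd ℂ) ω * Z‖ :=
      le_trans (neg_le_abs _) (Complex.abs_im_le_norm _)
    have h3 : ‖(starRingEnd ℂ) ω * Z‖ = ‖ω‖ * ‖Z‖ := by
      rw [norm_mul, Complex.norm_conj]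
    have h4 : ‖Z‖ ≤ h R + C := by
      rw [hZ, hC]
      have e1 : ‖Wd R * (starRingEnd ℂ) (vc R)‖ = h R := by
        simp only [hh]
        rw [norm_mul, Complex.norm_conj]
      have e2 : ‖Wd 0 * (starRingEnd ℂ) (vc 0)‖ = ‖W1 0 - W2 0‖ * ‖u1 0 - u2 0‖ := by
        simp only [hWd, hvc]
        rw [norm_mul, Complex.norm_conj]
      have e3 : ‖ω^2 * JB R‖ = K * ‖JB R‖ := by
        rw [norm_mul, norm_pow, ← hKabs]
      calc ‖Wd R * (starRingEnd ℂ) (vc R) - Wd 0 * (starRingEnd ℂ) (vc 0)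
            - JA R + ω^2 * JB R‖
          ≤ ‖Wd R * (starRingEnd ℂ) (vc R) - Wd 0 * (starRingEnd ℂ) (vc 0)
            - JA R‖ + ‖ω^2 * JB R‖ := norm_add_le _ _
        _ ≤ (‖Wd R * (starRingEnd ℂ) (vc R) - Wd 0 * (starRingEnd ℂ) (vc 0)‖
            + ‖JA R‖) + ‖ω^2 * JB R‖ := by
              exact add_le_add_left (norm_sub_le _ _) _
        _ ≤ ((‖Wd R * (starRingEnd ℂ) (vc R)‖
            + ‖Wd 0 * (starRingEnd ℂ) (vc 0)‖) + ‖JA R‖)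
            + ‖ω^2 * JB R‖ := by
              exact add_le_add_left (add_le_add_left (norm_sub_le _ _) _) _
        _ ≤ _ := by
              rw [e1, e2, e3]
              have b1 := hJAb R hR
              have b2 := hJBb R hR
              have b2' := mul_le_mul_of_nonneg_left b2 hKpos.le
              ring_nf at b1 b2' ⊢
              linarith [b1, b2']
    calc ω.im * (IA R + K * IB R) = -((starRingEnd ℂ) ω * Z).im := h1
      _ ≤ ‖ω‖ * ‖Z‖ := by rw [← h3]; exact h2
      _ ≤ ‖ω‖ * (h R + C) := mul_le_mul_of_nonneg_left h4 habsω.le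
  -- monotonicity of IA and IB in R
  have hIAint : Continuous (fun x => a1 x * ‖vd x‖^2) := ha1c.mul (hvdc.norm.pow 2)
  have hIBint : Continuous (fun x => b1 x * ‖vc x‖^2) := hb1c.mul (hvcc.norm.pow 2)
  have hIAmono : ∀ R₀ R : ℝ, 0 ≤ R₀ → R₀ ≤ R → IA R₀ ≤ IA R := by
    intro R₀ R h0 hR
    simp only [hIA]
    rw [intervalIntegral.integral_of_le h0, intervalIntegral.integral_of_le (le_trans h0 hR)]
    refine setIntegral_mono_set (hIAint.integrableOn_Ioc) ?_
      (HasSubset.Subset.eventuallyLE (Ioc_subset_Ioc le_rfl hR))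
    filter_upwards with x
    exact mul_nonneg (le_trans hμm.le (ha1m x)) (sq_nonneg _)
  have hIBmono : ∀ R₀ R : ℝ, 0 ≤ R₀ → R₀ ≤ R → IB R₀ ≤ IB R := by
    intro R₀ R h0 hR
    simp only [hIB]
    rw [intervalIntegral.integral_of_le h0, intervalIntegral.integral_of_le (le_trans h0 hR)]
    refine setIntegral_mono_set (hIBint.integrableOn_Ioc) ?_
      (HasSubset.Subset.eventuallyLE (Ioc_subset_Ioc le_rfl hR))
    filter_upwards with x
    exact mul_nonneg (le_trans hρm.le (hb1m x)) (sq_nonneg _)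
  have keyR : ∀ R₀ : ℝ, 0 ≤ R₀ → ω.im * (IA R₀ + K * IB R₀) ≤ ‖ω‖ * C := by
    intro R₀ h0
    refine le_of_forall_pos_le_add fun ε hε => ?_
    obtain ⟨R, hRR₀, hR0, hhR⟩ := aux_escape (h := h)
      (fun x => mul_nonneg (norm_nonneg _) (norm_nonneg _))
      hIh (ε / ‖ω‖) R₀ (div_pos hε habsω)
    have hm1 := hIAmono R₀ R h0 (le_of_lt hRR₀)
    have hm2 := hIBmono R₀ R h0 (le_of_lt hRR₀)
    have h1 : ω.im * (IA R₀ + K * IB R₀) ≤ ω.im * (IA R + K * IB R) := by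
      have : IA R₀ + K * IB R₀ ≤ IA R + K * IB R := by nlinarith [hKpos]
      exact mul_le_mul_of_nonneg_left this hω.le
    calc ω.im * (IA R₀ + K * IB R₀) ≤ ω.im * (IA R + K * IB R) := h1
      _ ≤ ‖ω‖ * (h R + C) := perR R hR0.le
      _ ≤ ‖ω‖ * (ε / ‖ω‖ + C) :=
          mul_le_mul_of_nonneg_left (add_le_add_left hhR.le C) habsω.le
      _ = ‖ω‖ * C + ε := by field_simp; ring
  -- pass to the limit
  set F : ℝ → ℝ := fun x => (ω.im * μm) * ‖vd x‖^2 + (ω.im * (K * ρm)) * ‖vc x‖^2 with hF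
  have hFint : IntegrableOn F (Ioi 0) := (hIvd.const_mul _).add (hIvc.const_mul _)
  have hFn : ∀ n : ℕ, ∫ x in (0:ℝ)..(n:ℝ), F x ≤ ‖ω‖ * C := by
    intro n
    have hn : (0:ℝ) ≤ n := Nat.cast_nonneg n
    have hmono : ∫ x in (0:ℝ)..(n:ℝ), F x ≤ ∫ x in (0:ℝ)..(n:ℝ),
        (ω.im * (a1 x * ‖vd x‖^2) + (ω.im * K) * (b1 x * ‖vc x‖^2)) := by
      refine intervalIntegral.integral_mono_on hn
        (((continuous_const.mul (hvdc.norm.pow 2)).add (continuous_const.mul (hvcc.norm.pow 2))).intervalIntegrable _ _)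
        (((continuous_const.mul hIAint).add (continuous_const.mul hIBint)).intervalIntegrable _ _) fun x hx => ?_
      have h1 := mul_le_mul_of_nonneg_right (ha1m x) (sq_nonneg ‖vd x‖)
      have h2 := mul_le_mul_of_nonneg_right (hb1m x) (sq_nonneg ‖vc x‖)
      simp only [hF]
      nlinarith [hω.le, hKpos.le, mul_le_mul_of_nonneg_left h1 hω.le,
        mul_le_mul_of_nonneg_left h2 (mul_nonneg hω.le hKpos.le)]
    have heq : ∫ x in (0:ℝ)..(n:ℝ),
        (ω.im * (a1 x * ‖vd x‖^2) + (ω.im * K) * (b1 x * ‖vc x‖^2))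
        = ω.im * IA n + (ω.im * K) * IB n := by
      rw [intervalIntegral.integral_add ((continuous_const.fun_mul hIAint).intervalIntegrable _ _)
        ((continuous_const.fun_mul hIBint).intervalIntegrable _ _),
        intervalIntegral.integral_const_mul, intervalIntegral.integral_const_mul]
    have := keyR n hn
    calc ∫ x in (0:ℝ)..(n:ℝ), F x ≤ ω.im * IA n + (ω.im * K) * IB n := by rw [← heq]; exact hmono
      _ = ω.im * (IA n + K * IB n) := by ring
      _ ≤ ‖ω‖ * C := this
  have hlim := aux_limit hFint hFn
  have hFval : ∫ x in Ioi (0:ℝ), F x = (ω.im * μm) * Dvd + (ω.im * (K * ρm)) * Dvc := by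
    simp only [hF]
    rw [integral_add (hIvd.const_mul _) (hIvc.const_mul _), integral_const_mul, integral_const_mul]
  rw [hFval] at hlim
  calc ω.im * (μm * Dvd) + ω.im * (K * (ρm * Dvc))
      = (ω.im * μm) * Dvd + (ω.im * (K * ρm)) * Dvc := by ring
    _ ≤ ‖ω‖ * C := hlim
    _ = ‖ω‖ * (‖W1 0 - W2 0‖ * ‖u1 0 - u2 0‖
        + δa * Real.sqrt Dd2 * Real.sqrt Dvd + K * δb * Real.sqrt Du2 * Real.sqrt Dvc) := by
          rw [hC]


lemma aux_package {a b : ℝ → ℝ} (hac : Continuous a) (hbc : Continuous b)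
    {μm : ℝ} (hμm : 0 < μm) (ham : ∀ x, μm ≤ a x)
    {ω : ℂ} {u u' w : ℝ → ℂ}
    (hInt : IntegrableOn (fun x => ‖u x‖ ^ 2) (Ioi 0))
    (hrep : ∀ x : ℝ, 0 ≤ x → u x = u 0 + ∫ t in (0:ℝ)..x, u' t)
    (hu0 : u 0 = 1)
    (hflux : ∀ᵐ x ∂(volume.restrict (Ioi (0:ℝ))), w x = (a x : ℂ) * u' x)
    (heq : ∀ x ∈ Ioi (0:ℝ), w x = w 1 + ∫ t in (1:ℝ)..x, (-(b t : ℂ) * ω ^ 2 * u t)) :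
    ∃ uc ud Wc : ℝ → ℂ, Continuous uc ∧ Continuous ud ∧
      (∀ x, HasDerivAt uc (ud x) x) ∧
      (∀ x, 0 ≤ x → HasDerivAt Wc (-(b x : ℂ) * ω ^ 2 * uc x) x) ∧
      (∀ x, Wc x = (a x : ℂ) * ud x) ∧
      (∀ x, 0 ≤ x → u x = uc x) ∧
      (u' =ᵐ[volume.restrict (Ioi 0)] ud) ∧
      uc 0 = 1 := by
  -- Step 1: local interval integrability of u'
  have hloc : ∀ x : ℝ, 0 ≤ x → IntervalIntegrable u' volume 0 x := by
    by_contra hcon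
    push_neg at hcon
    obtain ⟨x₀, hx₀, hni⟩ := hcon
    have hone : ∀ x, x₀ ≤ x → u x = 1 := by
      intro x hx
      have h0x : (0:ℝ) ≤ x := le_trans hx₀ hx
      rw [hrep x h0x, hu0]
      have : ¬ IntervalIntegrable u' volume 0 x := by
        intro hII
        refine hni (hII.mono_set ?_)
        rw [uIcc_of_le hx₀, uIcc_of_le h0x]
        exact Icc_subset_Icc le_rfl hx
      rw [intervalIntegral.integral_undef this, add_zero]
    -- contradiction with integrability of ‖u‖² on (x₀, ∞)
    have hsub : Ioi x₀ ⊆ Ioi (0:ℝ) := Ioi_subset_Ioi hx₀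
    have h1 : IntegrableOn (fun x => ‖u x‖ ^ 2) (Ioi x₀) := hInt.mono_set hsub
    have h2 : IntegrableOn (fun _ : ℝ => (1:ℝ)) (Ioi x₀) := by
      refine h1.congr ?_
      filter_upwards [ae_restrict_mem measurableSet_Ioi] with x hx
      rw [hone x (le_of_lt hx)]
      norm_num
    rw [integrableOn_const_iff] at h2
    rcases h2 with h | h
    · norm_num at h
    · simp [Real.volume_Ioi] at h
  -- Step 2: u is continuous on [0, ∞)
  have hucont : ContinuousOn u (Ici 0) := by
    have hP : ContinuousOn (fun x => u 0 + ∫ t in (0:ℝ)..x, u' t) (Ici 0) := by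
      refine continuousOn_const.add fun x₀ hx₀ => ?_
      have hx₀' : (0:ℝ) ≤ x₀ := hx₀
      have hcwa : ContinuousWithinAt (fun x => ∫ t in (0:ℝ)..x, u' t) (Icc 0 (x₀ + 1)) x₀ := by
        refine intervalIntegral.continuousWithinAt_primitive (measure_singleton x₀) ?_
        rw [min_self, max_eq_right (by linarith : (0:ℝ) ≤ x₀ + 1)]
        exact hloc _ (by linarith)
      refine hcwa.mono_of_mem_nhdsWithin ?_
      refine Filter.mem_of_superset (inter_mem_nhdsWithin (Ici 0) (Iio_mem_nhds (lt_add_one x₀))) ?_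
      exact fun y hy => ⟨hy.1, le_of_lt hy.2⟩
    exact hP.congr fun x hx => hrep x hx
  -- Step 3: constructions
  set g : ℝ → ℂ := fun t => -(b t : ℂ) * ω ^ 2 * u (max t 0) with hg
  have hgc : Continuous g := by
    refine (((continuous_ofReal.comp hbc).neg).mul continuous_const).mul ?_
    exact hucont.comp_continuous (continuous_id.max continuous_const) fun x => le_max_right x 0
  set Wc : ℝ → ℂ := fun x => w 1 + ∫ t in (1:ℝ)..x, g t with hWc
  have hWcc : Continuous Wc :=
    continuous_const.add (intervalIntegral.continuous_primitive (fun a b => hgc.intervalIntegrable a b) 1)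
  have hWceq : ∀ x ∈ Ioi (0:ℝ), w x = Wc x := by
    intro x hx
    rw [heq x hx, hWc]
    congr 1
    refine intervalIntegral.integral_congr fun t ht => ?_
    have htpos : 0 < t := lt_of_lt_of_le (lt_min one_pos hx) ht.1
    rw [hg]
    simp only [max_eq_left htpos.le]
  have hWcd : ∀ x, HasDerivAt Wc (g x) x := by
    intro x
    exact ((hgc.integral_hasStrictDerivAt 1 x).hasDerivAt).const_add (w 1)
  have hane : ∀ x, (a x : ℂ) ≠ 0 := fun x =>
    Complex.ofReal_ne_zero.2 (ne_of_gt (lt_of_lt_of_le hμm (ham x)))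
  set ud : ℝ → ℂ := fun x => Wc x / (a x : ℂ) with hud
  have hudc : Continuous ud := hWcc.div (continuous_ofReal.comp hac) hane
  have hWa : ∀ x, Wc x = (a x : ℂ) * ud x := by
    intro x
    rw [hud, eq_comm, mul_comm, div_mul_cancel₀ _ (hane x)]
  have hu'ae : u' =ᵐ[volume.restrict (Ioi 0)] ud := by
    filter_upwards [hflux, ae_restrict_mem measurableSet_Ioi] with x h1 h2
    have h3 : (a x : ℂ) * u' x = (a x : ℂ) * ud x := by
      rw [← h1, hWceq x h2, hWa x]
    exact mul_left_cancel₀ (hane x) h3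
  set uc : ℝ → ℂ := fun x => 1 + ∫ t in (0:ℝ)..x, ud t with huc
  have hucc : Continuous uc :=
    continuous_const.add (intervalIntegral.continuous_primitive (fun a b => hudc.intervalIntegrable a b) 0)
  have hucd : ∀ x, HasDerivAt uc (ud x) x := fun x =>
    ((hudc.integral_hasStrictDerivAt 0 x).hasDerivAt).const_add 1
  have huc0 : uc 0 = 1 := by simp [huc]
  have hue : ∀ x, 0 ≤ x → u x = uc x := by
    intro x hx
    rw [hrep x hx, hu0, huc]
    congr 1
    rw [intervalIntegral.integral_of_le hx, intervalIntegral.integral_of_le hx]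
    refine setIntegral_congr_ae measurableSet_Ioc ?_
    have := ae_restrict_of_ae_restrict_of_subset
      (show Ioc (0:ℝ) x ⊆ Ioi 0 from Ioc_subset_Ioi_self) hu'ae
    exact (ae_restrict_iff' measurableSet_Ioc).1 this
  have hWduc : ∀ x, 0 ≤ x → HasDerivAt Wc (-(b x : ℂ) * ω ^ 2 * uc x) x := by
    intro x hx
    have := hWcd x
    simp only [hg, max_eq_left hx] at this
    rwa [hue x hx] at this
  exact ⟨uc, ud, Wc, hucc, hudc, hucd, hWduc, hWa, hue, hu'ae, huc0⟩

set_option maxHeartbeats 2000000 in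
/-- **Uniform continuity and periodicity of the family of half-line solutions.**
Let `μ, ρ : ℝⁿ → ℝ` (`ℝⁿ = ℝ^{n-1} × ℝ`) be continuous, 1-periodic in each variable, with
positive bounds, let `θ = (θ̂, θₙ)` have positive entries and `Im ω > 0`. For each
`s ∈ ℝ^{n-1}`, let `u s ∈ H¹(0, ∞)` (with derivative `u' s` and flux `w s = μ_s · (u' s)`,
an antiderivative of `−ρ_s ω² u s`) be the solution of
`−(μ_s (u s)')' − ρ_s ω² u s = 0` on `(0, ∞)`, `u s (0) = 1`, where
`μ_s(x) = μ((s,0) + xθ)`, `ρ_s(x) = ρ((s,0) + xθ)`. Then there is `c > 0` with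
`‖u s₁ − u s₂‖_{H¹(0,∞)} ≤ c (‖μ_{s₂} − μ_{s₁}‖_∞ + ‖ρ_{s₂} − ρ_{s₁}‖_∞)` for all
`s₁, s₂`; consequently `s ↦ u s` is uniformly continuous into `H¹(0, ∞)`, and it is
`1`-periodic in each component of `s`. -/
theorem stmt12 (m : ℕ) (μ ρ : (Fin m → ℝ) × ℝ → ℝ)
    (hμc : Continuous μ) (hρc : Continuous ρ)
    (hμper : ∀ (y : (Fin m → ℝ) × ℝ) (i : Fin m), μ (y.1 + Pi.single i 1, y.2) = μ y)
    (hμpern : ∀ y : (Fin m → ℝ) × ℝ, μ (y.1, y.2 + 1) = μ y)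
    (hρper : ∀ (y : (Fin m → ℝ) × ℝ) (i : Fin m), ρ (y.1 + Pi.single i 1, y.2) = ρ y)
    (hρpern : ∀ y : (Fin m → ℝ) × ℝ, ρ (y.1, y.2 + 1) = ρ y)
    (μm μp ρm ρp : ℝ) (hμm : 0 < μm) (hρm : 0 < ρm)
    (hμb : ∀ y, μm ≤ μ y ∧ μ y ≤ μp) (hρb : ∀ y, ρm ≤ ρ y ∧ ρ y ≤ ρp)
    (θhat : Fin m → ℝ) (θn : ℝ) (hhat : ∀ i, 0 < θhat i) (hn : 0 < θn)
    (ω : ℂ) (hω : 0 < ω.im)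
    (u u' w : (Fin m → ℝ) → ℝ → ℂ)
    (hInt : ∀ s, IntegrableOn (fun x => ‖u s x‖ ^ 2) (Set.Ioi 0))
    (hInt' : ∀ s, IntegrableOn (fun x => ‖u' s x‖ ^ 2) (Set.Ioi 0))
    (hrep : ∀ s, ∀ x : ℝ, 0 ≤ x → u s x = u s 0 + ∫ t in (0:ℝ)..x, u' s t)
    (hu0 : ∀ s, u s 0 = 1)
    (hflux : ∀ s, ∀ᵐ x ∂(volume.restrict (Set.Ioi (0:ℝ))),
        w s x = (μ (s + x • θhat, x * θn) : ℂ) * u' s x)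
    (heq : ∀ s, ∀ x ∈ Set.Ioi (0:ℝ),
        w s x = w s 1
          + ∫ t in (1:ℝ)..x, (-(ρ (s + t • θhat, t * θn) : ℂ) * ω ^ 2 * u s t)) :
    (∃ c > 0, ∀ s₁ s₂ : Fin m → ℝ,
        Real.sqrt (∫ x in Set.Ioi (0:ℝ),
            (‖u s₁ x - u s₂ x‖ ^ 2 + ‖u' s₁ x - u' s₂ x‖ ^ 2))
          ≤ c * ((⨆ x : ℝ, |μ (s₂ + x • θhat, x * θn) - μ (s₁ + x • θhat, x * θn)|)
              + (⨆ x : ℝ, |ρ (s₂ + x • θhat, x * θn) - ρ (s₁ + x • θhat, x * θn)|))) ∧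
    (∀ ε > (0:ℝ), ∃ δ > (0:ℝ), ∀ s₁ s₂ : Fin m → ℝ, dist s₁ s₂ < δ →
        Real.sqrt (∫ x in Set.Ioi (0:ℝ),
            (‖u s₁ x - u s₂ x‖ ^ 2 + ‖u' s₁ x - u' s₂ x‖ ^ 2)) < ε) ∧
    (∀ (s : Fin m → ℝ) (i : Fin m), ∀ x : ℝ, 0 ≤ x →
        u (s + Pi.single i 1) x = u s x) := by
  classical
  -- coefficient functions along the line
  have hline : ∀ s : Fin m → ℝ, Continuous (fun x : ℝ => ((s + x • θhat, x * θn) : (Fin m → ℝ) × ℝ)) := by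
    intro s
    exact (continuous_const.add (continuous_id.smul continuous_const)).prodMk
      (continuous_id.mul continuous_const)
  have hac : ∀ s, Continuous (fun x : ℝ => μ (s + x • θhat, x * θn)) :=
    fun s => hμc.comp (hline s)
  have hbc : ∀ s, Continuous (fun x : ℝ => ρ (s + x • θhat, x * θn)) :=
    fun s => hρc.comp (hline s)
  set K : ℝ := ω.re ^ 2 + ω.im ^ 2 with hKdef
  have hωne : ω ≠ 0 := fun h => by simp [h] at hω
  have habsω : 0 < ‖ω‖ := norm_pos_iff.mpr hωne
  have hKabs : K = ‖ω‖ ^ 2 := by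
    rw [Complex.sq_norm, Complex.normSq_apply]; ring
  have hKpos : 0 < K := by rw [hKabs]; positivity
  -- per-s regular solution package
  have hpack : ∀ s : Fin m → ℝ, ∃ uc ud Wc : ℝ → ℂ, Continuous uc ∧ Continuous ud ∧
      (∀ x, HasDerivAt uc (ud x) x) ∧
      (∀ x, 0 ≤ x → HasDerivAt Wc (-(ρ (s + x • θhat, x * θn) : ℂ) * ω ^ 2 * uc x) x) ∧
      (∀ x, Wc x = (μ (s + x • θhat, x * θn) : ℂ) * ud x) ∧
      (∀ x, 0 ≤ x → u s x = uc x) ∧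
      (u' s =ᵐ[volume.restrict (Ioi 0)] ud) ∧
      uc 0 = 1 := by
    intro s
    exact aux_package (hac s) (hbc s) hμm (fun x => (hμb _).1) (hInt s)
      (hrep s) (hu0 s) (hflux s) (heq s)
  choose uc ud Wc hucc hudc hucd hWd hWa hue hu'ae huc0 using hpack
  -- integrability of the regularized solutions
  have hIuc : ∀ s, IntegrableOn (fun x => ‖uc s x‖ ^ 2) (Ioi 0) := by
    intro s
    refine (hInt s).congr ?_
    filter_upwards [ae_restrict_mem measurableSet_Ioi] with x hx
    rw [hue s x (le_of_lt hx)]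
  have hIud : ∀ s, IntegrableOn (fun x => ‖ud s x‖ ^ 2) (Ioi 0) := by
    intro s
    refine (hInt' s).congr ?_
    filter_upwards [hu'ae s] with x hx
    rw [hx]
  -- boundary value bound for Wc s 0
  have hW0 : ∀ s, ‖Wc s 0‖ ≤ μp * Real.sqrt (∫ x in Ioi (0:ℝ), ‖ud s x‖ ^ 2)
      + K * ρp * Real.sqrt (∫ x in Ioi (0:ℝ), ‖uc s x‖ ^ 2) := by
    intro s
    set Dd := ∫ x in Ioi (0:ℝ), ‖ud s x‖ ^ 2 with hDd
    set Du := ∫ x in Ioi (0:ℝ), ‖uc s x‖ ^ 2 with hDu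
    set g : ℝ → ℂ := fun t => -(ρ (s + t • θhat, t * θn) : ℂ) * ω ^ 2 * uc s t with hgdef
    have hgc : Continuous g :=
      (((continuous_ofReal.comp (hbc s)).neg).mul continuous_const).mul (hucc s)
    have hωsq : ‖ω ^ 2‖ = K := by
      rw [norm_pow, ← hKabs]
    have hρp0 : (0:ℝ) ≤ ρp := le_trans hρm.le (le_trans (hρb (0,0)).1 (hρb (0,0)).2)
    have hgb : ∀ t, ‖g t‖ ≤ K * ρp * ‖uc s t‖ := by
      intro t
      rw [hgdef]
      have e : ‖-(ρ (s + t • θhat, t * θn) : ℂ) * ω ^ 2 * uc s t‖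
          = ρ (s + t • θhat, t * θn) * K * ‖uc s t‖ := by
        rw [norm_mul, norm_mul, norm_neg, Complex.norm_real,
          Real.norm_of_nonneg (le_of_lt (lt_of_lt_of_le hρm (hρb _).1)), hωsq]
      rw [e]
      have h1 : ρ (s + t • θhat, t * θn) ≤ ρp := (hρb _).2
      nlinarith [hKpos, norm_nonneg (uc s t),
        mul_le_mul_of_nonneg_right h1 (mul_nonneg hKpos.le (norm_nonneg (uc s t)))]
    have hFTC : ∀ x : ℝ, 0 ≤ x → Wc s x - Wc s 0 = ∫ t in (0:ℝ)..x, g t := by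
      intro x hx
      have := intervalIntegral.integral_eq_sub_of_hasDerivAt
        (f := Wc s) (f' := g)
        (fun t ht => hWd s t (by rw [uIcc_of_le hx] at ht; exact ht.1))
        (hgc.intervalIntegrable 0 x)
      rw [this]
    set Cg : ℝ := ∫ t in Ioc (0:ℝ) 1, (K * ρp * ‖uc s t‖) with hCg
    have hptw : ∀ x ∈ Ioc (0:ℝ) 1, ‖Wc s 0‖ ≤ μp * ‖ud s x‖ + Cg := by
      intro x hx
      have h1 : ‖Wc s 0‖ ≤ ‖Wc s x‖ + ‖∫ t in (0:ℝ)..x, g t‖ := by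
        have : Wc s 0 = Wc s x - ∫ t in (0:ℝ)..x, g t := by
          rw [← hFTC x hx.1.le]; ring
        rw [this]
        exact norm_sub_le _ _
      have h2 : ‖Wc s x‖ ≤ μp * ‖ud s x‖ := by
        rw [hWa s x, norm_mul, Complex.norm_real, Real.norm_eq_abs,
          abs_of_pos (lt_of_lt_of_le hμm (hμb _).1)]
        exact mul_le_mul_of_nonneg_right (hμb _).2 (norm_nonneg _)
      have h3 : ‖∫ t in (0:ℝ)..x, g t‖ ≤ Cg := by
        calc ‖∫ t in (0:ℝ)..x, g t‖ ≤ ∫ t in (0:ℝ)..x, ‖g t‖ :=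
              intervalIntegral.norm_integral_le_integral_norm hx.1.le
          _ ≤ ∫ t in (0:ℝ)..x, (K * ρp * ‖uc s t‖) := by
              refine intervalIntegral.integral_mono_on hx.1.le
                (hgc.norm.intervalIntegrable _ _)
                ((continuous_const.mul (hucc s).norm).intervalIntegrable _ _)
                fun t _ => hgb t
          _ ≤ Cg := by
              rw [intervalIntegral.integral_of_le hx.1.le, hCg]
              refine setIntegral_mono_set
                ((continuous_const.mul (hucc s).norm).integrableOn_Ioc)
                ?_ (HasSubset.Subset.eventuallyLE (Ioc_subset_Ioc le_rfl hx.2))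
              filter_upwards with t
              exact mul_nonneg (mul_nonneg hKpos.le hρp0) (norm_nonneg _)
      linarith
    have hvol : (volume (Ioc (0:ℝ) 1)).toReal = 1 := by simp
    have hW0int : ‖Wc s 0‖ ≤ ∫ x in Ioc (0:ℝ) 1, (μp * ‖ud s x‖ + Cg) := by
      have h0 : ‖Wc s 0‖ = ∫ _x in Ioc (0:ℝ) 1, ‖Wc s 0‖ := by
        rw [setIntegral_const, measureReal_def, hvol, one_smul]
      rw [h0]
      refine setIntegral_mono_on ?_ ?_ measurableSet_Ioc hptw
      · exact integrableOn_const (by simp)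
      · exact ((continuous_const.mul (hudc s).norm).add continuous_const).integrableOn_Ioc
    have hsplit : ∫ x in Ioc (0:ℝ) 1, (μp * ‖ud s x‖ + Cg)
        = μp * (∫ x in Ioc (0:ℝ) 1, ‖ud s x‖) + Cg := by
      rw [integral_add ((continuous_const.fun_mul (hudc s).norm).integrableOn_Ioc)
        (integrableOn_const (μ := volume) (s := Ioc (0:ℝ) 1) (by simp)), integral_const_mul,
        setIntegral_const, measureReal_def, hvol, one_smul]
    -- small-interval Cauchy-Schwarz
    have hcs1 : ∫ x in Ioc (0:ℝ) 1, ‖ud s x‖ ≤ Real.sqrt Dd := by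
      have := (aux_cs (f := fun x => ‖ud s x‖) (g := fun _ => (1:ℝ)) (S := Ioc 0 1)
        measurableSet_Ioc ((hudc s).norm.aestronglyMeasurable) aestronglyMeasurable_const
        (fun x => norm_nonneg _) (fun _ => one_pos.le)
        ((hudc s).norm.pow 2).integrableOn_Ioc
        (integrableOn_const (by simp))).2
      have h1 : ∫ x in Ioc (0:ℝ) 1, ((1:ℝ)) ^ 2 = 1 := by
        simp [hvol]
      have h2 : ∫ x in Ioc (0:ℝ) 1, ‖ud s x‖ * 1 = ∫ x in Ioc (0:ℝ) 1, ‖ud s x‖ := by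
        simp
      rw [h1, h2, Real.sqrt_one, mul_one] at this
      refine le_trans this (Real.sqrt_le_sqrt ?_)
      refine setIntegral_mono_set (hIud s) ?_
        (HasSubset.Subset.eventuallyLE Ioc_subset_Ioi_self)
      filter_upwards with t using sq_nonneg _
    have hcs2 : ∫ x in Ioc (0:ℝ) 1, ‖uc s x‖ ≤ Real.sqrt Du := by
      have := (aux_cs (f := fun x => ‖uc s x‖) (g := fun _ => (1:ℝ)) (S := Ioc 0 1)
        measurableSet_Ioc ((hucc s).norm.aestronglyMeasurable) aestronglyMeasurable_const
        (fun x => norm_nonneg _) (fun _ => one_pos.le)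
        ((hucc s).norm.pow 2).integrableOn_Ioc
        (integrableOn_const (by simp))).2
      have h1 : ∫ x in Ioc (0:ℝ) 1, ((1:ℝ)) ^ 2 = 1 := by
        simp [hvol]
      have h2 : ∫ x in Ioc (0:ℝ) 1, ‖uc s x‖ * 1 = ∫ x in Ioc (0:ℝ) 1, ‖uc s x‖ := by
        simp
      rw [h1, h2, Real.sqrt_one, mul_one] at this
      refine le_trans this (Real.sqrt_le_sqrt ?_)
      refine setIntegral_mono_set (hIuc s) ?_
        (HasSubset.Subset.eventuallyLE Ioc_subset_Ioi_self)
      filter_upwards with t using sq_nonneg _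
    have hCgb : Cg ≤ K * ρp * Real.sqrt Du := by
      rw [hCg, integral_const_mul]
      refine mul_le_mul_of_nonneg_left hcs2 ?_
      have : 0 < ρp := lt_of_lt_of_le hρm (le_trans (hρb (0,0)).1 (hρb (0,0)).2)
      positivity
    have hμp0 : (0:ℝ) ≤ μp := le_trans hμm.le (le_trans (hμb (0,0)).1 (hμb (0,0)).2)
    calc ‖Wc s 0‖ ≤ ∫ x in Ioc (0:ℝ) 1, (μp * ‖ud s x‖ + Cg) := hW0int
      _ = μp * (∫ x in Ioc (0:ℝ) 1, ‖ud s x‖) + Cg := hsplit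
      _ ≤ μp * Real.sqrt Dd + K * ρp * Real.sqrt Du :=
          add_le_add (mul_le_mul_of_nonneg_left hcs1 hμp0) hCgb
  -- uniform H¹ bound on the solutions
  set κ : ℝ := ω.im * min μm (K * ρm) with hκ
  have hκpos : 0 < κ := mul_pos hω (lt_min hμm (mul_pos hKpos hρm))
  have hρp0 : (0:ℝ) ≤ ρp := le_trans hρm.le (le_trans (hρb (0,0)).1 (hρb (0,0)).2)
  have hμp0 : (0:ℝ) ≤ μp := le_trans hμm.le (le_trans (hμb (0,0)).1 (hμb (0,0)).2)
  set C₀ : ℝ := ‖ω‖ * (μp + K * ρp) / κ with hC₀def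
  have hC₀0 : 0 ≤ C₀ := by
    rw [hC₀def]
    have : 0 ≤ μp + K * ρp := by positivity
    positivity
  have hC0 : ∀ s, Real.sqrt (∫ x in Ioi (0:ℝ), ‖ud s x‖ ^ 2) ≤ C₀
      ∧ Real.sqrt (∫ x in Ioi (0:ℝ), ‖uc s x‖ ^ 2) ≤ C₀ := by
    intro s
    set Dd := ∫ x in Ioi (0:ℝ), ‖ud s x‖ ^ 2 with hDd
    set Du := ∫ x in Ioi (0:ℝ), ‖uc s x‖ ^ 2 with hDu
    have hDd0 : 0 ≤ Dd := integral_nonneg fun x => sq_nonneg _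
    have hDu0 : 0 ≤ Du := integral_nonneg fun x => sq_nonneg _
    have hmaster := aux_master (ω := ω) hω hμm hρm
      (a1 := fun x => μ (s + x • θhat, x * θn)) (a2 := fun x => μ (s + x • θhat, x * θn))
      (b1 := fun x => ρ (s + x • θhat, x * θn)) (b2 := fun x => ρ (s + x • θhat, x * θn))
      (hac s) (hac s) (hbc s) (hbc s)
      (fun x => (hμb _).1) (fun x => (hμb _).2) (fun x => (hρb _).1)
      (u1 := uc s) (u2 := fun _ => 0) (d1 := ud s) (d2 := fun _ => 0)
      (W1 := Wc s) (W2 := fun _ => 0)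
      (hucd s) (fun x => hasDerivAt_const x 0) (hudc s) continuous_const
      (hWa s) (fun x => by simp)
      (hWd s) (fun x hx => by
        have := hasDerivAt_const (𝕜 := ℝ) x (0:ℂ)
        simpa using this)
      (by simpa using (integrableOn_zero (f := fun _ : ℝ => (0:ℝ))))
      (by simpa using (integrableOn_zero (f := fun _ : ℝ => (0:ℝ))))
      (by simpa using hIuc s) (by simpa using hIud s)
      (δa := 0) (δb := 0) (fun x _ => by simp) (fun x _ => by simp)
    simp only [sub_zero, norm_zero, zero_mul, mul_zero, add_zero, zero_add] at hmaster
    rw [huc0 s] at hmaster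
    simp only [norm_one, mul_one] at hmaster
    have hmaster' : ω.im * (μm * Dd) + ω.im * (K * (ρm * Du))
        ≤ ‖ω‖ * ‖Wc s 0‖ := by
      rw [hDd, hDu, hKdef]
      exact hmaster
    set q := Real.sqrt (Dd + Du) with hq
    have hq0 : 0 ≤ q := Real.sqrt_nonneg _
    have hq2 : q ^ 2 = Dd + Du := Real.sq_sqrt (by linarith)
    have hDdq : Real.sqrt Dd ≤ q := Real.sqrt_le_sqrt (by linarith)
    have hDuq : Real.sqrt Du ≤ q := Real.sqrt_le_sqrt (by linarith)
    have hlhs : κ * q ^ 2 ≤ ω.im * (μm * Dd) + ω.im * (K * (ρm * Du)) := by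
      rw [hq2, hκ]
      have h1 : min μm (K * ρm) ≤ μm := min_le_left _ _
      have h2 : min μm (K * ρm) ≤ K * ρm := min_le_right _ _
      nlinarith [mul_le_mul_of_nonneg_left (mul_le_mul_of_nonneg_right h1 hDd0) hω.le,
        mul_le_mul_of_nonneg_left (mul_le_mul_of_nonneg_right h2 hDu0) hω.le]
    have hrhs : ‖ω‖ * ‖Wc s 0‖ ≤ ‖ω‖ * (μp + K * ρp) * q := by
      have h1 := hW0 s
      rw [← hDd, ← hDu] at h1
      have h2 : ‖Wc s 0‖ ≤ (μp + K * ρp) * q := by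
        calc ‖Wc s 0‖ ≤ μp * Real.sqrt Dd + K * ρp * Real.sqrt Du := h1
          _ ≤ μp * q + K * ρp * q := by
              refine add_le_add (mul_le_mul_of_nonneg_left hDdq hμp0) ?_
              exact mul_le_mul_of_nonneg_left hDuq (mul_nonneg hKpos.le hρp0)
          _ = (μp + K * ρp) * q := by ring
      calc ‖ω‖ * ‖Wc s 0‖ ≤ ‖ω‖ * ((μp + K * ρp) * q) :=
            mul_le_mul_of_nonneg_left h2 habsω.le
        _ = ‖ω‖ * (μp + K * ρp) * q := by ring
    have hqC : q ≤ C₀ := by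
      rcases eq_or_lt_of_le hq0 with h | h
      · rw [← h]; exact hC₀0
      · have hineq : κ * q ^ 2 ≤ ‖ω‖ * (μp + K * ρp) * q := by
          calc κ * q ^ 2 ≤ ω.im * (μm * Dd) + ω.im * (K * (ρm * Du)) := hlhs
            _ ≤ ‖ω‖ * ‖Wc s 0‖ := hmaster'
            _ ≤ ‖ω‖ * (μp + K * ρp) * q := hrhs
        have : κ * q ≤ ‖ω‖ * (μp + K * ρp) := by
          have := (mul_le_mul_iff_left₀ h).1 (by nlinarith [hineq] : (κ * q) * q ≤ (‖ω‖ * (μp + K * ρp)) * q)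
          exact this
        rw [hC₀def, le_div_iff₀ hκpos, mul_comm]
        exact this
    exact ⟨le_trans hDdq hqC, le_trans hDuq hqC⟩
  -- the stability constant
  set c₀ : ℝ := ‖ω‖ * C₀ * max 1 K / κ with hc₀def
  have hc₀0 : 0 ≤ c₀ := by
    rw [hc₀def]
    have h1 : (0:ℝ) ≤ max 1 K := le_trans zero_le_one (le_max_left _ _)
    positivity
  set c : ℝ := c₀ + 1 with hcdef
  have hcpos : 0 < c := by rw [hcdef]; linarith
  -- the key stability estimate
  have hkey : ∀ s₁ s₂ : Fin m → ℝ,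
      Real.sqrt (∫ x in Set.Ioi (0:ℝ),
          (‖u s₁ x - u s₂ x‖ ^ 2 + ‖u' s₁ x - u' s₂ x‖ ^ 2))
        ≤ c * ((⨆ x : ℝ, |μ (s₂ + x • θhat, x * θn) - μ (s₁ + x • θhat, x * θn)|)
            + (⨆ x : ℝ, |ρ (s₂ + x • θhat, x * θn) - ρ (s₁ + x • θhat, x * θn)|)) := by
    intro s₁ s₂
    set A : ℝ := ⨆ x : ℝ, |μ (s₂ + x • θhat, x * θn) - μ (s₁ + x • θhat, x * θn)| with hAdef
    set B : ℝ := ⨆ x : ℝ, |ρ (s₂ + x • θhat, x * θn) - ρ (s₁ + x • θhat, x * θn)| with hBdef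
    have hbddμ : BddAbove (Set.range fun x : ℝ =>
        |μ (s₂ + x • θhat, x * θn) - μ (s₁ + x • θhat, x * θn)|) := by
      refine ⟨μp - μm, ?_⟩
      rintro y ⟨x, rfl⟩
      have h1 := hμb (s₂ + x • θhat, x * θn)
      have h2 := hμb (s₁ + x • θhat, x * θn)
      rw [abs_sub_le_iff]
      constructor <;> linarith [h1.1, h1.2, h2.1, h2.2]
    have hbddρ : BddAbove (Set.range fun x : ℝ =>
        |ρ (s₂ + x • θhat, x * θn) - ρ (s₁ + x • θhat, x * θn)|) := by
      refine ⟨ρp - ρm, ?_⟩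
      rintro y ⟨x, rfl⟩
      have h1 := hρb (s₂ + x • θhat, x * θn)
      have h2 := hρb (s₁ + x • θhat, x * θn)
      rw [abs_sub_le_iff]
      constructor <;> linarith [h1.1, h1.2, h2.1, h2.2]
    have hA0 : 0 ≤ A := le_trans (abs_nonneg _) (le_ciSup hbddμ 0)
    have hB0 : 0 ≤ B := le_trans (abs_nonneg _) (le_ciSup hbddρ 0)
    have hAptw : ∀ x : ℝ,
        |μ (s₁ + x • θhat, x * θn) - μ (s₂ + x • θhat, x * θn)| ≤ A := by
      intro x
      rw [abs_sub_comm]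
      exact le_ciSup hbddμ x
    have hBptw : ∀ x : ℝ,
        |ρ (s₁ + x • θhat, x * θn) - ρ (s₂ + x • θhat, x * θn)| ≤ B := by
      intro x
      rw [abs_sub_comm]
      exact le_ciSup hbddρ x
    have hIvc' := aux_Ivc (hucc s₁) (hucc s₂) (hIuc s₁) (hIuc s₂)
    have hIvd' := aux_Ivc (hudc s₁) (hudc s₂) (hIud s₁) (hIud s₂)
    set Dvc := ∫ x in Ioi (0:ℝ), ‖uc s₁ x - uc s₂ x‖ ^ 2 with hDvc
    set Dvd := ∫ x in Ioi (0:ℝ), ‖ud s₁ x - ud s₂ x‖ ^ 2 with hDvd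
    have hDvc0 : 0 ≤ Dvc := integral_nonneg fun x => sq_nonneg _
    have hDvd0 : 0 ≤ Dvd := integral_nonneg fun x => sq_nonneg _
    have hmaster := aux_master (ω := ω) hω hμm hρm
      (a1 := fun x => μ (s₁ + x • θhat, x * θn)) (a2 := fun x => μ (s₂ + x • θhat, x * θn))
      (b1 := fun x => ρ (s₁ + x • θhat, x * θn)) (b2 := fun x => ρ (s₂ + x • θhat, x * θn))
      (hac s₁) (hac s₂) (hbc s₁) (hbc s₂)
      (fun x => (hμb _).1) (fun x => (hμb _).2) (fun x => (hρb _).1)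
      (u1 := uc s₁) (u2 := uc s₂) (d1 := ud s₁) (d2 := ud s₂)
      (W1 := Wc s₁) (W2 := Wc s₂)
      (hucd s₁) (hucd s₂) (hudc s₁) (hudc s₂)
      (hWa s₁) (hWa s₂) (hWd s₁) (hWd s₂)
      (hIuc s₂) (hIud s₂) hIvc' hIvd'
      (δa := A) (δb := B) (fun x _ => hAptw x) (fun x _ => hBptw x)
    rw [huc0 s₁, huc0 s₂, sub_self, norm_zero, mul_zero, zero_add] at hmaster
    have hmaster' : ω.im * (μm * Dvd) + ω.im * (K * (ρm * Dvc))
        ≤ ‖ω‖ * (A * Real.sqrt (∫ x in Ioi (0:ℝ), ‖ud s₂ x‖ ^ 2) * Real.sqrt Dvd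
          + K * B * Real.sqrt (∫ x in Ioi (0:ℝ), ‖uc s₂ x‖ ^ 2) * Real.sqrt Dvc) := by
      rw [hDvd, hDvc, hKdef]
      exact hmaster
    set q := Real.sqrt (Dvc + Dvd) with hq
    have hq0 : 0 ≤ q := Real.sqrt_nonneg _
    have hq2 : q ^ 2 = Dvc + Dvd := Real.sq_sqrt (by linarith)
    have hDvdq : Real.sqrt Dvd ≤ q := Real.sqrt_le_sqrt (by linarith)
    have hDvcq : Real.sqrt Dvc ≤ q := Real.sqrt_le_sqrt (by linarith)
    have hmax0 : (0:ℝ) ≤ max 1 K := le_trans zero_le_one (le_max_left _ _)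
    have hrhs : ‖ω‖ * (A * Real.sqrt (∫ x in Ioi (0:ℝ), ‖ud s₂ x‖ ^ 2) * Real.sqrt Dvd
          + K * B * Real.sqrt (∫ x in Ioi (0:ℝ), ‖uc s₂ x‖ ^ 2) * Real.sqrt Dvc)
        ≤ ‖ω‖ * C₀ * max 1 K * (A + B) * q := by
      have h1 : A * Real.sqrt (∫ x in Ioi (0:ℝ), ‖ud s₂ x‖ ^ 2) * Real.sqrt Dvd
          ≤ A * C₀ * q := by
        have := (hC0 s₂).1
        have hs0 : 0 ≤ Real.sqrt (∫ x in Ioi (0:ℝ), ‖ud s₂ x‖ ^ 2) := Real.sqrt_nonneg _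
        have hsd0 : 0 ≤ Real.sqrt Dvd := Real.sqrt_nonneg _
        have := mul_le_mul_of_nonneg_left (mul_le_mul this hDvdq hsd0 hC₀0) hA0
        nlinarith [this]
      have h2 : K * B * Real.sqrt (∫ x in Ioi (0:ℝ), ‖uc s₂ x‖ ^ 2) * Real.sqrt Dvc
          ≤ K * B * C₀ * q := by
        have := (hC0 s₂).2
        have hs0 : 0 ≤ Real.sqrt (∫ x in Ioi (0:ℝ), ‖uc s₂ x‖ ^ 2) := Real.sqrt_nonneg _
        have hsc0 : 0 ≤ Real.sqrt Dvc := Real.sqrt_nonneg _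
        have := mul_le_mul_of_nonneg_left (mul_le_mul this hDvcq hsc0 hC₀0) (mul_nonneg hKpos.le hB0)
        nlinarith [this]
      have h3 : A * C₀ * q + K * B * C₀ * q ≤ C₀ * max 1 K * (A + B) * q := by
        have hm1 : (1:ℝ) ≤ max 1 K := le_max_left _ _
        have hm2 : K ≤ max 1 K := le_max_right _ _
        nlinarith [mul_nonneg (mul_nonneg hA0 hC₀0) hq0, mul_nonneg (mul_nonneg hB0 hC₀0) hq0,
          mul_le_mul_of_nonneg_right (mul_le_mul_of_nonneg_right hm1 hC₀0) (mul_nonneg hA0 hq0),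
          mul_le_mul_of_nonneg_right (mul_le_mul_of_nonneg_right hm2 hC₀0) (mul_nonneg hB0 hq0)]
      calc ‖ω‖ * (A * Real.sqrt (∫ x in Ioi (0:ℝ), ‖ud s₂ x‖ ^ 2) * Real.sqrt Dvd
            + K * B * Real.sqrt (∫ x in Ioi (0:ℝ), ‖uc s₂ x‖ ^ 2) * Real.sqrt Dvc)
          ≤ ‖ω‖ * (A * C₀ * q + K * B * C₀ * q) :=
            mul_le_mul_of_nonneg_left (add_le_add h1 h2) habsω.le
        _ ≤ ‖ω‖ * (C₀ * max 1 K * (A + B) * q) :=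
            mul_le_mul_of_nonneg_left h3 habsω.le
        _ = ‖ω‖ * C₀ * max 1 K * (A + B) * q := by ring
    have hlhs : κ * q ^ 2 ≤ ω.im * (μm * Dvd) + ω.im * (K * (ρm * Dvc)) := by
      rw [hq2, hκ]
      have h1 : min μm (K * ρm) ≤ μm := min_le_left _ _
      have h2 : min μm (K * ρm) ≤ K * ρm := min_le_right _ _
      nlinarith [mul_le_mul_of_nonneg_left (mul_le_mul_of_nonneg_right h1 hDvd0) hω.le,
        mul_le_mul_of_nonneg_left (mul_le_mul_of_nonneg_right h2 hDvc0) hω.le]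
    have hqc : q ≤ c * (A + B) := by
      have hfin : q ≤ c₀ * (A + B) := by
        rcases eq_or_lt_of_le hq0 with h | h
        · rw [← h]; positivity
        · have hineq : κ * q ^ 2 ≤ ‖ω‖ * C₀ * max 1 K * (A + B) * q :=
            le_trans hlhs (le_trans hmaster' hrhs)
          have h2 : κ * q ≤ ‖ω‖ * C₀ * max 1 K * (A + B) := by
            have := (mul_le_mul_iff_left₀ h).1
              (by nlinarith [hineq] : (κ * q) * q ≤ (‖ω‖ * C₀ * max 1 K * (A + B)) * q)
            exact this
          rw [hc₀def, div_mul_eq_mul_div, le_div_iff₀ hκpos, mul_comm]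
          calc κ * q ≤ ‖ω‖ * C₀ * max 1 K * (A + B) := h2
            _ = ‖ω‖ * C₀ * max 1 K * (A + B) := rfl
      have : c₀ * (A + B) ≤ c * (A + B) := by
        refine mul_le_mul_of_nonneg_right ?_ (by linarith)
        rw [hcdef]; linarith
      linarith
    -- identify the left-hand side
    have hTeq : ∫ x in Set.Ioi (0:ℝ),
        (‖u s₁ x - u s₂ x‖ ^ 2 + ‖u' s₁ x - u' s₂ x‖ ^ 2) = Dvc + Dvd := by
      have h1 : ∫ x in Set.Ioi (0:ℝ),
          (‖u s₁ x - u s₂ x‖ ^ 2 + ‖u' s₁ x - u' s₂ x‖ ^ 2)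
          = ∫ x in Ioi (0:ℝ), (‖uc s₁ x - uc s₂ x‖ ^ 2 + ‖ud s₁ x - ud s₂ x‖ ^ 2) := by
        refine integral_congr_ae ?_
        filter_upwards [hu'ae s₁, hu'ae s₂, ae_restrict_mem measurableSet_Ioi] with x e1 e2 hx
        rw [hue s₁ x (le_of_lt hx), hue s₂ x (le_of_lt hx), e1, e2]
      rw [h1, integral_add hIvc' hIvd']
    rw [hTeq]
    exact hqc
  have hμint := aux_int_per hμper hμpern
  have hρint := aux_int_per hρper hρpern
  have hμUC := aux_unif_cont hμc hμint
  have hρUC := aux_unif_cont hρc hρint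
  refine ⟨⟨c, hcpos, hkey⟩, ?_, ?_⟩
  · -- uniform continuity
    intro ε hε
    have hε' : 0 < ε / (4 * c) := by positivity
    obtain ⟨δ₁, hδ₁, hμd⟩ := hμUC (ε / (4 * c)) hε'
    obtain ⟨δ₂, hδ₂, hρd⟩ := hρUC (ε / (4 * c)) hε'
    refine ⟨min δ₁ δ₂, lt_min hδ₁ hδ₂, fun s₁ s₂ hd => ?_⟩
    have hDist : ∀ x : ℝ, dist ((s₂ + x • θhat, x * θn) : (Fin m → ℝ) × ℝ)
        ((s₁ + x • θhat, x * θn) : (Fin m → ℝ) × ℝ) = dist s₁ s₂ := by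
      intro x
      rw [Prod.dist_eq]
      simp only [dist_self]
      rw [dist_add_right s₂ s₁ (x • θhat), dist_comm s₂ s₁]
      exact max_eq_left dist_nonneg
    have hAle : (⨆ x : ℝ, |μ (s₂ + x • θhat, x * θn) - μ (s₁ + x • θhat, x * θn)|)
        ≤ ε / (4 * c) := by
      refine ciSup_le fun x => le_of_lt (hμd _ _ ?_)
      rw [hDist x]
      exact lt_of_lt_of_le hd (min_le_left _ _)
    have hBle : (⨆ x : ℝ, |ρ (s₂ + x • θhat, x * θn) - ρ (s₁ + x • θhat, x * θn)|)
        ≤ ε / (4 * c) := by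
      refine ciSup_le fun x => le_of_lt (hρd _ _ ?_)
      rw [hDist x]
      exact lt_of_lt_of_le hd (min_le_right _ _)
    have h1 := hkey s₁ s₂
    have h2 : c * ((⨆ x : ℝ, |μ (s₂ + x • θhat, x * θn) - μ (s₁ + x • θhat, x * θn)|)
        + (⨆ x : ℝ, |ρ (s₂ + x • θhat, x * θn) - ρ (s₁ + x • θhat, x * θn)|))
        ≤ c * (ε / (4 * c) + ε / (4 * c)) :=
      mul_le_mul_of_nonneg_left (add_le_add hAle hBle) hcpos.le
    have h3 : c * (ε / (4 * c) + ε / (4 * c)) = ε / 2 := by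
      field_simp
      ring
    have h4 : ε / 2 < ε := by linarith
    calc Real.sqrt (∫ x in Set.Ioi (0:ℝ),
          (‖u s₁ x - u s₂ x‖ ^ 2 + ‖u' s₁ x - u' s₂ x‖ ^ 2)) ≤ _ := h1
      _ ≤ c * (ε / (4 * c) + ε / (4 * c)) := h2
      _ = ε / 2 := h3
      _ < ε := h4
  · -- periodicity
    intro s i x hx
    set s₁ : Fin m → ℝ := s + Pi.single i 1 with hs₁
    have hsupμ : (⨆ x : ℝ, |μ (s + x • θhat, x * θn) - μ (s₁ + x • θhat, x * θn)|) = 0 := by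
      have hptw : ∀ x : ℝ, |μ (s + x • θhat, x * θn) - μ (s₁ + x • θhat, x * θn)| = 0 := by
        intro x
        have he : s₁ + x • θhat = (s + x • θhat) + Pi.single i 1 := by
          rw [hs₁]; abel
        rw [he, hμper (s + x • θhat, x * θn) i, sub_self, abs_zero]
      simp only [hptw]
      exact ciSup_const
    have hsupρ : (⨆ x : ℝ, |ρ (s + x • θhat, x * θn) - ρ (s₁ + x • θhat, x * θn)|) = 0 := by
      have hptw : ∀ x : ℝ, |ρ (s + x • θhat, x * θn) - ρ (s₁ + x • θhat, x * θn)| = 0 := by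
        intro x
        have he : s₁ + x • θhat = (s + x • θhat) + Pi.single i 1 := by
          rw [hs₁]; abel
        rw [he, hρper (s + x • θhat, x * θn) i, sub_self, abs_zero]
      simp only [hptw]
      exact ciSup_const
    have h1 := hkey s₁ s
    rw [hsupμ, hsupρ, add_zero, mul_zero] at h1
    -- hence the L² distance vanishes
    set T := ∫ x in Set.Ioi (0:ℝ), (‖u s₁ x - u s x‖ ^ 2 + ‖u' s₁ x - u' s x‖ ^ 2) with hT
    have hT0 : 0 ≤ T := integral_nonneg fun x => by positivity
    have hTz : T = 0 := by
      have := Real.sqrt_eq_zero'.1 (le_antisymm h1 (Real.sqrt_nonneg _))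
      linarith
    have hIvc' := aux_Ivc (hucc s₁) (hucc s) (hIuc s₁) (hIuc s)
    have hIvd' := aux_Ivc (hudc s₁) (hudc s) (hIud s₁) (hIud s)
    have hTeq : T = (∫ x in Ioi (0:ℝ), ‖uc s₁ x - uc s x‖ ^ 2)
        + ∫ x in Ioi (0:ℝ), ‖ud s₁ x - ud s x‖ ^ 2 := by
      rw [hT]
      have h2 : ∫ x in Set.Ioi (0:ℝ),
          (‖u s₁ x - u s x‖ ^ 2 + ‖u' s₁ x - u' s x‖ ^ 2)
          = ∫ x in Ioi (0:ℝ), (‖uc s₁ x - uc s x‖ ^ 2 + ‖ud s₁ x - ud s x‖ ^ 2) := by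
        refine integral_congr_ae ?_
        filter_upwards [hu'ae s₁, hu'ae s, ae_restrict_mem measurableSet_Ioi] with y e1 e2 hy
        rw [hue s₁ y (le_of_lt hy), hue s y (le_of_lt hy), e1, e2]
      rw [h2, integral_add hIvc' hIvd']
    have hc1 : (∫ x in Ioi (0:ℝ), ‖uc s₁ x - uc s x‖ ^ 2) = 0 := by
      have h2 : 0 ≤ ∫ x in Ioi (0:ℝ), ‖uc s₁ x - uc s x‖ ^ 2 :=
        integral_nonneg fun y => sq_nonneg _
      have h3 : 0 ≤ ∫ x in Ioi (0:ℝ), ‖ud s₁ x - ud s x‖ ^ 2 :=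
        integral_nonneg fun y => sq_nonneg _
      linarith [hTeq ▸ hTz]
    have hae : ∀ᵐ y ∂(volume.restrict (Ioi (0:ℝ))), uc s₁ y - uc s y = 0 := by
      have := (integral_eq_zero_iff_of_nonneg (fun y => sq_nonneg ‖uc s₁ y - uc s y‖) hIvc').1 hc1
      filter_upwards [this] with y hy
      have : ‖uc s₁ y - uc s y‖ ^ 2 = 0 := hy
      have h4 : ‖uc s₁ y - uc s y‖ = 0 := by
        nlinarith [norm_nonneg (uc s₁ y - uc s y)]
      exact norm_eq_zero.1 h4
    have hzero := aux_zero_of_ae ((hucc s₁).sub (hucc s)) hae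
    have hequc : uc s₁ x = uc s x := by
      rcases eq_or_lt_of_le hx with h | h
      · rw [← h, huc0 s₁, huc0 s]
      · have := hzero x h
        linear_combination (Pi.sub_apply (uc s₁) (uc s) x).symm.trans this
    rw [hue s₁ x hx, hue s x hx, hequc]
end

section
/- Under the assumptions of the quasiperiodic half-line problems (coefficients μ_s, ρ_s as above, Im ω > 0), the solution u⁺_s of the half-line problem on (0, ∞) satisfies u⁺_s(x₀) ≠ 0 for every x₀ > 0. In particular the function p(s) = u⁺_{s − θ̂/θₙ}(1/θₙ) vanishes nowhere. -/
open MeasureTheory Complex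

/-- **Non-vanishing of the half-line solution.** Let `μ, ρ : ℝ → ℝ` be continuous with
positive bounds, `Im ω > 0`, and let `u ∈ H¹(0, ∞)` (with derivative `u'` and flux
`w = μ u'`, an antiderivative of `−ρ ω² u`) solve `−(μ u')' − ρ ω² u = 0` on `(0, ∞)`
with `u(0) = 1`. Then `u(x₀) ≠ 0` for every `x₀ > 0`. -/
theorem stmt13 (μ ρ : ℝ → ℝ) (hμc : Continuous μ) (hρc : Continuous ρ)
    (μm μp ρm ρp : ℝ) (hμm : 0 < μm) (hρm : 0 < ρm)
    (hμ : ∀ x, μm ≤ μ x ∧ μ x ≤ μp) (hρ : ∀ x, ρm ≤ ρ x ∧ ρ x ≤ ρp)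
    (ω : ℂ) (hω : 0 < ω.im)
    (u u' w : ℝ → ℂ)
    (hInt : IntegrableOn (fun x => ‖u x‖ ^ 2) (Set.Ioi 0))
    (hInt' : IntegrableOn (fun x => ‖u' x‖ ^ 2) (Set.Ioi 0))
    (hrep : ∀ x : ℝ, 0 ≤ x → u x = u 0 + ∫ t in (0:ℝ)..x, u' t)
    (hu0 : u 0 = 1)
    (hflux : ∀ᵐ x ∂(volume.restrict (Set.Ioi (0:ℝ))), w x = (μ x : ℂ) * u' x)
    (heq : ∀ x ∈ Set.Ioi (0:ℝ),
        w x = w 1 + ∫ t in (1:ℝ)..x, (-(ρ t : ℂ) * ω ^ 2 * u t)) :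
    ∀ x₀ : ℝ, 0 < x₀ → u x₀ ≠ 0 := by
  intro x₀ hx₀ hvan
  have hμpos : ∀ x, (0:ℝ) < μ x := fun x => lt_of_lt_of_le hμm (hμ x).1
  have hμne : ∀ x, (μ x : ℂ) ≠ 0 := fun x => by exact_mod_cast (hμpos x).ne'
  have hρpos : ∀ x, (0:ℝ) < ρ x := fun x => lt_of_lt_of_le hρm (hρ x).1
  have hρppos : 0 < ρp := lt_of_lt_of_le (hρpos 0) (hρ 0).2
  -- Step 1: u' is integrable on every Ioc 0 b
  have hM : ∀ b : ℝ, IntegrableOn u' (Set.Ioc 0 b) volume := by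
    by_contra h
    push_neg at h
    obtain ⟨b, hb⟩ := h
    have hb0 : 0 < b := by
      by_contra h0
      push_neg at h0
      exact hb (by rw [Set.Ioc_eq_empty (by intro hlt; linarith)]; exact integrableOn_empty)
    have hone : ∀ x : ℝ, b ≤ x → u x = 1 := by
      intro x hx
      have hxx : (0:ℝ) ≤ x := le_trans hb0.le hx
      have h1 : ¬ IntervalIntegrable u' volume 0 x := by
        rw [intervalIntegrable_iff]
        intro hI
        apply hb
        apply hI.mono_set
        rw [Set.uIoc_of_le hxx]
        exact Set.Ioc_subset_Ioc_right hx
      have h2 := hrep x hxx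
      rw [intervalIntegral.integral_undef h1, hu0, add_zero] at h2
      exact h2
    have h2 : IntegrableOn (fun x => ‖u x‖ ^ 2) (Set.Ioi b) volume :=
      hInt.mono_set (Set.Ioi_subset_Ioi hb0.le)
    have h3 : IntegrableOn (fun _ : ℝ => (1:ℝ)) (Set.Ioi b) volume := by
      apply h2.congr_fun ?_ measurableSet_Ioi
      intro x hx
      simp only [hone x (le_of_lt hx)]
      simp
    rw [integrableOn_const_iff] at h3
    rcases h3 with h3 | h3
    · norm_num at h3
    · rw [Real.volume_Ioi] at h3; exact lt_irrefl _ h3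
  -- interval integrability of u' on nonneg intervals
  have hII : ∀ a b : ℝ, 0 ≤ a → 0 ≤ b → IntervalIntegrable u' volume a b := by
    intro a b ha hb
    rw [intervalIntegrable_iff]
    apply (hM (max a b)).mono_set
    rw [Set.uIoc]
    exact Set.Ioc_subset_Ioc_left (le_min ha hb)
  -- representation from any nonneg base point
  have hrep' : ∀ a x : ℝ, 0 ≤ a → 0 ≤ x → u x = u a + ∫ t in a..x, u' t := by
    intro a x ha hx
    have h1 := hrep x hx
    have h2 := hrep a ha
    have h3 := intervalIntegral.integral_add_adjacent_intervals
      (hII 0 a le_rfl ha) (hII a x ha hx)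
    rw [h1, h2, ← h3]
    ring
  -- continuity of the primitive
  have hprim : ∀ b : ℝ, 0 ≤ b →
      ContinuousOn (fun x => ∫ t in (0:ℝ)..x, u' t) (Set.Icc 0 b) := by
    intro b hb
    have := intervalIntegral.continuousOn_primitive_interval
      (a := 0) (b := b) (f := u') (μ := volume) ?_
    · rwa [Set.uIcc_of_le hb] at this
    · rw [Set.uIcc_of_le hb, integrableOn_Icc_iff_integrableOn_Ioc]
      exact hM b
  -- continuity of u on [0, ∞)
  have hucont : ContinuousOn u (Set.Ici 0) := by
    intro x hx
    have hx' : (0:ℝ) ≤ x := hx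
    have h1 : ContinuousWithinAt (fun y => u 0 + ∫ t in (0:ℝ)..y, u' t)
        (Set.Icc 0 (x+1)) x :=
      (continuousOn_const.add (hprim (x+1) (by linarith))) x ⟨hx', by linarith⟩
    have h2 : ContinuousWithinAt u (Set.Icc 0 (x+1)) x :=
      h1.congr (fun y hy => hrep y hy.1) (hrep x hx')
    apply h2.mono_of_mem_nhdsWithin
    rw [← Set.Ici_inter_Iic]
    exact inter_mem_nhdsWithin _ (Iic_mem_nhds (by linarith))
  -- F : the derivative of w
  set F : ℝ → ℂ := fun t => -(ρ t : ℂ) * ω ^ 2 * u t with hF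
  have hFcont : ContinuousOn F (Set.Ici 0) := by
    apply ContinuousOn.mul
    · exact (((Complex.continuous_ofReal.comp hρc).neg).continuousOn).mul continuousOn_const
    · exact hucont
  have hFIoi : ContinuousOn F (Set.Ioi 0) := hFcont.mono Set.Ioi_subset_Ici_self
  have hsubIcc : ∀ a b : ℝ, 0 < a → 0 < b → Set.uIcc a b ⊆ Set.Ioi 0 := by
    intro a b ha hb t ht
    exact lt_of_lt_of_le (lt_min ha hb) ht.1
  have hFint : ∀ a b : ℝ, 0 < a → 0 < b → IntervalIntegrable F volume a b := by
    intro a b ha hb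
    exact (hFIoi.mono (hsubIcc a b ha hb)).intervalIntegrable
  have hwd : ∀ x ∈ Set.Ioi (0:ℝ), HasDerivAt w (F x) x := by
    intro x hx
    have hd : HasDerivAt (fun y => w 1 + ∫ t in (1:ℝ)..y, F t) (F x) x := by
      apply HasDerivAt.const_add
      exact intervalIntegral.integral_hasDerivAt_right (hFint 1 x one_pos hx)
        (hFIoi.stronglyMeasurableAtFilter isOpen_Ioi x hx)
        (hFIoi.continuousAt (Ioi_mem_nhds hx))
    apply hd.congr_of_eventuallyEq
    filter_upwards [Ioi_mem_nhds hx] with y hy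
    exact heq y hy
  have hwcont : ContinuousOn w (Set.Ioi 0) :=
    continuousOn_of_forall_continuousAt (fun x hx => (hwd x hx).continuousAt)
  -- G : the derivative of u on (0,∞)
  set G : ℝ → ℂ := fun x => w x / (μ x : ℂ) with hG
  have hGcont : ContinuousOn G (Set.Ioi 0) :=
    hwcont.div ((Complex.continuous_ofReal.comp hμc).continuousOn) (fun x _ => hμne x)
  have hGint : ∀ a b : ℝ, 0 < a → 0 < b → IntervalIntegrable G volume a b := by
    intro a b ha hb
    exact (hGcont.mono (hsubIcc a b ha hb)).intervalIntegrable
  have huae : ∀ᵐ t ∂(volume.restrict (Set.Ioi (0:ℝ))), u' t = G t := by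
    filter_upwards [hflux] with t ht
    show u' t = w t / (μ t : ℂ)
    rw [ht, mul_div_cancel_left₀ _ (hμne t)]
  have hrepG : ∀ a x : ℝ, 0 < a → 0 < x → u x = u a + ∫ t in a..x, G t := by
    intro a x ha hx
    rw [hrep' a x ha.le hx.le]
    congr 1
    apply intervalIntegral.integral_congr_ae
    have h1 := (ae_restrict_iff' measurableSet_Ioi).1 huae
    filter_upwards [h1] with t ht hmem
    apply ht
    rw [Set.uIoc] at hmem
    exact lt_of_lt_of_le (lt_min ha hx) hmem.1.le
  have hud : ∀ x ∈ Set.Ioi (0:ℝ), HasDerivAt u (G x) x := by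
    intro x hx
    have hx0 : (0:ℝ) < x := hx
    have ha : (0:ℝ) < x/2 := by linarith
    have hd : HasDerivAt (fun y => u (x/2) + ∫ t in (x/2)..y, G t) (G x) x := by
      apply HasDerivAt.const_add
      exact intervalIntegral.integral_hasDerivAt_right (hGint (x/2) x ha hx0)
        (hGcont.stronglyMeasurableAtFilter isOpen_Ioi x hx)
        (hGcont.continuousAt (Ioi_mem_nhds hx))
    apply hd.congr_of_eventuallyEq
    filter_upwards [Ioi_mem_nhds hx0] with y hy
    exact hrepG (x/2) y ha hy
  have hucontIoi : ContinuousOn u (Set.Ioi 0) := hucont.mono Set.Ioi_subset_Ici_self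
  -- the two real energy densities
  set q1 : ℝ → ℝ := fun x => ‖w x‖^2 / μ x with hq1
  set q2 : ℝ → ℝ := fun x => ρ x * ‖u x‖^2 with hq2
  have hq1cont : ContinuousOn q1 (Set.Ioi 0) :=
    ((hwcont.norm).pow 2).div hμc.continuousOn (fun x _ => (hμpos x).ne')
  have hq2cont : ContinuousOn q2 (Set.Ioi 0) :=
    hρc.continuousOn.mul ((hucontIoi.norm).pow 2)
  set A : ℝ → ℝ := fun R => ∫ x in x₀..R, q1 x with hA
  set B : ℝ → ℝ := fun R => ∫ x in x₀..R, q2 x with hB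
  have hsq : ∀ z : ℂ, z * star z = ((‖z‖^2 : ℝ) : ℂ) := by
    intro z
    rw [show star z = (starRingEnd ℂ) z from rfl, Complex.mul_conj, Complex.normSq_eq_norm_sq]
  -- energy identity
  have key : ∀ R : ℝ, x₀ ≤ R → w R * star (u R) = ((A R : ℝ) : ℂ) - ω^2 * ((B R : ℝ) : ℂ) := by
    intro R hR
    have hR0 : (0:ℝ) < R := lt_of_lt_of_le hx₀ hR
    have hsub : Set.uIcc x₀ R ⊆ Set.Ioi 0 := hsubIcc x₀ R hx₀ hR0
    have hder : ∀ x ∈ Set.uIcc x₀ R, HasDerivAt (fun y => w y * star (u y))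
        (F x * star (u x) + w x * star (G x)) x := by
      intro x hx
      exact (hwd x (hsub hx)).mul ((hud x (hsub hx)).star)
    have hintg : IntervalIntegrable (fun x => F x * star (u x) + w x * star (G x)) volume x₀ R := by
      apply ContinuousOn.intervalIntegrable
      apply ContinuousOn.add
      · exact (hFIoi.mono hsub).mul (continuous_star.comp_continuousOn (hucontIoi.mono hsub))
      · exact (hwcont.mono hsub).mul (continuous_star.comp_continuousOn (hGcont.mono hsub))
    have hFTC := intervalIntegral.integral_eq_sub_of_hasDerivAt hder hintg
    have hcongr : Set.EqOn (fun x => F x * star (u x) + w x * star (G x))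
        (fun x => ((q1 x : ℝ) : ℂ) + (-ω^2) * ((q2 x : ℝ) : ℂ)) (Set.uIcc x₀ R) := by
      intro x hx
      have h1 : F x * star (u x) = (-ω^2) * ((q2 x : ℝ) : ℂ) := by
        show -(ρ x : ℂ) * ω ^ 2 * u x * star (u x) = _
        rw [mul_assoc, hsq (u x), hq2]
        push_cast
        ring
      have h2 : w x * star (G x) = ((q1 x : ℝ) : ℂ) := by
        show w x * star (w x / (μ x : ℂ)) = _
        rw [star_div₀, show star ((μ x : ℝ) : ℂ) = ((μ x : ℝ) : ℂ) from Complex.conj_ofReal _,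
          mul_div_assoc', hsq (w x), hq1]
        push_cast
        ring
      show F x * star (u x) + w x * star (G x) = _
      rw [h1, h2]
      ring
    rw [intervalIntegral.integral_congr hcongr] at hFTC
    have hint1 : IntervalIntegrable (fun x => ((q1 x : ℝ) : ℂ)) volume x₀ R :=
      (Complex.continuous_ofReal.comp_continuousOn (hq1cont.mono hsub)).intervalIntegrable
    have hint2 : IntervalIntegrable (fun x => (-ω^2) * ((q2 x : ℝ) : ℂ)) volume x₀ R :=
      (continuousOn_const.mul
        (Complex.continuous_ofReal.comp_continuousOn (hq2cont.mono hsub))).intervalIntegrable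
    rw [intervalIntegral.integral_add hint1 hint2, intervalIntegral.integral_const_mul,
      intervalIntegral.integral_ofReal, intervalIntegral.integral_ofReal, hvan] at hFTC
    simp only [star_zero, mul_zero, sub_zero] at hFTC
    rw [← hFTC, hA, hB]
    ring
  -- |w|² is integrable on (0,∞)
  have hw2 : IntegrableOn (fun x => ‖w x‖^2) (Set.Ioi (0:ℝ)) volume := by
    apply Integrable.mono' (hInt'.const_mul (μp^2))
    · exact ((hwcont.norm.pow 2).aestronglyMeasurable measurableSet_Ioi)
    · have h1 : ∀ᵐ x ∂(volume.restrict (Set.Ioi (0:ℝ))), 0 < μ x ∧ μ x ≤ μp := by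
        filter_upwards with x
        exact ⟨hμpos x, (hμ x).2⟩
      filter_upwards [hflux, h1] with x hx ⟨hx1, hx2⟩
      have h2 : ‖((μ x : ℝ) : ℂ) * u' x‖ = μ x * ‖u' x‖ := by
        rw [norm_mul, Complex.norm_real, Real.norm_eq_abs, _root_.abs_of_pos hx1]
      rw [hx, Real.norm_eq_abs, _root_.abs_of_nonneg (sq_nonneg _), h2, mul_pow]
      have h3 : μ x^2 ≤ μp^2 := by nlinarith
      nlinarith [sq_nonneg ‖u' x‖]
  -- boundary terms get arbitrarily small along a sequence to infinity
  have hsmall : ∀ ε : ℝ, 0 < ε → ∀ N : ℝ, ∃ R, max N x₀ < R ∧ ‖w R * star (u R)‖ < ε := by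
    intro ε hε N
    by_contra hcon
    push_neg at hcon
    set N' := max N x₀ with hN'
    have hN'0 : 0 < N' := lt_of_lt_of_le hx₀ (le_max_right N x₀)
    have hbig : ∀ x ∈ Set.Ioi N', 2*ε ≤ ‖w x‖^2 + ‖u x‖^2 := by
      intro x hx
      have h1 := hcon x hx
      rw [norm_mul, norm_star] at h1
      nlinarith [sq_nonneg (‖w x‖ - ‖u x‖), norm_nonneg (w x), norm_nonneg (u x)]
    have hGi : IntegrableOn (fun x => ‖w x‖^2 + ‖u x‖^2) (Set.Ioi N') volume :=
      MeasureTheory.IntegrableOn.mono_set (hw2.add hInt) (Set.Ioi_subset_Ioi hN'0.le)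
    have hc2 : IntegrableOn (fun _ : ℝ => 2*ε) (Set.Ioi N') volume := by
      apply Integrable.mono' hGi aestronglyMeasurable_const
      refine (ae_restrict_iff' measurableSet_Ioi).2 ?_
      filter_upwards with x hx
      rw [Real.norm_eq_abs, _root_.abs_of_nonneg (by linarith : (0:ℝ) ≤ 2*ε)]
      exact hbig x hx
    rw [integrableOn_const_iff] at hc2
    rcases hc2 with hc2 | hc2
    · rw [enorm_eq_zero] at hc2; nlinarith
    · rw [Real.volume_Ioi] at hc2; exact lt_irrefl _ hc2
  -- basic facts about A and B
  have hq1int : ∀ a b : ℝ, 0 < a → 0 < b → IntervalIntegrable q1 volume a b := by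
    intro a b ha hb
    exact (hq1cont.mono (hsubIcc a b ha hb)).intervalIntegrable
  have hq2int : ∀ a b : ℝ, 0 < a → 0 < b → IntervalIntegrable q2 volume a b := by
    intro a b ha hb
    exact (hq2cont.mono (hsubIcc a b ha hb)).intervalIntegrable
  have hq1nn : ∀ x : ℝ, 0 ≤ q1 x := fun x => div_nonneg (sq_nonneg _) (hμpos x).le
  have hq2nn : ∀ x : ℝ, 0 ≤ q2 x := fun x => mul_nonneg (hρpos x).le (sq_nonneg _)
  have hAnn : ∀ R : ℝ, x₀ ≤ R → 0 ≤ A R := by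
    intro R hR
    exact intervalIntegral.integral_nonneg hR (fun x _ => hq1nn x)
  have hBnn : ∀ R : ℝ, x₀ ≤ R → 0 ≤ B R := by
    intro R hR
    exact intervalIntegral.integral_nonneg hR (fun x _ => hq2nn x)
  have hBmono : ∀ R R' : ℝ, x₀ ≤ R → R ≤ R' → B R ≤ B R' := by
    intro R R' hR hRR'
    have hR0 : (0:ℝ) < R := lt_of_lt_of_le hx₀ hR
    have hR'0 : (0:ℝ) < R' := lt_of_lt_of_le hR0 hRR'
    have h1 := intervalIntegral.integral_add_adjacent_intervals
      (hq2int x₀ R hx₀ hR0) (hq2int R R' hR0 hR'0)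
    have h2 : 0 ≤ ∫ x in R..R', q2 x :=
      intervalIntegral.integral_nonneg hRR' (fun x _ => hq2nn x)
    rw [hB]
    dsimp only
    rw [← h1]
    linarith
  -- B vanishes identically
  have hB0 : ∀ R : ℝ, x₀ ≤ R → B R = 0 := by
    by_contra hcon
    push_neg at hcon
    obtain ⟨R₁, hR₁, hBne⟩ := hcon
    have hBpos : 0 < B R₁ := lt_of_le_of_ne (hBnn R₁ hR₁) (Ne.symm hBne)
    rcases eq_or_ne ω.re 0 with hre | hre
    · -- purely imaginary frequency : use real parts
      have hω2 : (ω^2).re = -(ω.im^2) := by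
        rw [sq, Complex.mul_re, hre]
        ring
      set ε := ω.im^2 * B R₁ with hε
      have hεpos : 0 < ε := by positivity
      obtain ⟨R, hRgt, hRsmall⟩ := hsmall ε hεpos R₁
      have hRx₀ : x₀ ≤ R := le_of_lt (lt_of_le_of_lt (le_max_right R₁ x₀) hRgt)
      have hRR₁ : R₁ ≤ R := le_of_lt (lt_of_le_of_lt (le_max_left R₁ x₀) hRgt)
      have hkey := key R hRx₀
      have hRe : (w R * star (u R)).re = A R + ω.im^2 * B R := by
        rw [hkey]
        simp [Complex.sub_re, Complex.mul_re, hω2, Complex.ofReal_re, Complex.ofReal_im]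
        try ring
      have h1 : ε ≤ (w R * star (u R)).re := by
        rw [hRe]
        have h2 := hBmono R₁ R hR₁ hRR₁
        have h3 := hAnn R hRx₀
        have h4 : ω.im^2 * B R₁ ≤ ω.im^2 * B R := by nlinarith
        linarith
      have h5 : (w R * star (u R)).re ≤ ‖w R * star (u R)‖ := Complex.re_le_norm _
      linarith
    · -- Re ω ≠ 0 : use imaginary parts
      have hω2 : (ω^2).im = 2 * ω.re * ω.im := by
        rw [sq, Complex.mul_im]
        ring
      have hω2ne : (ω^2).im ≠ 0 := by
        rw [hω2]
        exact mul_ne_zero (mul_ne_zero two_ne_zero hre) (ne_of_gt hω)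
      set ε := |(ω^2).im| * B R₁ with hε
      have hεpos : 0 < ε := by
        apply mul_pos (abs_pos.mpr hω2ne) hBpos
      obtain ⟨R, hRgt, hRsmall⟩ := hsmall ε hεpos R₁
      have hRx₀ : x₀ ≤ R := le_of_lt (lt_of_le_of_lt (le_max_right R₁ x₀) hRgt)
      have hRR₁ : R₁ ≤ R := le_of_lt (lt_of_le_of_lt (le_max_left R₁ x₀) hRgt)
      have hkey := key R hRx₀
      have hIm : (w R * star (u R)).im = -((ω^2).im * B R) := by
        rw [hkey]
        simp [Complex.sub_im, Complex.mul_im, Complex.ofReal_re, Complex.ofReal_im]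
      have h1 : ε ≤ |(w R * star (u R)).im| := by
        rw [hIm, abs_neg, abs_mul]
        have h2 := hBmono R₁ R hR₁ hRR₁
        have h3 := hBnn R₁ hR₁
        have h4 : |B R| = B R := _root_.abs_of_nonneg (hBnn R hRx₀)
        rw [h4]
        have : |(ω^2).im| * B R₁ ≤ |(ω^2).im| * B R := by
          apply mul_le_mul_of_nonneg_left h2 (abs_nonneg _)
        linarith
      have h5 : |(w R * star (u R)).im| ≤ ‖w R * star (u R)‖ := Complex.abs_im_le_norm _
      linarith
  -- a nonnegative continuous density whose integrals vanish is zero beyond x₀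
  have hzero : ∀ q : ℝ → ℝ, ContinuousOn q (Set.Ioi 0) → (∀ x : ℝ, 0 ≤ q x) →
      (∀ a b : ℝ, 0 < a → 0 < b → IntervalIntegrable q volume a b) →
      (∀ R : ℝ, x₀ ≤ R → (∫ x in x₀..R, q x) = 0) → ∀ y : ℝ, x₀ < y → q y = 0 := by
    intro q hqc hqnn hqint hqz y hy
    by_contra hqy
    have hy0 : (0:ℝ) < y := lt_trans hx₀ hy
    have hqypos : 0 < q y := lt_of_le_of_ne (hqnn y) (Ne.symm hqy)
    have hcy : ContinuousAt q y := hqc.continuousAt (Ioi_mem_nhds hy0)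
    have hev : ∀ᶠ x in nhds y, q y / 2 < q x := continuousAt_const.eventually_lt hcy (by linarith)
    obtain ⟨δ₀, hδ₀, hball⟩ := Metric.eventually_nhds_iff_ball.1 hev
    set δ := min (δ₀/2) ((y - x₀)/2) with hδ
    have hδpos : 0 < δ := lt_min (by linarith) (by linarith)
    have hsub2 : Set.Ioo (y - δ) (y + δ) ⊆ Metric.ball y δ₀ := by
      intro t ht
      rw [Metric.mem_ball, Real.dist_eq, abs_lt]
      have h1 : δ ≤ δ₀/2 := min_le_left _ _
      constructor <;> [skip; skip] <;> cases' ht with h2 h3 <;> linarith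
    have hx₀δ : x₀ < y - δ := by
      have : δ ≤ (y - x₀)/2 := min_le_right _ _
      linarith
    have hpos : 0 < ∫ x in (y-δ)..(y+δ), q x := by
      apply intervalIntegral.intervalIntegral_pos_of_pos_on
      · exact hqint (y-δ) (y+δ) (by linarith) (by linarith)
      · intro x hx
        have := hball x (hsub2 hx)
        linarith
      · linarith
    have hadd := intervalIntegral.integral_add_adjacent_intervals
      (hqint x₀ (y-δ) hx₀ (by linarith)) (hqint (y-δ) (y+δ) (by linarith) (by linarith))
    have hz1 := hqz (y-δ) (by linarith)
    have hz2 := hqz (y+δ) (by linarith)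
    rw [hz1, zero_add] at hadd
    rw [hadd] at hpos
    rw [hz2] at hpos
    exact lt_irrefl _ hpos
  -- u vanishes on (x₀, ∞)
  have huIoi : ∀ y : ℝ, x₀ < y → u y = 0 := by
    intro y hy
    have h1 : q2 y = 0 := hzero q2 hq2cont hq2nn hq2int (fun R hR => hB0 R hR) y hy
    rw [hq2] at h1
    have h2 : ‖u y‖^2 = 0 := by
      rcases mul_eq_zero.1 h1 with h | h
      · exact absurd h (ne_of_gt (hρpos y))
      · exact h
    have h3 : ‖u y‖ = 0 := by nlinarith [norm_nonneg (u y)]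
    exact norm_eq_zero.1 h3
  -- hence A vanishes too, and w vanishes on (x₀, ∞)
  have hA0 : ∀ R : ℝ, x₀ ≤ R → A R = 0 := by
    intro R hR
    rcases eq_or_lt_of_le hR with rfl | hR'
    · exact intervalIntegral.integral_same
    · have hkey := (key R hR).symm
      rw [huIoi R hR', star_zero, mul_zero, hB0 R hR, Complex.ofReal_zero, mul_zero,
        sub_zero] at hkey
      exact_mod_cast hkey
  have hwIoi : ∀ y : ℝ, x₀ < y → w y = 0 := by
    intro y hy
    have h1 : q1 y = 0 := hzero q1 hq1cont hq1nn hq1int (fun R hR => hA0 R hR) y hy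
    rw [hq1] at h1
    have h2 : ‖w y‖^2 = 0 := by
      rcases div_eq_zero_iff.1 h1 with h | h
      · exact h
      · exact absurd h (ne_of_gt (hμpos y))
    have h3 : ‖w y‖ = 0 := by nlinarith [norm_nonneg (w y)]
    exact norm_eq_zero.1 h3
  -- w also vanishes at x₀ by continuity from the right
  have hwx₀ : w x₀ = 0 := by
    have h1 : Filter.Tendsto w (nhdsWithin x₀ (Set.Ioi x₀)) (nhds (w x₀)) :=
      ((hwcont.continuousAt (Ioi_mem_nhds hx₀)).tendsto).mono_left nhdsWithin_le_nhds
    have h2 : Filter.Tendsto w (nhdsWithin x₀ (Set.Ioi x₀)) (nhds 0) := by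
      apply Filter.Tendsto.congr' ?_ tendsto_const_nhds
      filter_upwards [self_mem_nhdsWithin] with y hy
      exact (hwIoi y hy).symm
    exact tendsto_nhds_unique h1 h2
  -- backward uniqueness : u and w vanish on (0, x₀]
  set C : ℝ := max (1/μm) (ρp * ‖ω‖^2) with hC
  have hCnn : (0:ℝ) ≤ C := le_trans (by positivity) (le_max_left _ _)
  set K : NNReal := Real.toNNReal C with hK
  set v : ℝ → ℂ × ℂ → ℂ × ℂ := fun t p => (p.2 / (μ t : ℂ), -(ρ t : ℂ) * ω^2 * p.1) with hv
  have hlip : ∀ t : ℝ, LipschitzWith K (v t) := by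
    intro t
    rw [lipschitzWith_iff_dist_le_mul]
    intro p q
    have hKC : (K : ℝ) = C := Real.coe_toNNReal C hCnn
    rw [Prod.dist_eq, hKC]
    have hd1 : dist (p.2 / (μ t : ℂ)) (q.2 / (μ t : ℂ)) ≤ C * dist p q := by
      rw [dist_eq_norm, div_sub_div_same, norm_div]
      have h1 : ‖((μ t : ℝ) : ℂ)‖ = μ t := by
        rw [Complex.norm_real, Real.norm_eq_abs, _root_.abs_of_pos (hμpos t)]
      rw [h1]
      have h2 : ‖p.2 - q.2‖ = dist p.2 q.2 := (dist_eq_norm _ _).symm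
      have h3 : dist p.2 q.2 ≤ dist p q := by rw [Prod.dist_eq]; exact le_max_right _ _
      have h4 : (1/μm) ≤ C := le_max_left _ _
      have h5 : ‖p.2 - q.2‖ / μ t ≤ ‖p.2 - q.2‖ / μm :=
        div_le_div_of_nonneg_left (norm_nonneg _) hμm (hμ t).1
      have h6 : ‖p.2 - q.2‖ / μm = (1/μm) * ‖p.2 - q.2‖ := by ring
      have h7 : (1/μm) * ‖p.2 - q.2‖ ≤ C * dist p q := by
        apply mul_le_mul h4 (by rw [h2]; exact h3) (norm_nonneg _) hCnn
      linarith
    have hd2 : dist (-(ρ t : ℂ) * ω^2 * p.1) (-(ρ t : ℂ) * ω^2 * q.1) ≤ C * dist p q := by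
      rw [dist_eq_norm, ← mul_sub, norm_mul, norm_mul, norm_neg]
      have h1 : ‖((ρ t : ℝ) : ℂ)‖ = ρ t := by
        rw [Complex.norm_real, Real.norm_eq_abs, _root_.abs_of_pos (hρpos t)]
      rw [h1, norm_pow]
      have h2 : ‖p.1 - q.1‖ = dist p.1 q.1 := (dist_eq_norm _ _).symm
      have h3 : dist p.1 q.1 ≤ dist p q := by rw [Prod.dist_eq]; exact le_max_left _ _
      have h4 : ρp * ‖ω‖^2 ≤ C := le_max_right _ _
      have h5 : ρ t * ‖ω‖^2 ≤ ρp * ‖ω‖^2 :=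
        mul_le_mul_of_nonneg_right (hρ t).2 (by positivity)
      have h6 : ρ t * ‖ω‖^2 * ‖p.1 - q.1‖ ≤ C * dist p q := by
        apply mul_le_mul (le_trans h5 h4) (by rw [h2]; exact h3) (norm_nonneg _) hCnn
      linarith [h6]
    exact max_le hd1 hd2
  -- u vanishes on (0, x₀]
  have huleft : ∀ t : ℝ, 0 < t → t ≤ x₀ → u t = 0 := by
    intro t ht htx
    rcases eq_or_lt_of_le htx with rfl | hlt
    · exact hvan
    · have hder : ∀ s ∈ Set.Ioc t x₀,
          HasDerivWithinAt (fun y => (u y, w y)) (v s (u s, w s)) (Set.Iic s) s := by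
        intro s hs
        have hs0 : (0:ℝ) < s := lt_trans ht hs.1
        have h1 : HasDerivAt (fun y => (u y, w y)) (G s, F s) s :=
          (hud s hs0).prodMk (hwd s hs0)
        have h2 : v s (u s, w s) = (G s, F s) := rfl
        rw [h2]
        exact h1.hasDerivWithinAt
      have hderz : ∀ s ∈ Set.Ioc t x₀,
          HasDerivWithinAt (fun _ : ℝ => ((0:ℂ), (0:ℂ))) (v s ((0:ℂ), (0:ℂ))) (Set.Iic s) s := by
        intro s hs
        have h2 : v s ((0:ℂ), (0:ℂ)) = ((0:ℂ), (0:ℂ)) := by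
          rw [hv]
          simp
        rw [h2]
        exact (hasDerivAt_const s _).hasDerivWithinAt
      have hcont : ContinuousOn (fun y => (u y, w y)) (Set.Icc t x₀) := by
        apply ContinuousOn.prodMk
        · apply hucontIoi.mono
          intro s hs
          exact lt_of_lt_of_le ht hs.1
        · apply hwcont.mono
          intro s hs
          exact lt_of_lt_of_le ht hs.1
      have huniq := ODE_solution_unique_of_mem_Icc_left
        (fun s _ => (hlip s).lipschitzOnWith (s := Set.univ))
        hcont hder (fun _ _ => trivial)
        continuousOn_const hderz (fun _ _ => trivial)
        (by rw [hvan, hwx₀])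
      have := huniq (Set.left_mem_Icc.2 htx)
      exact congrArg Prod.fst this
  -- final contradiction with u 0 = 1
  set m : ℝ := min 1 x₀ with hm
  have hm0 : 0 < m := lt_min one_pos hx₀
  have hneBot : (nhdsWithin (0:ℝ) (Set.Ioo 0 m)).NeBot := by
    rw [mem_closure_iff_nhdsWithin_neBot.symm, closure_Ioo (ne_of_lt hm0)]
    exact Set.left_mem_Icc.2 hm0.le
  have hL1 : Filter.Tendsto (fun x : ℝ => u 0 + ∫ t in (0:ℝ)..x, u' t)
      (nhdsWithin 0 (Set.Ioo 0 m)) (nhds 1) := by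
    have h1 : ContinuousWithinAt (fun x : ℝ => u 0 + ∫ t in (0:ℝ)..x, u' t) (Set.Icc 0 1) 0 :=
      (continuousOn_const.add (hprim 1 zero_le_one)) 0 ⟨le_rfl, zero_le_one⟩
    have h2 := h1.tendsto
    have h3 : (u 0 + ∫ t in (0:ℝ)..(0:ℝ), u' t) = 1 := by
      rw [intervalIntegral.integral_same, add_zero, hu0]
    rw [h3] at h2
    exact h2.mono_left (nhdsWithin_mono _ (fun s hs => ⟨hs.1.le, le_trans hs.2.le (min_le_left _ _)⟩))
  have hL0 : Filter.Tendsto (fun x : ℝ => u 0 + ∫ t in (0:ℝ)..x, u' t)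
      (nhdsWithin 0 (Set.Ioo 0 m)) (nhds 0) := by
    apply Filter.Tendsto.congr' ?_ tendsto_const_nhds
    filter_upwards [self_mem_nhdsWithin] with x hx
    rw [← hrep x hx.1.le]
    exact (huleft x hx.1 (le_trans hx.2.le (min_le_right _ _))).symm
  exact one_ne_zero (tendsto_nhds_unique hL1 hL0)
end

section
/- Let H be a complex Hilbert space with a conjugation operator, and let T⁰⁰, T¹¹, T⁰¹, T¹⁰ be bounded operators satisfying (T⁰⁰)* = conj(T⁰⁰), (T¹¹)* = conj(T¹¹), (T⁰¹)* = conj(T¹⁰), (T¹⁰)* = conj(T⁰¹), where conj(A)φ := conj(A conj(φ)). Define T(λ) = λ²T¹⁰ + λ(T⁰⁰ + T¹¹) + T⁰¹. Then for all λ ≠ 0, conj(T(λ)*) = λ² T(1/λ); consequently, 0 ∈ σ(T(λ)) if and only if 0 ∈ σ(T(1/λ)). -/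
/-- **Pairing `λ ↔ 1/λ` for the Riccati pencil.** Let `H` be a complex Hilbert space
equipped with a conjugation `C` (an isometric, additive, conjugate-linear involution), and
let `T⁰⁰, T¹¹, T⁰¹, T¹⁰` be bounded operators with `(T⁰⁰)* = conj(T⁰⁰)`,
`(T¹¹)* = conj(T¹¹)`, `(T⁰¹)* = conj(T¹⁰)`, `(T¹⁰)* = conj(T⁰¹)`, where
`conj(A)φ = C(A(Cφ))`. Set `T(λ) = λ²T¹⁰ + λ(T⁰⁰ + T¹¹) + T⁰¹`. Then for every `λ ≠ 0`
one has `conj(T(λ)*) = λ² T(1/λ)`, and consequently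
`0 ∈ σ(T(λ)) ↔ 0 ∈ σ(T(1/λ))`. -/
theorem stmt16 {H : Type*} [NormedAddCommGroup H] [InnerProductSpace ℂ H] [CompleteSpace H]
    (C : H → H)
    (hCinv : ∀ x, C (C x) = x)
    (hCadd : ∀ x y, C (x + y) = C x + C y)
    (hCsmul : ∀ (a : ℂ) (x : H), C (a • x) = (starRingEnd ℂ) a • C x)
    (hCnorm : ∀ x, ‖C x‖ = ‖x‖)
    (T00 T11 T01 T10 : H →L[ℂ] H)
    (h00 : ∀ φ, ContinuousLinearMap.adjoint T00 φ = C (T00 (C φ)))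
    (h11 : ∀ φ, ContinuousLinearMap.adjoint T11 φ = C (T11 (C φ)))
    (h01 : ∀ φ, ContinuousLinearMap.adjoint T01 φ = C (T10 (C φ)))
    (h10 : ∀ φ, ContinuousLinearMap.adjoint T10 φ = C (T01 (C φ))) :
    ∀ lam : ℂ, lam ≠ 0 →
      (∀ φ, C (ContinuousLinearMap.adjoint
              (lam ^ 2 • T10 + lam • (T00 + T11) + T01) (C φ))
          = (lam ^ 2 • (lam⁻¹ ^ 2 • T10 + lam⁻¹ • (T00 + T11) + T01)) φ) ∧
      (0 ∈ spectrum ℂ (lam ^ 2 • T10 + lam • (T00 + T11) + T01) ↔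
        0 ∈ spectrum ℂ (lam⁻¹ ^ 2 • T10 + lam⁻¹ • (T00 + T11) + T01)) := by
  intro lam hlam
  set S := lam ^ 2 • T10 + lam • (T00 + T11) + T01 with hS
  set S' := lam⁻¹ ^ 2 • T10 + lam⁻¹ • (T00 + T11) + T01 with hS'
  have hAdj : ContinuousLinearMap.adjoint S
      = (starRingEnd ℂ) (lam ^ 2) • ContinuousLinearMap.adjoint T10
        + (starRingEnd ℂ) lam • (ContinuousLinearMap.adjoint T00
            + ContinuousLinearMap.adjoint T11)
        + ContinuousLinearMap.adjoint T01 := by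
    simp [hS, map_add, LinearIsometryEquiv.map_smulₛₗ]
  have key : ∀ φ, C (ContinuousLinearMap.adjoint S (C φ)) = (lam ^ 2 • S') φ := by
    intro φ
    rw [hAdj]
    simp only [ContinuousLinearMap.add_apply, ContinuousLinearMap.smul_apply,
      hCadd, hCsmul, h00, h11, h01, h10, hCinv, Complex.conj_conj, hS',
      smul_add, smul_smul]
    have h1 : lam ^ 2 * lam⁻¹ ^ 2 = 1 := by field_simp
    have h2 : lam ^ 2 * lam⁻¹ = lam := by field_simp
    rw [h1, h2, one_smul]
    abel
  refine ⟨key, ?_⟩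
  have hCbij : Function.Bijective C := Function.Involutive.bijective hCinv
  have hfun : ⇑(ContinuousLinearMap.adjoint S) = C ∘ ⇑(lam ^ 2 • S') ∘ C := by
    funext ψ
    have := key (C ψ)
    rw [hCinv] at this
    calc ContinuousLinearMap.adjoint S ψ
        = C (C (ContinuousLinearMap.adjoint S ψ)) := (hCinv _).symm
      _ = C ((lam ^ 2 • S') (C ψ)) := by rw [this]
  have hbij : Function.Bijective ⇑(ContinuousLinearMap.adjoint S)
      ↔ Function.Bijective ⇑(lam ^ 2 • S') := by
    rw [hfun]
    constructor
    · intro h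
      have : Function.Bijective (C ∘ (C ∘ ⇑(lam ^ 2 • S') ∘ C) ∘ C) :=
        hCbij.comp (h.comp hCbij)
      convert this using 1
      funext x
      simp [hCinv]
    · intro h
      exact hCbij.comp (h.comp hCbij)
  have hsmul : IsUnit (lam ^ 2 • S') ↔ IsUnit S' := by
    have hu : IsUnit (algebraMap ℂ (H →L[ℂ] H) (lam ^ 2)) :=
      (IsUnit.mk0 _ (pow_ne_zero 2 hlam)).map (algebraMap ℂ (H →L[ℂ] H))
    rw [Algebra.smul_def]
    exact Units.isUnit_units_mul hu.unit S'
  rw [spectrum.zero_mem_iff, spectrum.zero_mem_iff]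
  rw [← isUnit_star (a := S), ContinuousLinearMap.star_eq_adjoint,
    ContinuousLinearMap.isUnit_iff_bijective, hbij,
    ← ContinuousLinearMap.isUnit_iff_bijective, hsmul]
end
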